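/- arXiv:2506.10428 — 2 statements merged into one kernel-verified Lean document; each statement's English description precedes it below -/
import Mathlib

section
/- There exists a constant C > 0 (depending on ν, α, δ, r, γ, ε but not on t) such that for all t ≥ 0: ‖y^ε_{xt}(t)‖² + ν e^{−2γt} ∫₀ᵗ e^{2γs} ‖y^ε_{xxt}(s)‖² ds + (1/ε) (y^ε_t(t,1))² ≤ C e^{−2γt} ( ‖y₀‖₃² + ‖y₀‖² + ‖y₀‖_{L⁴}⁴ ). -/
open MeasureTheory intervalIntegral Real

/-- `L²(0,1)` norm squared: `‖v‖² = ∫₀¹ v(x)² dx`. -/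
noncomputable def L2sq (v : ℝ → ℝ) : ℝ := ∫ x in (0:ℝ)..1, (v x)^2

/-- `L⁴(0,1)` norm to the fourth power: `‖v‖_{L⁴}⁴ = ∫₀¹ v(x)⁴ dx`. -/
noncomputable def L4q (v : ℝ → ℝ) : ℝ := ∫ x in (0:ℝ)..1, (v x)^4

/-- Weighted inner product `(x, v) = ∫₀¹ x v(x) dx`. -/
noncomputable def xInner (v : ℝ → ℝ) : ℝ := ∫ x in (0:ℝ)..1, x * v x

/-- Sobolev `H^k(0,1)` norm squared: `‖v‖_k² = Σ_{i=0}^{k} ∫₀¹ (∂ₓⁱ v)² dx`. -/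
noncomputable def HkSq (k : ℕ) (v : ℝ → ℝ) : ℝ :=
  ∑ i ∈ Finset.range (k+1), ∫ x in (0:ℝ)..1, (iteratedDeriv i v x)^2

/-- Spatial derivative `y_x(t, ·)`. -/
noncomputable def dx (y : ℝ → ℝ → ℝ) (t : ℝ) : ℝ → ℝ := deriv (y t)

/-- Second spatial derivative `y_{xx}(t, ·)`. -/
noncomputable def dxx (y : ℝ → ℝ → ℝ) (t : ℝ) : ℝ → ℝ := iteratedDeriv 2 (y t)

/-- Time derivative `y_t(t, ·)`. -/
noncomputable def dt1 (y : ℝ → ℝ → ℝ) (t : ℝ) : ℝ → ℝ := fun x => deriv (fun s => y s x) t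

/-- Second time derivative `y_{tt}(t, ·)`. -/
noncomputable def dtt (y : ℝ → ℝ → ℝ) (t : ℝ) : ℝ → ℝ := fun x => iteratedDeriv 2 (fun s => y s x) t

/-- Mixed derivative `y_{xt}(t, ·)`. -/
noncomputable def dxt (y : ℝ → ℝ → ℝ) (t : ℝ) : ℝ → ℝ := deriv (dt1 y t)

/-- Mixed derivative `y_{xxt}(t, ·)`. -/
noncomputable def dxxt (y : ℝ → ℝ → ℝ) (t : ℝ) : ℝ → ℝ := iteratedDeriv 2 (dt1 y t)

open MeasureTheory intervalIntegral Real Function Set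

namespace PWXT

variable {f : ℝ → ℝ → ℝ}

/-- partial derivative in the first (time) variable -/
noncomputable def pt (f : ℝ → ℝ → ℝ) : ℝ → ℝ → ℝ := fun t x => deriv (fun s => f s x) t
/-- partial derivative in the second (space) variable -/
noncomputable def px (f : ℝ → ℝ → ℝ) : ℝ → ℝ → ℝ := fun t x => deriv (f t) x

lemma hasDerivAt_slice_t (hf : ContDiff ℝ (⊤ : ℕ∞) (uncurry f)) (t x : ℝ) :
    HasDerivAt (fun s => f s x) (fderiv ℝ (uncurry f) (t, x) (1, 0)) t := by
  have h1 : HasDerivAt (fun s : ℝ => (s, x)) ((1:ℝ), (0:ℝ)) t :=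
    (hasDerivAt_id t).prodMk (hasDerivAt_const t x)
  have h2 : HasFDerivAt (uncurry f) (fderiv ℝ (uncurry f) (t, x)) (t, x) :=
    (hf.differentiable (by simp) (t, x)).hasFDerivAt
  exact (h2.comp_hasDerivAt t h1)

lemma hasDerivAt_slice_x (hf : ContDiff ℝ (⊤ : ℕ∞) (uncurry f)) (t x : ℝ) :
    HasDerivAt (f t) (fderiv ℝ (uncurry f) (t, x) (0, 1)) x := by
  have h1 : HasDerivAt (fun y : ℝ => (t, y)) ((0:ℝ), (1:ℝ)) x :=
    (hasDerivAt_const x t).prodMk (hasDerivAt_id x)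
  have h2 : HasFDerivAt (uncurry f) (fderiv ℝ (uncurry f) (t, x)) (t, x) :=
    (hf.differentiable (by simp) (t, x)).hasFDerivAt
  have := h2.comp_hasDerivAt x h1
  exact this

lemma pt_eq (hf : ContDiff ℝ (⊤ : ℕ∞) (uncurry f)) (t x : ℝ) :
    pt f t x = fderiv ℝ (uncurry f) (t, x) (1, 0) :=
  (hasDerivAt_slice_t hf t x).deriv

lemma px_eq (hf : ContDiff ℝ (⊤ : ℕ∞) (uncurry f)) (t x : ℝ) :
    px f t x = fderiv ℝ (uncurry f) (t, x) (0, 1) :=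
  (hasDerivAt_slice_x hf t x).deriv

lemma hasDerivAt_pt (hf : ContDiff ℝ (⊤ : ℕ∞) (uncurry f)) (t x : ℝ) :
    HasDerivAt (fun s => f s x) (pt f t x) t := by
  rw [pt_eq hf]; exact hasDerivAt_slice_t hf t x

lemma hasDerivAt_px (hf : ContDiff ℝ (⊤ : ℕ∞) (uncurry f)) (t x : ℝ) :
    HasDerivAt (f t) (px f t x) x := by
  rw [px_eq hf]; exact hasDerivAt_slice_x hf t x

lemma contDiff_fderiv_apply (hf : ContDiff ℝ (⊤ : ℕ∞) (uncurry f)) (v : ℝ × ℝ) :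
    ContDiff ℝ (⊤ : ℕ∞) (fun p => fderiv ℝ (uncurry f) p v) := by
  have h : ContDiff ℝ (⊤ : ℕ∞) (fderiv ℝ (uncurry f)) := hf.fderiv_right (by simp)
  exact h.clm_apply contDiff_const

lemma contDiff_pt (hf : ContDiff ℝ (⊤ : ℕ∞) (uncurry f)) : ContDiff ℝ (⊤ : ℕ∞) (uncurry (pt f)) := by
  have : uncurry (pt f) = fun p : ℝ × ℝ => fderiv ℝ (uncurry f) p (1, 0) := by
    funext p; cases p with
    | mk t x => exact pt_eq hf t x
  rw [this]; exact contDiff_fderiv_apply hf _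

lemma contDiff_px (hf : ContDiff ℝ (⊤ : ℕ∞) (uncurry f)) : ContDiff ℝ (⊤ : ℕ∞) (uncurry (px f)) := by
  have : uncurry (px f) = fun p : ℝ × ℝ => fderiv ℝ (uncurry f) p (0, 1) := by
    funext p; cases p with
    | mk t x => exact px_eq hf t x
  rw [this]; exact contDiff_fderiv_apply hf _

/-- Clairaut/Schwarz: mixed partials commute for smooth functions. -/
lemma swap_pt_px (hf : ContDiff ℝ (⊤ : ℕ∞) (uncurry f)) : pt (px f) = px (pt f) := by
  funext t x
  have hF' : ContDiff ℝ (⊤ : ℕ∞) (fderiv ℝ (uncurry f)) := hf.fderiv_right (by simp)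
  have hsym : ∀ u v : ℝ × ℝ,
      fderiv ℝ (fderiv ℝ (uncurry f)) (t, x) u v
        = fderiv ℝ (fderiv ℝ (uncurry f)) (t, x) v u := by
    intro u v
    exact second_derivative_symmetric
      (fun y => (hf.differentiable (by simp) y).hasFDerivAt)
      ((hF'.differentiable (by simp) (t, x)).hasFDerivAt) u v
  have e1 : pt (px f) t x = fderiv ℝ (fderiv ℝ (uncurry f)) (t, x) (1, 0) (0, 1) := by
    rw [pt_eq (contDiff_px hf) t x]
    have : uncurry (px f) = fun p : ℝ × ℝ => fderiv ℝ (uncurry f) p (0, 1) := by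
      funext p; cases p with
      | mk s y => exact px_eq hf s y
    rw [this]
    have hc : HasFDerivAt (fderiv ℝ (uncurry f))
        (fderiv ℝ (fderiv ℝ (uncurry f)) (t, x)) (t, x) :=
      (hF'.differentiable (by simp) (t, x)).hasFDerivAt
    have h2 : HasFDerivAt (fun p : ℝ × ℝ => fderiv ℝ (uncurry f) p (0, 1))
        ((ContinuousLinearMap.apply ℝ ℝ ((0:ℝ),(1:ℝ))).comp
          (fderiv ℝ (fderiv ℝ (uncurry f)) (t, x))) (t, x) :=
      (ContinuousLinearMap.apply ℝ ℝ ((0:ℝ),(1:ℝ))).hasFDerivAt.comp (t, x) hc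
    rw [h2.fderiv]; rfl
  have e2 : px (pt f) t x = fderiv ℝ (fderiv ℝ (uncurry f)) (t, x) (0, 1) (1, 0) := by
    rw [px_eq (contDiff_pt hf) t x]
    have : uncurry (pt f) = fun p : ℝ × ℝ => fderiv ℝ (uncurry f) p (1, 0) := by
      funext p; cases p with
      | mk s y => exact pt_eq hf s y
    rw [this]
    have hc : HasFDerivAt (fderiv ℝ (uncurry f))
        (fderiv ℝ (fderiv ℝ (uncurry f)) (t, x)) (t, x) :=
      (hF'.differentiable (by simp) (t, x)).hasFDerivAt
    have h2 : HasFDerivAt (fun p : ℝ × ℝ => fderiv ℝ (uncurry f) p (1, 0))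
        ((ContinuousLinearMap.apply ℝ ℝ ((1:ℝ),(0:ℝ))).comp
          (fderiv ℝ (fderiv ℝ (uncurry f)) (t, x))) (t, x) :=
      (ContinuousLinearMap.apply ℝ ℝ ((1:ℝ),(0:ℝ))).hasFDerivAt.comp (t, x) hc
    rw [h2.fderiv]; rfl
  rw [e1, e2, hsym]

lemma cont_slice_t (hf : ContDiff ℝ (⊤ : ℕ∞) (uncurry f)) (t : ℝ) : Continuous (f t) := by
  have : f t = uncurry f ∘ fun x => (t, x) := rfl
  rw [this]; exact hf.continuous.comp (by fun_prop)


variable {f : ℝ → ℝ → ℝ}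

lemma cont_slice_s (hf : Continuous (uncurry f)) (x : ℝ) : Continuous (fun s => f s x) := by
  have : (fun s => f s x) = uncurry f ∘ fun s => (s, x) := rfl
  rw [this]; exact hf.comp (by fun_prop)

lemma cont_slice (hf : Continuous (uncurry f)) (t : ℝ) : Continuous (f t) := by
  have : f t = uncurry f ∘ fun x => (t, x) := rfl
  rw [this]; exact hf.comp (by fun_prop)

/-- Differentiation under the integral sign over `[0,1]` for smooth integrands. -/
lemma hasDerivAt_param (hf : ContDiff ℝ (⊤ : ℕ∞) (uncurry f)) (t₀ : ℝ) :
    HasDerivAt (fun t => ∫ x in (0:ℝ)..1, f t x) (∫ x in (0:ℝ)..1, pt f t₀ x) t₀ := by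
  have hptc : Continuous (uncurry (pt f)) := (contDiff_pt hf).continuous
  have hK : IsCompact ((Icc (t₀ - 1) (t₀ + 1)) ×ˢ (Icc (0:ℝ) 1)) :=
    isCompact_Icc.prod isCompact_Icc
  obtain ⟨C, hC⟩ := hK.exists_bound_of_continuousOn hptc.continuousOn
  refine (intervalIntegral.hasDerivAt_integral_of_dominated_loc_of_deriv_le
    (F := f) (F' := pt f) (bound := fun _ => C) (s := Metric.ball t₀ 1) (Metric.ball_mem_nhds t₀ one_pos)
    (Filter.Eventually.of_forall fun t =>
      ((cont_slice hf.continuous t).aestronglyMeasurable))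
    ((cont_slice hf.continuous t₀).intervalIntegrable _ _)
    ((cont_slice hptc t₀).aestronglyMeasurable)
    (Filter.Eventually.of_forall ?_)
    (intervalIntegrable_const)
    (Filter.Eventually.of_forall ?_)).2
  · intro x hx t ht
    have hxI : x ∈ Icc (0:ℝ) 1 := by
      have : x ∈ Ioc (0:ℝ) 1 := by simpa [Set.uIoc_of_le (by norm_num : (0:ℝ) ≤ 1)] using hx
      exact Ioc_subset_Icc_self this
    have htI : t ∈ Icc (t₀ - 1) (t₀ + 1) := by
      have := Metric.mem_ball.mp ht
      have := abs_lt.mp (by simpa [Real.dist_eq] using this)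
      constructor <;> linarith [this.1, this.2]
    exact hC (t, x) (Set.mk_mem_prod htI hxI)
  · intro x _ t _
    exact hasDerivAt_pt hf t x

lemma continuous_param (hf : ContDiff ℝ (⊤ : ℕ∞) (uncurry f)) :
    Continuous (fun t => ∫ x in (0:ℝ)..1, f t x) := by
  have : Differentiable ℝ (fun t => ∫ x in (0:ℝ)..1, f t x) :=
    fun t => (hasDerivAt_param hf t).differentiableAt
  exact this.continuous

/-- FTC-1 for continuous integrand. -/
lemma hasDerivAt_primitive {g : ℝ → ℝ} (hg : Continuous g) (t : ℝ) :
    HasDerivAt (fun u => ∫ s in (0:ℝ)..u, g s) (g t) t :=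
  intervalIntegral.integral_hasDerivAt_right (hg.intervalIntegrable _ _)
    (hg.stronglyMeasurable.stronglyMeasurableAtFilter) hg.continuousAt

/-- FTC-2. -/
lemma ftc2 {F F' : ℝ → ℝ} (hd : ∀ x, HasDerivAt F (F' x) x) (hc : Continuous F')
    (a b : ℝ) : ∫ x in a..b, F' x = F b - F a :=
  intervalIntegral.integral_eq_sub_of_hasDerivAt (fun x _ => hd x)
    (hc.intervalIntegrable _ _)


/-- Cauchy–Schwarz for interval integrals of continuous functions. -/
lemma cs_integral {f g : ℝ → ℝ} (hf : Continuous f) (hg : Continuous g)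
    {a b : ℝ} (hab : a ≤ b) :
    (∫ x in a..b, f x * g x)^2 ≤ (∫ x in a..b, (f x)^2) * (∫ x in a..b, (g x)^2) := by
  set A := ∫ x in a..b, (f x)^2 with hA
  set B := ∫ x in a..b, f x * g x with hB
  set Cq := ∫ x in a..b, (g x)^2 with hCq
  have key : ∀ lam : ℝ, 0 ≤ Cq * (lam * lam) + (2 * B) * lam + A := by
    intro lam
    have h0 : 0 ≤ ∫ x in a..b, (lam * g x + f x)^2 :=
      intervalIntegral.integral_nonneg hab (fun x _ => sq_nonneg _)
    have i1 : IntervalIntegrable (fun x => (g x)^2) volume a b :=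
      (hg.pow 2).intervalIntegrable _ _
    have i2 : IntervalIntegrable (fun x => f x * g x) volume a b :=
      (hf.mul hg).intervalIntegrable _ _
    have i3 : IntervalIntegrable (fun x => (f x)^2) volume a b :=
      (hf.pow 2).intervalIntegrable _ _
    have hexp : (∫ x in a..b, (lam * g x + f x)^2)
        = Cq * (lam * lam) + (2 * B) * lam + A := by
      have e : ∀ x ∈ Set.uIcc a b, (lam * g x + f x)^2
          = lam ^ 2 * (g x)^2 + (2 * lam) * (f x * g x) + (f x)^2 := by
        intro x _; ring
      rw [intervalIntegral.integral_congr e]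
      rw [intervalIntegral.integral_add ((i1.const_mul _).add (i2.const_mul _)) i3,
        intervalIntegral.integral_add (i1.const_mul _) (i2.const_mul _),
        intervalIntegral.integral_const_mul, intervalIntegral.integral_const_mul]
      simp only [← hA, ← hB, ← hCq]; ring
    linarith [hexp ▸ h0]
  have hd := discrim_le_zero (a := Cq) (b := 2 * B) (c := A) key
  simp only [discrim] at hd
  nlinarith [hd]

/-- AM-GM absorption helper: from `x² ≤ A·B`, get `2kx ≤ k²A/σ + σB`. -/
lemma young_cs {x A B k σ : ℝ} (hx : x^2 ≤ A * B) (hA : 0 ≤ A) (hB : 0 ≤ B)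
    (hσ : 0 < σ) (hk : 0 ≤ k) : 2 * k * x ≤ k^2 * A / σ + σ * B := by
  have key : 2 * k * x * σ ≤ k^2 * A + σ^2 * B := by
    rcases le_or_gt x 0 with hx0 | hx0
    · have h1 : 2 * k * x * σ ≤ 0 := by
        have : 0 ≤ 2 * k * (-x) * σ :=
          mul_nonneg (mul_nonneg (by positivity) (by linarith)) hσ.le
        nlinarith
      nlinarith [mul_nonneg (mul_nonneg hk hk) hA, mul_nonneg (mul_nonneg hσ.le hσ.le) hB]
    · rcases eq_or_lt_of_le hk with hk0 | hkpos
      · rw [← hk0]; nlinarith [mul_nonneg (mul_nonneg hσ.le hσ.le) hB]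
      · have hQ : 0 < k^2 * A + σ^2 * B + 2 * k * x * σ := by
          have h2 : 0 < 2 * k * x * σ := by positivity
          nlinarith [mul_nonneg (mul_nonneg hk hk) hA, mul_nonneg (mul_nonneg hσ.le hσ.le) hB]
        have hPQ : 0 ≤ (k^2 * A + σ^2 * B - 2 * k * x * σ) * (k^2 * A + σ^2 * B + 2 * k * x * σ) := by
          nlinarith [sq_nonneg (k^2 * A - σ^2 * B),
            mul_nonneg (mul_nonneg (mul_nonneg hk hk) (mul_nonneg hσ.le hσ.le)) (sub_nonneg.2 hx)]
        nlinarith [mul_pos hQ hQ]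
  have h3 : 2 * k * x ≤ (k^2 * A + σ^2 * B) / σ := by
    rw [le_div_iff₀ hσ]; linarith
  have h4 : (k^2 * A + σ^2 * B) / σ = k^2 * A / σ + σ * B := by
    field_simp
  linarith [h4 ▸ h3]

/-- monotonicity in the upper limit for nonneg continuous integrands -/
lemma integral_le_integral_of_le {h : ℝ → ℝ} (hh : Continuous h) (hpos : ∀ y, 0 ≤ h y)
    {x y : ℝ} (hxy : x ≤ y) : (∫ s in (0:ℝ)..x, h s) ≤ ∫ s in (0:ℝ)..y, h s := by
  have heq : (∫ s in (0:ℝ)..y, h s) = (∫ s in (0:ℝ)..x, h s) + ∫ s in x..y, h s :=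
    (intervalIntegral.integral_add_adjacent_intervals
      (hh.intervalIntegrable _ _) (hh.intervalIntegrable _ _)).symm
  have h2 : 0 ≤ ∫ s in x..y, h s :=
    intervalIntegral.integral_nonneg hxy (fun s _ => hpos s)
  linarith

/-- basic pointwise bound `F(x)² ≤ x ∫₀¹ F'²` when `F 0 = 0`. -/
lemma pointwise_sq_le {F F' : ℝ → ℝ} (hd : ∀ x, HasDerivAt F (F' x) x)
    (hc : Continuous F') (h0 : F 0 = 0) {x : ℝ} (hx : x ∈ Icc (0:ℝ) 1) :
    (F x)^2 ≤ x * ∫ s in (0:ℝ)..1, (F' s)^2 := by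
  have hFx : F x = ∫ s in (0:ℝ)..x, F' s := by rw [ftc2 hd hc, h0, sub_zero]
  have hcs := cs_integral (continuous_const : Continuous (fun _ : ℝ => (1:ℝ))) hc hx.1
  simp only [one_mul, one_pow, intervalIntegral.integral_const, smul_eq_mul, sub_zero,
    mul_one] at hcs
  have hmono : (∫ s in (0:ℝ)..x, (F' s)^2) ≤ ∫ s in (0:ℝ)..1, (F' s)^2 :=
    integral_le_integral_of_le (hc.pow 2) (fun y => sq_nonneg _) hx.2
  calc (F x)^2 = (∫ s in (0:ℝ)..x, F' s)^2 := by rw [hFx]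
    _ ≤ x * ∫ s in (0:ℝ)..x, (F' s)^2 := hcs
    _ ≤ x * ∫ s in (0:ℝ)..1, (F' s)^2 := mul_le_mul_of_nonneg_left hmono hx.1

/-- Poincaré: `∫F² ≤ ½ ∫F'²` when `F 0 = 0`. -/
lemma poincare {F F' : ℝ → ℝ} (hd : ∀ x, HasDerivAt F (F' x) x)
    (hc : Continuous F') (h0 : F 0 = 0) (hFc : Continuous F) :
    (∫ x in (0:ℝ)..1, (F x)^2) ≤ (1/2) * ∫ s in (0:ℝ)..1, (F' s)^2 := by
  have hmono : ∀ x ∈ Icc (0:ℝ) 1,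
      (F x)^2 ≤ x * ∫ s in (0:ℝ)..1, (F' s)^2 := fun x hx => pointwise_sq_le hd hc h0 hx
  have h1 : (∫ x in (0:ℝ)..1, (F x)^2)
      ≤ ∫ x in (0:ℝ)..1, x * ∫ s in (0:ℝ)..1, (F' s)^2 := by
    apply intervalIntegral.integral_mono_on (by norm_num)
      ((hFc.pow 2).intervalIntegrable _ _)
      ((continuous_id.mul continuous_const).intervalIntegrable _ _)
    exact hmono
  have hid : (∫ x in (0:ℝ)..1, x * ∫ s in (0:ℝ)..1, (F' s)^2)
      = (1/2) * ∫ s in (0:ℝ)..1, (F' s)^2 := by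
    rw [intervalIntegral.integral_mul_const, integral_id]; norm_num
  linarith

/-- trace bound: `F(1)² ≤ ∫F'²` when `F 0 = 0`. -/
lemma trace_sq_le {F F' : ℝ → ℝ} (hd : ∀ x, HasDerivAt F (F' x) x)
    (hc : Continuous F') (h0 : F 0 = 0) : (F 1)^2 ≤ ∫ s in (0:ℝ)..1, (F' s)^2 := by
  have := pointwise_sq_le hd hc h0 (x := 1) (by norm_num)
  linarith

/-- Agmon-type bound: `F(x)⁴ ≤ 4 (∫F²)(∫F'²)` when `F 0 = 0`. -/
lemma pointwise_quad_le {F F' : ℝ → ℝ} (hd : ∀ x, HasDerivAt F (F' x) x)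
    (hc : Continuous F') (h0 : F 0 = 0) (hFc : Continuous F) {x : ℝ}
    (hx : x ∈ Icc (0:ℝ) 1) :
    (F x)^4 ≤ 4 * (∫ s in (0:ℝ)..1, (F s)^2) * (∫ s in (0:ℝ)..1, (F' s)^2) := by
  have hsq : ∀ y, HasDerivAt (fun z => (F z)^2) (2 * F y * F' y) y := by
    intro y
    have h := (hd y).pow 2
    norm_num at h
    exact h
  have hcont2 : Continuous (fun y => 2 * F y * F' y) :=
    (continuous_const.mul hFc).mul hc
  have hFx : (F x)^2 = ∫ s in (0:ℝ)..x, 2 * F s * F' s := by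
    have h := ftc2 hsq hcont2 0 x
    rw [h0] at h
    norm_num at h
    linarith
  have hcs := cs_integral hFc hc (hx.1)
  have hm1 : (∫ s in (0:ℝ)..x, (F s)^2) ≤ ∫ s in (0:ℝ)..1, (F s)^2 :=
    integral_le_integral_of_le (hFc.pow 2) (fun y => sq_nonneg _) hx.2
  have hm2 : (∫ s in (0:ℝ)..x, (F' s)^2) ≤ ∫ s in (0:ℝ)..1, (F' s)^2 :=
    integral_le_integral_of_le (hc.pow 2) (fun y => sq_nonneg _) hx.2
  have hnn1 : (0:ℝ) ≤ ∫ s in (0:ℝ)..x, (F s)^2 :=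
    intervalIntegral.integral_nonneg hx.1 (fun s _ => sq_nonneg _)
  have hnn2 : (0:ℝ) ≤ ∫ s in (0:ℝ)..x, (F' s)^2 :=
    intervalIntegral.integral_nonneg hx.1 (fun s _ => sq_nonneg _)
  have h2 : (∫ s in (0:ℝ)..x, 2 * F s * F' s) = 2 * ∫ s in (0:ℝ)..x, F s * F' s := by
    rw [← intervalIntegral.integral_const_mul]
    congr 1; funext s; ring
  have hee : (F x)^4 = ((F x)^2)^2 := by ring
  rw [hee, hFx, h2]
  nlinarith [hcs, hm1, hm2, hnn1, hnn2]

/-- integrands equal on `Ioo 0 1` have equal integrals over `0..1`. -/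
lemma integral_congr_Ioo {f g : ℝ → ℝ} (h : ∀ x ∈ Ioo (0:ℝ) 1, f x = g x) :
    ∫ x in (0:ℝ)..1, f x = ∫ x in (0:ℝ)..1, g x := by
  rw [intervalIntegral.integral_of_le (by norm_num : (0:ℝ) ≤ 1),
    intervalIntegral.integral_of_le (by norm_num : (0:ℝ) ≤ 1),
    MeasureTheory.integral_Ioc_eq_integral_Ioo,
    MeasureTheory.integral_Ioc_eq_integral_Ioo]
  exact MeasureTheory.integral_congr_ae
    ((MeasureTheory.ae_restrict_iff' measurableSet_Ioo).2 (Filter.Eventually.of_forall h))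

lemma integral_sq_id : (∫ x in (0:ℝ)..1, x^2) = 1/3 := by
  rw [integral_pow]; norm_num

lemma hasDerivAt_expmul (θ t : ℝ) :
    HasDerivAt (fun u => Real.exp (θ*u)) (θ * Real.exp (θ*t)) t := by
  have hin : HasDerivAt (fun u : ℝ => θ*u) θ t := by
    simpa using (hasDerivAt_id t).const_mul θ
  simpa [mul_comm] using hin.exp

section Template

set_option maxHeartbeats 1000000

/-- The L² exponential decay template for the linearized penalized problem. -/
lemma L2_template
    (ν α r γ ε : ℝ) (z : ℝ → ℝ → ℝ) (c : ℝ → ℝ → ℝ)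
    (hν : 0 < ν) (hα : 0 < α) (hr0 : 0 < r) (hε : 0 < ε)
    (hz : ContDiff ℝ (⊤ : ℕ∞) (uncurry z)) (hcC : Continuous (uncurry c))
    (hcnn : ∀ t, 0 < t → ∀ x ∈ Icc (0:ℝ) 1, 0 ≤ c t x)
    (hpde : ∀ t, 0 < t → ∀ x ∈ Ioo (0:ℝ) 1,
      pt z t x = ν * px (px z) t x + α * z t x - c t x * z t x)
    (hbc0 : ∀ t, 0 ≤ t → z t 0 = 0)
    (hrobin : ∀ t, 0 < t → ε * px z t 1 + z t 1 = -r * ∫ x in (0:ℝ)..1, x * z t x)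
    (hγ0 : 0 < γ) (hγ : 2*γ ≤ 4*ν - 4*ν*r^2/(3*ε) - 2*α) :
    ∀ t, 0 ≤ t →
      Real.exp ((2*γ + ν*r^2/ε)*t) * (∫ x in (0:ℝ)..1, (z t x)^2)
      + (ν*r^2/(12*ε)) * (∫ s in (0:ℝ)..t,
          Real.exp ((2*γ + ν*r^2/ε)*s) * ∫ x in (0:ℝ)..1, (px z s x)^2)
      ≤ ∫ x in (0:ℝ)..1, (z 0 x)^2 := by
  set θ := 2*γ + ν*r^2/ε with hθ
  set κ := ν*r^2/(12*ε) with hκ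
  have hθpos : 0 < θ := by
    have : 0 < ν*r^2/ε := by positivity
    rw [hθ]; linarith
  have hκpos : 0 < κ := by rw [hκ]; positivity
  clear_value θ κ
  -- smoothness of slices
  have hzsq : ContDiff ℝ (⊤ : ℕ∞) (uncurry (fun t x => (z t x)^2)) := by
    have he : uncurry (fun t x => (z t x)^2) = (fun y : ℝ => y^2) ∘ uncurry z := rfl
    rw [he]; exact (contDiff_id.pow 2).comp hz
  have hpx : ContDiff ℝ (⊤ : ℕ∞) (uncurry (px z)) := contDiff_px hz
  have hpxsq : ContDiff ℝ (⊤ : ℕ∞) (uncurry (fun t x => (px z t x)^2)) := by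
    have he : uncurry (fun t x => (px z t x)^2) = (fun y : ℝ => y^2) ∘ uncurry (px z) := rfl
    rw [he]; exact (contDiff_id.pow 2).comp hpx
  -- derivatives of the energies
  have hptsq : ∀ t x, pt (fun t x => (z t x)^2) t x = 2 * z t x * pt z t x := by
    intro t x
    have h := ((hasDerivAt_pt hz t x).pow 2).deriv
    norm_num at h
    show deriv (fun s => (z s x)^2) t = _
    rw [show (fun s => (z s x)^2) = (fun s => z s x)^2 from rfl, h]
  have hptsq' : ∀ t x, pt (fun t x => (px z t x)^2) t x
      = 2 * px z t x * px (pt z) t x := by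
    intro t x
    have h := ((hasDerivAt_pt hpx t x).pow 2).deriv
    norm_num at h
    show deriv (fun s => (px z s x)^2) t = _
    rw [show (fun s => (px z s x)^2) = (fun s => px z s x)^2 from rfl, h, ← swap_pt_px hz]
  have hN0d : ∀ t, HasDerivAt (fun u => ∫ x in (0:ℝ)..1, (z u x)^2)
      (∫ x in (0:ℝ)..1, 2 * z t x * pt z t x) t := by
    intro t
    have h := hasDerivAt_param hzsq t
    have he : (∫ x in (0:ℝ)..1, pt (fun t x => (z t x)^2) t x)
        = ∫ x in (0:ℝ)..1, 2 * z t x * pt z t x := by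
      apply intervalIntegral.integral_congr; intro x _; exact hptsq t x
    rw [he] at h; exact h
  have hN1c : Continuous (fun u => ∫ x in (0:ℝ)..1, (px z u x)^2) := continuous_param hpxsq
  have hgc : Continuous (fun s => Real.exp (θ*s) * ∫ x in (0:ℝ)..1, (px z s x)^2) := by
    apply Continuous.mul _ hN1c; continuity
  -- the Lyapunov function
  set h : ℝ → ℝ := fun u => Real.exp (θ*u) * (∫ x in (0:ℝ)..1, (z u x)^2)
      + κ * ∫ s in (0:ℝ)..u, Real.exp (θ*s) * ∫ x in (0:ℝ)..1, (px z s x)^2 with hh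
  have hhd : ∀ t, HasDerivAt h
      (θ * Real.exp (θ*t) * (∫ x in (0:ℝ)..1, (z t x)^2)
        + Real.exp (θ*t) * (∫ x in (0:ℝ)..1, 2 * z t x * pt z t x)
        + κ * (Real.exp (θ*t) * ∫ x in (0:ℝ)..1, (px z t x)^2)) t := by
    intro t
    have h2 := ((hasDerivAt_expmul θ t).mul (hN0d t)).add
      ((hasDerivAt_primitive hgc t).const_mul κ)
    exact h2
  -- the derivative is nonpositive for t > 0
  have hkey : ∀ t, 0 < t →
      θ * Real.exp (θ*t) * (∫ x in (0:ℝ)..1, (z t x)^2)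
        + Real.exp (θ*t) * (∫ x in (0:ℝ)..1, 2 * z t x * pt z t x)
        + κ * (Real.exp (θ*t) * ∫ x in (0:ℝ)..1, (px z t x)^2) ≤ 0 := by
    intro t ht
    have hzc : Continuous (z t) := cont_slice hz.continuous t
    have hpxc : Continuous (px z t) := cont_slice hpx.continuous t
    have hpxxc : Continuous (px (px z) t) := cont_slice (contDiff_px hpx).continuous t
    have hcc : Continuous (c t) := cont_slice hcC t
    set N0 := ∫ x in (0:ℝ)..1, (z t x)^2 with hN0
    set N1 := ∫ x in (0:ℝ)..1, (px z t x)^2 with hN1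
    set X := ∫ x in (0:ℝ)..1, x * z t x with hX
    -- step 1: rewrite the time-derivative integrand with the PDE
    have hsub : (∫ x in (0:ℝ)..1, 2 * z t x * pt z t x)
        = ∫ x in (0:ℝ)..1, (2*ν * (z t x * px (px z) t x) + 2*α * (z t x)^2
            - 2 * (c t x * (z t x)^2)) := by
      apply integral_congr_Ioo; intro x hx
      rw [hpde t ht x hx]; ring
    have hi1 : IntervalIntegrable (fun x => z t x * px (px z) t x) volume 0 1 :=
      (hzc.mul hpxxc).intervalIntegrable _ _
    have hi2 : IntervalIntegrable (fun x => (z t x)^2) volume 0 1 :=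
      (hzc.pow 2).intervalIntegrable _ _
    have hi3 : IntervalIntegrable (fun x => c t x * (z t x)^2) volume 0 1 :=
      (hcc.mul (hzc.pow 2)).intervalIntegrable _ _
    have hsplit : (∫ x in (0:ℝ)..1, (2*ν * (z t x * px (px z) t x) + 2*α * (z t x)^2
            - 2 * (c t x * (z t x)^2)))
        = 2*ν * (∫ x in (0:ℝ)..1, z t x * px (px z) t x) + 2*α * N0
          - 2 * ∫ x in (0:ℝ)..1, c t x * (z t x)^2 := by
      rw [intervalIntegral.integral_sub ((hi1.const_mul _).add (hi2.const_mul _))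
        (hi3.const_mul _),
        intervalIntegral.integral_add (hi1.const_mul _) (hi2.const_mul _),
        intervalIntegral.integral_const_mul, intervalIntegral.integral_const_mul,
        intervalIntegral.integral_const_mul]
    -- step 2: integration by parts
    have hibp : (∫ x in (0:ℝ)..1, z t x * px (px z) t x)
        = z t 1 * px z t 1 - N1 := by
      have hIBP := intervalIntegral.integral_mul_deriv_eq_deriv_mul
        (a := (0:ℝ)) (b := (1:ℝ)) (u := z t) (u' := px z t) (v := px z t) (v' := px (px z) t)
        (fun x _ => hasDerivAt_px hz t x) (fun x _ => hasDerivAt_px hpx t x)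
        (hpxc.intervalIntegrable _ _) (hpxxc.intervalIntegrable _ _)
      rw [hbc0 t (le_of_lt ht)] at hIBP
      have he : (∫ x in (0:ℝ)..1, px z t x * px z t x) = N1 := by
        rw [hN1]; apply intervalIntegral.integral_congr; intro x _; ring
      rw [he] at hIBP
      rw [hIBP]; ring
    -- step 3: boundary term bound via Robin condition
    have hrob := hrobin t ht
    rw [← hX] at hrob
    have hcs2 : X^2 ≤ (∫ x in (0:ℝ)..1, x^2) * N0 := by
      have := cs_integral continuous_id hzc (by norm_num : (0:ℝ) ≤ 1)
      exact this
    rw [integral_sq_id] at hcs2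
    -- step 4: sign of the cubic term
    have hcz : 0 ≤ ∫ x in (0:ℝ)..1, c t x * (z t x)^2 :=
      intervalIntegral.integral_nonneg (by norm_num)
        (fun x hx => mul_nonneg (hcnn t ht x hx) (sq_nonneg _))
    -- step 5: Poincaré
    have hpoin : N0 ≤ (1/2) * N1 :=
      poincare (fun x => hasDerivAt_px hz t x) hpxc (hbc0 t (le_of_lt ht)) hzc
    have hN1nn : 0 ≤ N1 :=
      intervalIntegral.integral_nonneg (by norm_num) (fun x _ => sq_nonneg _)
    clear_value N0 N1 X
    have hXsq : X^2 ≤ N0 / 3 := by linarith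
    have hbd : z t 1 * px z t 1 ≤ r^2/(4*ε) * X^2 := by
      have h1 : px z t 1 = (-(z t 1) - r*X)/ε := by
        rw [eq_div_iff (ne_of_gt hε)]
        linear_combination hrob
      rw [h1]
      have h2 : -(z t 1)^2 - r*X*(z t 1) ≤ r^2*X^2/4 := by
        nlinarith [sq_nonneg (z t 1 + r*X/2)]
      have h3 : z t 1 * ((-(z t 1) - r*X)/ε) = (-(z t 1)^2 - r*X*(z t 1))/ε := by ring
      rw [h3, div_le_iff₀ hε]
      calc -(z t 1)^2 - r*X*(z t 1) ≤ r^2*X^2/4 := h2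
        _ = r^2/(4*ε) * X^2 * ε := by field_simp
    -- assemble
    have hcoef : θ + 2*α + ν*r^2/(6*ε) + 2*κ ≤ 4*ν := by
      rw [hθ, hκ]
      have e1 : ν*r^2/ε + ν*r^2/(6*ε) + 2*(ν*r^2/(12*ε)) = 4*ν*r^2/(3*ε) := by
        field_simp; ring
      linarith
    have hD0 : (∫ x in (0:ℝ)..1, 2 * z t x * pt z t x)
        ≤ 2*ν*(r^2/(4*ε) * X^2) - 2*ν*N1 + 2*α*N0 := by
      rw [hsub, hsplit, hibp]
      have h8 : 2*ν*(z t 1 * px z t 1) ≤ 2*ν*(r^2/(4*ε)*X^2) :=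
        mul_le_mul_of_nonneg_left hbd (by positivity)
      nlinarith [hcz, h8]
    have hXN : 2*ν*(r^2/(4*ε) * X^2) ≤ ν*r^2/(6*ε) * N0 := by
      have h5 : 2*ν*(r^2/(4*ε)) * X^2 ≤ 2*ν*(r^2/(4*ε)) * (N0 / 3) :=
        mul_le_mul_of_nonneg_left hXsq (by positivity)
      calc 2*ν*(r^2/(4*ε) * X^2) = 2*ν*(r^2/(4*ε)) * X^2 := by ring
        _ ≤ 2*ν*(r^2/(4*ε)) * (N0 / 3) := h5
        _ = ν*r^2/(6*ε) * N0 := by field_simp; ring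
    have hexp : (0:ℝ) < Real.exp (θ*t) := Real.exp_pos _
    have hfinal : θ * N0 + (∫ x in (0:ℝ)..1, 2 * z t x * pt z t x) + κ * N1 ≤ 0 := by
      have h7 : (θ + 2*α + ν*r^2/(6*ε)) * N0 ≤ (θ + 2*α + ν*r^2/(6*ε)) * ((1/2) * N1) := by
        apply mul_le_mul_of_nonneg_left hpoin
        have h9 : 0 < ν*r^2/(6*ε) := by positivity
        linarith
      nlinarith [hXN, hD0, h7, mul_nonneg (sub_nonneg.2 hcoef) hN1nn]
    calc θ * Real.exp (θ*t) * N0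
          + Real.exp (θ*t) * (∫ x in (0:ℝ)..1, 2 * z t x * pt z t x)
          + κ * (Real.exp (θ*t) * N1)
        = Real.exp (θ*t) * (θ * N0 + (∫ x in (0:ℝ)..1, 2 * z t x * pt z t x) + κ * N1) := by
          ring
      _ ≤ Real.exp (θ*t) * 0 := mul_le_mul_of_nonneg_left hfinal hexp.le
      _ = 0 := by ring
  -- antitone argument
  have hanti : AntitoneOn h (Ici (0:ℝ)) := by
    apply antitoneOn_of_deriv_nonpos (convex_Ici 0)
    · exact (fun t _ => ((hhd t).differentiableAt).continuousAt.continuousWithinAt)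
    · intro t _
      exact ((hhd t).differentiableAt).differentiableWithinAt
    · intro t ht
      rw [interior_Ici] at ht
      rw [(hhd t).deriv]
      exact hkey t ht
  intro t ht
  have h0eq : h 0 = ∫ x in (0:ℝ)..1, (z 0 x)^2 := by
    rw [hh]; simp
  have hfin := hanti (self_mem_Ici) (mem_Ici.2 ht) ht
  rw [h0eq] at hfin
  simpa only [hh] using hfin

end Template

set_option maxHeartbeats 2000000 in
/-- The core algebraic inequality for the H¹ energy estimate. -/
lemma keyIneq (ν α δ r γ ε : ℝ)
    (hν : 0 < ν) (hα : 0 < α) (hδ : 0 < δ) (hr : 0 < r) (hε : 0 < ε) (hγ : 0 < γ)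
    (A B2 C2 Bb X W0 W1 I1 I2 I3 PV1 E' : ℝ)
    (hA : 0 ≤ A) (hB2 : 0 ≤ B2) (hC2 : 0 ≤ C2) (hW0 : 0 ≤ W0) (hW1 : 0 ≤ W1)
    (hX : X^2 ≤ A/3) (hBb : Bb^2 ≤ B2)
    (hI1 : I1^2 ≤ A*C2) (hI2 : I2^2 ≤ (36*δ^2*(W0*W1)*A)*C2) (hI3 : I3^2 ≤ 12*δ^2*(W0*W1)*A)
    (hPV1 : PV1 = (-Bb - r*X)/ε)
    (hB2eq : B2 = Bb*PV1 - I1)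
    (hE' : E' = -2*(ν*C2 + α*I1 - I2) + (2*r/ε)*(ν*(PV1 - Bb) + α*X - I3)*Bb) :
    2*γ*(B2 + (1/ε)*Bb^2 + (2*r/ε)*X*Bb) + E' + ν*C2
      ≤ (2*γ*(1+1/ε+r/ε) + α^2/(ν/4) + (2*r*ν/ε)*(r^2/(12*ε)) + r*α/ε
          + (2*γ*(1+1/ε+r/ε) + α*r/ε + r/ε)*(r^2/(12*ε))
          + ((2*γ*(1+1/ε+r/ε) + α*r/ε + r/ε)/2)^2/(ν/2)) * A
        + (36*δ^2/(ν/4) + 12*δ^2*(r/ε)) * (W0*W1) * A := by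
  set KB := 2*γ*(1+1/ε+r/ε) + α*r/ε + r/ε with hKB
  have hKBpos : 0 < KB := by rw [hKB]; positivity
  clear_value KB
  -- basic nonneg facts
  have hWWA : 0 ≤ (W0*W1)*A := by positivity
  -- Young absorptions
  have b1 : 2*α*(-I1) ≤ α^2*A/(ν/4) + (ν/4)*C2 :=
    young_cs (by nlinarith [hI1] : (-I1)^2 ≤ A*C2) hA hC2 (by positivity) hα.le
  have b2 : 2*1*I2 ≤ 1^2*(36*δ^2*(W0*W1)*A)/(ν/4) + (ν/4)*C2 :=
    young_cs hI2 (by positivity) hC2 (by positivity) (by norm_num)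
  have b7 : 2*(KB/2)*(-I1) ≤ (KB/2)^2*A/(ν/2) + (ν/2)*C2 :=
    young_cs (by nlinarith [hI1] : (-I1)^2 ≤ A*C2) hA hC2 (by positivity) (by positivity)
  -- boundary product bound
  have hPB : PV1*Bb ≤ r^2*A/(12*ε) := by
    have h1 : PV1*Bb = (-Bb^2 - r*X*Bb)/ε := by rw [hPV1]; ring
    have hrX : r^2*X^2 ≤ r^2*(A/3) := mul_le_mul_of_nonneg_left hX (sq_nonneg r)
    have h2 : -Bb^2 - r*X*Bb ≤ r^2*A/12 := by nlinarith [sq_nonneg (Bb + r*X/2)]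
    have h3 : (-Bb^2 - r*X*Bb)/ε ≤ (r^2*A/12)/ε := by gcongr
    have h4 : (r^2*A/12)/ε = r^2*A/(12*ε) := by ring
    rw [h1, ← h4]; exact h3
  -- cross terms
  have b5 : (2*r*α/ε)*(X*Bb) ≤ (r*α/ε)*(A + B2) := by
    have h1 : 2*(X*Bb) ≤ X^2 + Bb^2 := by nlinarith [sq_nonneg (X - Bb)]
    have h2 : X^2 + Bb^2 ≤ A + B2 := by nlinarith [hX]
    have h3 := mul_le_mul_of_nonneg_left (le_trans h1 h2) (show (0:ℝ) ≤ r*α/ε by positivity)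
    ring_nf at h3 ⊢
    linarith [h3]
  have b6 : -(2*r/ε)*(I3*Bb) ≤ (r/ε)*(12*δ^2*(W0*W1)*A + B2) := by
    have h1 : 2*(-(I3*Bb)) ≤ I3^2 + Bb^2 := by nlinarith [sq_nonneg (I3 + Bb)]
    have h2 : I3^2 + Bb^2 ≤ 12*δ^2*(W0*W1)*A + B2 := by linarith [hI3, hBb]
    have h3 := mul_le_mul_of_nonneg_left (le_trans h1 h2) (show (0:ℝ) ≤ r/ε by positivity)
    ring_nf at h3 ⊢
    linarith [h3]
  -- 2γE bound
  have bE : 2*γ*(B2 + (1/ε)*Bb^2 + (2*r/ε)*X*Bb) ≤ 2*γ*(1+1/ε+r/ε)*(A + B2) := by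
    have h1 : 2*(X*Bb) ≤ X^2 + Bb^2 := by nlinarith [sq_nonneg (X - Bb)]
    have h2 : (2*r/ε)*X*Bb ≤ (r/ε)*(X^2 + Bb^2) := by
      have h2' := mul_le_mul_of_nonneg_left h1 (show (0:ℝ) ≤ r/ε by positivity)
      ring_nf at h2' ⊢
      linarith [h2']
    have h3 : B2 + (1/ε)*Bb^2 + (2*r/ε)*X*Bb ≤ (1+1/ε+r/ε)*(A+B2) := by
      have h4 : (1/ε)*Bb^2 ≤ (1/ε)*B2 := by
        apply mul_le_mul_of_nonneg_left hBb (by positivity)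
      have h5 : (r/ε)*(X^2+Bb^2) ≤ (r/ε)*(A+B2) := by
        apply mul_le_mul_of_nonneg_left (by nlinarith [hX]) (by positivity)
      ring_nf at h2 h4 h5 ⊢
      linarith [h2, h4, h5, mul_nonneg (inv_nonneg.2 hε.le) hA, hA]
    have h7 := mul_le_mul_of_nonneg_left h3 (show (0:ℝ) ≤ 2*γ by positivity)
    ring_nf at h7 ⊢
    linarith [h7]
  -- b3 : boundary term with ν coefficient
  have b3 : (2*r*ν/ε)*(PV1*Bb) ≤ (2*r*ν/ε)*(r^2*A/(12*ε)) :=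
    mul_le_mul_of_nonneg_left hPB (by positivity)
  have b4 : -(2*r*ν/ε)*Bb^2 ≤ 0 := by
    have : 0 ≤ (2*r*ν/ε)*Bb^2 := by positivity
    linarith
  -- KB·B2 absorption
  have b8 : KB*B2 ≤ KB*(r^2*A/(12*ε)) + KB*(-I1) := by
    have h1 : B2 ≤ r^2*A/(12*ε) + (-I1) := by
      rw [hB2eq]; linarith [hPB]
    have h2 := mul_le_mul_of_nonneg_left h1 hKBpos.le
    ring_nf at h2 ⊢
    linarith [h2]
  -- grand assembly
  have hE'exp : E' = -2*ν*C2 - 2*α*I1 + 2*I2 + (2*r*ν/ε)*(PV1*Bb) - (2*r*ν/ε)*Bb^2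
      + (2*r*α/ε)*(X*Bb) - (2*r/ε)*(I3*Bb) := by
    rw [hE']; field_simp; ring
  have hKBB2 : KB*B2 = (2*γ*(1+1/ε+r/ε) + α*r/ε + r/ε)*B2 := by rw [hKB]
  rw [hE'exp]
  ring_nf at b1 b2 b3 b4 b5 b6 b7 b8 bE hKBB2 ⊢
  linarith [b1, b2, b3, b4, b5, b6, b7, b8, bE, hKBB2]


/-- derivative of a function vanishing on `Ioi 0`, at `t > 0`. -/
lemma deriv_congr_Ioi {f g : ℝ → ℝ} {t : ℝ} (ht : 0 < t)
    (h : ∀ s, 0 < s → f s = g s) : deriv f t = deriv g t := by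
  apply Filter.EventuallyEq.deriv_eq
  exact Filter.eventually_of_mem (Ioi_mem_nhds ht) h

lemma deriv_zero_of_Ioi {f : ℝ → ℝ} {t : ℝ} (ht : 0 < t)
    (h : ∀ s, 0 < s → f s = 0) : deriv f t = 0 := by
  rw [deriv_congr_Ioi ht h, deriv_const]

/-- derivative of a differentiable function vanishing on `Ici 0`, at `0`. -/
lemma deriv_zero_of_Ici {f : ℝ → ℝ} (hf : DifferentiableAt ℝ f 0)
    (h : ∀ s, 0 ≤ s → f s = 0) : deriv f 0 = 0 := by
  have h2 : HasDerivWithinAt f (deriv f 0) (Ici 0) 0 := hf.hasDerivAt.hasDerivWithinAt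
  have hc : HasDerivWithinAt (fun _ : ℝ => (0:ℝ)) 0 (Ici 0) 0 :=
    (hasDerivAt_const 0 (0:ℝ)).hasDerivWithinAt
  have h3 : HasDerivWithinAt f 0 (Ici 0) 0 :=
    hc.congr (fun y hy => h y hy) (h 0 le_rfl)
  have hu : UniqueDiffWithinAt ℝ (Ici (0:ℝ)) 0 := uniqueDiffOn_Ici 0 0 self_mem_Ici
  rw [← h2.derivWithin hu, h3.derivWithin hu]

/-- a continuous nonnegative function with zero integral vanishes on `[0,1]`. -/
lemma eq_zero_of_integral_zero {g : ℝ → ℝ} (hg : Continuous g) (hnn : ∀ x, 0 ≤ g x)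
    (hzero : (∫ x in (0:ℝ)..1, g x) = 0) {x₀ : ℝ} (hx₀ : x₀ ∈ Icc (0:ℝ) 1) :
    g x₀ = 0 := by
  by_contra hne
  have hpos : 0 < g x₀ := (hnn x₀).lt_of_ne (Ne.symm hne)
  have hca := hg.continuousAt (x := x₀)
  rw [Metric.continuousAt_iff] at hca
  obtain ⟨η, hη0, hball⟩ := hca (g x₀/2) (by positivity)
  set u := max 0 (x₀ - η/2) with hu
  set v := min 1 (x₀ + η/2) with hv
  have hu0 : 0 ≤ u := le_max_left _ _
  have hv1 : v ≤ 1 := min_le_left _ _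
  have huv : u < v := by
    apply max_lt
    · exact lt_min (by norm_num) (by nlinarith [hx₀.1])
    · exact lt_min (by nlinarith [hx₀.2]) (by linarith)
  have hgpos : ∀ y ∈ Ioo u v, 0 < g y := by
    intro y hy
    have h1 : x₀ - η/2 ≤ u := le_max_right _ _
    have h2 : v ≤ x₀ + η/2 := min_le_right _ _
    have hdist : dist y x₀ < η := by
      rw [Real.dist_eq, abs_lt]
      constructor <;> [linarith [hy.1]; linarith [hy.2]]
    have := hball hdist
    rw [Real.dist_eq, abs_lt] at this
    linarith [this.1, this.2]
  have hmid : 0 < ∫ x in u..v, g x :=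
    intervalIntegral.intervalIntegral_pos_of_pos_on
      (hg.intervalIntegrable _ _) hgpos huv
  have hleft : 0 ≤ ∫ x in (0:ℝ)..u, g x :=
    intervalIntegral.integral_nonneg hu0 (fun x _ => hnn x)
  have hright : 0 ≤ ∫ x in v..1, g x :=
    intervalIntegral.integral_nonneg hv1 (fun x _ => hnn x)
  have hsplit1 : (∫ x in (0:ℝ)..v, g x) = (∫ x in (0:ℝ)..u, g x) + ∫ x in u..v, g x :=
    (intervalIntegral.integral_add_adjacent_intervals
      (hg.intervalIntegrable _ _) (hg.intervalIntegrable _ _)).symm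
  have hsplit2 : (∫ x in (0:ℝ)..1, g x) = (∫ x in (0:ℝ)..v, g x) + ∫ x in v..1, g x :=
    (intervalIntegral.integral_add_adjacent_intervals
      (hg.intervalIntegrable _ _) (hg.intervalIntegrable _ _)).symm
  rw [hsplit2, hsplit1] at hzero
  linarith

lemma integral_exp_neg_le {d : ℝ} (hd : 0 < d) {t : ℝ} (ht : 0 ≤ t) :
    (∫ s in (0:ℝ)..t, Real.exp (-d*s)) ≤ 1/d := by
  have hF : ∀ s, HasDerivAt (fun u => -(1/d)*Real.exp (-d*u)) (Real.exp (-d*s)) s := by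
    intro s
    have h0 := (hasDerivAt_expmul (-d) s).const_mul (-(1/d))
    refine h0.congr_deriv ?_
    field_simp
  have h1 := ftc2 hF (by continuity) 0 t
  rw [h1]
  have h4 : 0 ≤ (1/d)*Real.exp (-d*t) := by positivity
  have h5 : -d*0 = 0 := by ring
  rw [h5, Real.exp_zero]
  ring_nf
  ring_nf at h4
  linarith

section LevelD

set_option maxHeartbeats 4000000

lemma levelD
    (ν α δ r γ ε : ℝ) (w : ℝ → ℝ → ℝ)
    (hν : 0 < ν) (hα : 0 < α) (hδ : 0 < δ) (hr0 : 0 < r) (hε : 0 < ε) (hγ0 : 0 < γ)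
    (hw : ContDiff ℝ (⊤ : ℕ∞) (uncurry w))
    (hwbc0 : ∀ t, 0 ≤ t → w t 0 = 0)
    (hvpde : ∀ t, 0 < t → ∀ x ∈ Ioo (0:ℝ) 1,
      pt (pt w) t x = ν * px (px (pt w)) t x + α * pt w t x - 3*δ*(w t x)^2 * pt w t x)
    (hvbc0 : ∀ t, 0 ≤ t → pt w t 0 = 0)
    (hvrobin : ∀ t, 0 < t → ε * px (pt w) t 1 + pt w t 1
        = -r * ∫ x in (0:ℝ)..1, x * pt w t x)
    (hTW : ∀ t, 0 ≤ t → Real.exp ((2*γ + ν*r^2/ε)*t) * (∫ x in (0:ℝ)..1, (w t x)^2)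
      + (ν*r^2/(12*ε)) * (∫ s in (0:ℝ)..t,
          Real.exp ((2*γ + ν*r^2/ε)*s) * ∫ x in (0:ℝ)..1, (px w s x)^2)
      ≤ ∫ x in (0:ℝ)..1, (w 0 x)^2)
    (hTV : ∀ t, 0 ≤ t → Real.exp ((2*γ + ν*r^2/ε)*t) * (∫ x in (0:ℝ)..1, (pt w t x)^2)
      + (ν*r^2/(12*ε)) * (∫ s in (0:ℝ)..t,
          Real.exp ((2*γ + ν*r^2/ε)*s) * ∫ x in (0:ℝ)..1, (px (pt w) s x)^2)
      ≤ ∫ x in (0:ℝ)..1, (pt w 0 x)^2) :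
    ∃ S : ℝ, ∀ t, 0 ≤ t →
      (∫ x in (0:ℝ)..1, (px (pt w) t x)^2)
      + ν * Real.exp (-(2*γ)*t) * (∫ s in (0:ℝ)..t,
          Real.exp (2*γ*s) * ∫ x in (0:ℝ)..1, (px (px (pt w)) s x)^2)
      + (1/ε) * (pt w t 1)^2
      ≤ Real.exp (-(2*γ)*t) * S := by
  -- smoothness
  have hv : ContDiff ℝ (⊤ : ℕ∞) (uncurry (pt w)) := contDiff_pt hw
  have hpxv : ContDiff ℝ (⊤ : ℕ∞) (uncurry (px (pt w))) := contDiff_px hv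
  have hpxxv : ContDiff ℝ (⊤ : ℕ∞) (uncurry (px (px (pt w)))) := contDiff_px hpxv
  have hu : ContDiff ℝ (⊤ : ℕ∞) (uncurry (pt (pt w))) := contDiff_pt hv
  have hpxw : ContDiff ℝ (⊤ : ℕ∞) (uncurry (px w)) := contDiff_px hw
  have sqSmooth : ∀ (g : ℝ → ℝ → ℝ), ContDiff ℝ (⊤ : ℕ∞) (uncurry g) →
      ContDiff ℝ (⊤ : ℕ∞) (uncurry (fun t x => (g t x)^2)) := by
    intro g hg
    have he : uncurry (fun t x => (g t x)^2) = (fun y : ℝ => y^2) ∘ uncurry g := rfl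
    rw [he]; exact (contDiff_id.pow 2).comp hg
  -- energy functionals
  obtain ⟨aF, haF⟩ : ∃ F : ℝ → ℝ, F = fun t => ∫ x in (0:ℝ)..1, (pt w t x)^2 := ⟨_, rfl⟩
  obtain ⟨b2F, hb2F⟩ : ∃ F : ℝ → ℝ, F = fun t => ∫ x in (0:ℝ)..1, (px (pt w) t x)^2 := ⟨_, rfl⟩
  obtain ⟨c2F, hc2F⟩ : ∃ F : ℝ → ℝ, F = fun t => ∫ x in (0:ℝ)..1, (px (px (pt w)) t x)^2 := ⟨_, rfl⟩
  obtain ⟨W0F, hW0F⟩ : ∃ F : ℝ → ℝ, F = fun t => ∫ x in (0:ℝ)..1, (w t x)^2 := ⟨_, rfl⟩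
  obtain ⟨W1F, hW1F⟩ : ∃ F : ℝ → ℝ, F = fun t => ∫ x in (0:ℝ)..1, (px w t x)^2 := ⟨_, rfl⟩
  obtain ⟨BF, hBF⟩ : ∃ F : ℝ → ℝ, F = fun t => pt w t 1 := ⟨_, rfl⟩
  obtain ⟨XF, hXF⟩ : ∃ F : ℝ → ℝ, F = fun t => ∫ x in (0:ℝ)..1, x * pt w t x := ⟨_, rfl⟩
  obtain ⟨EF, hEF⟩ : ∃ F : ℝ → ℝ,
      F = fun t => b2F t + (1/ε)*(BF t)^2 + (2*r/ε)*(XF t * BF t) := ⟨_, rfl⟩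
  -- nonnegativity
  have haNN : ∀ t, 0 ≤ aF t := by
    intro t; rw [haF]
    exact intervalIntegral.integral_nonneg (by norm_num) (fun x _ => sq_nonneg _)
  have hb2NN : ∀ t, 0 ≤ b2F t := by
    intro t; rw [hb2F]
    exact intervalIntegral.integral_nonneg (by norm_num) (fun x _ => sq_nonneg _)
  have hc2NN : ∀ t, 0 ≤ c2F t := by
    intro t; rw [hc2F]
    exact intervalIntegral.integral_nonneg (by norm_num) (fun x _ => sq_nonneg _)
  have hW0NN : ∀ t, 0 ≤ W0F t := by
    intro t; rw [hW0F]
    exact intervalIntegral.integral_nonneg (by norm_num) (fun x _ => sq_nonneg _)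
  have hW1NN : ∀ t, 0 ≤ W1F t := by
    intro t; rw [hW1F]
    exact intervalIntegral.integral_nonneg (by norm_num) (fun x _ => sq_nonneg _)
  -- continuity
  have haC : Continuous aF := by rw [haF]; exact continuous_param (sqSmooth _ hv)
  have hc2C : Continuous c2F := by rw [hc2F]; exact continuous_param (sqSmooth _ hpxxv)
  have hW0C : Continuous W0F := by rw [hW0F]; exact continuous_param (sqSmooth _ hw)
  have hW1C : Continuous W1F := by rw [hW1F]; exact continuous_param (sqSmooth _ hpxw)
  -- derivatives of the pieces
  have hb2d : ∀ t, HasDerivAt b2F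
      (∫ x in (0:ℝ)..1, 2 * px (pt w) t x * px (pt (pt w)) t x) t := by
    intro t
    rw [hb2F]
    have h := hasDerivAt_param (sqSmooth _ hpxv) t
    have he : (∫ x in (0:ℝ)..1, pt (fun t x => (px (pt w) t x)^2) t x)
        = ∫ x in (0:ℝ)..1, 2 * px (pt w) t x * px (pt (pt w)) t x := by
      apply intervalIntegral.integral_congr; intro x _
      have h2 := ((hasDerivAt_pt hpxv t x).pow 2).deriv
      norm_num at h2
      show deriv (fun s => (px (pt w) s x)^2) t = _
      rw [show (fun s => (px (pt w) s x)^2) = (fun s => px (pt w) s x)^2 from rfl, h2,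
        ← swap_pt_px hv]
    rw [he] at h; exact h
  have hBd : ∀ t, HasDerivAt BF (pt (pt w) t 1) t := by
    intro t; rw [hBF]; exact hasDerivAt_pt hv t 1
  have hXd : ∀ t, HasDerivAt XF (∫ x in (0:ℝ)..1, x * pt (pt w) t x) t := by
    intro t
    rw [hXF]
    have hsm : ContDiff ℝ (⊤ : ℕ∞) (uncurry (fun t x => x * pt w t x)) := by
      have he : uncurry (fun t x => x * pt w t x)
          = fun p : ℝ × ℝ => p.2 * uncurry (pt w) p := rfl
      rw [he]; exact (contDiff_snd).mul hv
    have h := hasDerivAt_param hsm t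
    have he : (∫ x in (0:ℝ)..1, pt (fun t x => x * pt w t x) t x)
        = ∫ x in (0:ℝ)..1, x * pt (pt w) t x := by
      apply intervalIntegral.integral_congr; intro x _
      have h2 := ((hasDerivAt_pt hv t x).const_mul x).deriv
      show deriv (fun s => x * pt w s x) t = _
      rw [h2]
    rw [he] at h; exact h
  have hEd : ∀ t, HasDerivAt EF
      ((∫ x in (0:ℝ)..1, 2 * px (pt w) t x * px (pt (pt w)) t x)
        + (1/ε)*(2*(BF t)*(pt (pt w) t 1))
        + (2*r/ε)*((∫ x in (0:ℝ)..1, x * pt (pt w) t x)*(BF t)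
            + (XF t)*(pt (pt w) t 1))) t := by
    intro t
    rw [hEF]
    have h1 : HasDerivAt (fun t => (BF t)^2) (2*(BF t)*(pt (pt w) t 1)) t := by
      have h0 := ((hBd t).pow 2)
      norm_num at h0
      refine h0.congr_deriv ?_; ring
    have h2 := ((hb2d t).add ((h1.const_mul (1/ε)))).add
      (((hXd t).mul (hBd t)).const_mul (2*r/ε))
    refine h2.congr_deriv ?_; ring
  -- continuity of the functionals that have derivatives
  have hb2C : Continuous b2F := by
    have : Differentiable ℝ b2F := fun t => (hb2d t).differentiableAt
    exact this.continuous
  have hBC : Continuous BF := by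
    have : Differentiable ℝ BF := fun t => (hBd t).differentiableAt
    exact this.continuous
  have hXC : Continuous XF := by
    have : Differentiable ℝ XF := fun t => (hXd t).differentiableAt
    exact this.continuous
  have hEC : Continuous EF := by
    have : Differentiable ℝ EF := fun t => (hEd t).differentiableAt
    exact this.continuous
  -- constants
  obtain ⟨A1c, hA1c⟩ : ∃ x : ℝ, x = 2*γ*(1+1/ε+r/ε) + α^2/(ν/4) + (2*r*ν/ε)*(r^2/(12*ε)) + r*α/ε
      + (2*γ*(1+1/ε+r/ε) + α*r/ε + r/ε)*(r^2/(12*ε))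
      + ((2*γ*(1+1/ε+r/ε) + α*r/ε + r/ε)/2)^2/(ν/2) := ⟨_, rfl⟩
  obtain ⟨A2c, hA2c⟩ : ∃ x : ℝ, x = 36*δ^2/(ν/4) + 12*δ^2*(r/ε) := ⟨_, rfl⟩
  have hA1cNN : 0 ≤ A1c := by rw [hA1c]; positivity
  have hA2cNN : 0 ≤ A2c := by rw [hA2c]; positivity
  -- Lyapunov function
  obtain ⟨φ, hφ⟩ : ∃ F : ℝ → ℝ,
      F = fun s => Real.exp (2*γ*s) * (A1c * aF s + A2c * (W0F s * W1F s) * aF s) := ⟨_, rfl⟩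
  have hφC : Continuous φ := by
    rw [hφ]
    apply Continuous.mul (by continuity)
    exact ((continuous_const.mul haC).add
      ((continuous_const.mul (hW0C.mul hW1C)).mul haC))
  have hgC : Continuous (fun s => Real.exp (2*γ*s) * c2F s) := by
    apply Continuous.mul (by continuity) hc2C
  obtain ⟨G, hG⟩ : ∃ F : ℝ → ℝ,
      F = fun t => Real.exp (2*γ*t) * EF t
        + ν * (∫ s in (0:ℝ)..t, Real.exp (2*γ*s) * c2F s)
        - ∫ s in (0:ℝ)..t, φ s := ⟨_, rfl⟩
  have hGd : ∀ t, HasDerivAt G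
      ((2*γ) * Real.exp (2*γ*t) * EF t
        + Real.exp (2*γ*t) * ((∫ x in (0:ℝ)..1, 2 * px (pt w) t x * px (pt (pt w)) t x)
            + (1/ε)*(2*(BF t)*(pt (pt w) t 1))
            + (2*r/ε)*((∫ x in (0:ℝ)..1, x * pt (pt w) t x)*(BF t)
                + (XF t)*(pt (pt w) t 1)))
        + ν * (Real.exp (2*γ*t) * c2F t) - φ t) t := by
    intro t
    rw [hG]
    have h2 := (((hasDerivAt_expmul (2*γ) t).mul (hEd t)).add
      ((hasDerivAt_primitive hgC t).const_mul ν)).sub (hasDerivAt_primitive hφC t)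
    refine h2.congr_deriv ?_; ring
  -- key derivative inequality
  have hkey : ∀ t, 0 < t →
      (2*γ) * Real.exp (2*γ*t) * EF t
        + Real.exp (2*γ*t) * ((∫ x in (0:ℝ)..1, 2 * px (pt w) t x * px (pt (pt w)) t x)
            + (1/ε)*(2*(BF t)*(pt (pt w) t 1))
            + (2*r/ε)*((∫ x in (0:ℝ)..1, x * pt (pt w) t x)*(BF t)
                + (XF t)*(pt (pt w) t 1)))
        + ν * (Real.exp (2*γ*t) * c2F t) - φ t ≤ 0 := by
    intro t ht
    -- continuity of slices
    have hvc : Continuous (pt w t) := cont_slice hv.continuous t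
    have hpxvc : Continuous (px (pt w) t) := cont_slice hpxv.continuous t
    have hpxxvc : Continuous (px (px (pt w)) t) := cont_slice hpxxv.continuous t
    have huc : Continuous (pt (pt w) t) := cont_slice hu.continuous t
    have hwc : Continuous (w t) := cont_slice hw.continuous t
    have hpxwc : Continuous (px w t) := cont_slice hpxw.continuous t
    have hccc : Continuous (fun x => 3*δ*(w t x)^2 * pt w t x) := by continuity
    -- names
    obtain ⟨I1, hI1eq⟩ : ∃ x : ℝ, x = ∫ x in (0:ℝ)..1,
        (pt w t x) * (px (px (pt w)) t x) := ⟨_, rfl⟩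
    obtain ⟨I2, hI2eq⟩ : ∃ x : ℝ, x = ∫ x in (0:ℝ)..1,
        (3*δ*(w t x)^2 * pt w t x) * (px (px (pt w)) t x) := ⟨_, rfl⟩
    obtain ⟨I3, hI3eq⟩ : ∃ x : ℝ, x = ∫ x in (0:ℝ)..1,
        x * (3*δ*(w t x)^2 * pt w t x) := ⟨_, rfl⟩
    obtain ⟨PV1, hPV1eq⟩ : ∃ x : ℝ, x = px (pt w) t 1 := ⟨_, rfl⟩
    obtain ⟨U1, hU1eq⟩ : ∃ x : ℝ, x = pt (pt w) t 1 := ⟨_, rfl⟩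
    -- u vanishes at x = 0
    have hu0 : pt (pt w) t 0 = 0 := by
      show deriv (fun s => pt w s 0) t = 0
      exact deriv_zero_of_Ioi ht (fun s hs => hvbc0 s hs.le)
    -- Robin for v, at time t
    have hrob : PV1 = (-(BF t) - r*(XF t))/ε := by
      have h0 := hvrobin t ht
      rw [hPV1eq, hBF, hXF, eq_div_iff (ne_of_gt hε)]
      linear_combination h0
    -- (F1) X² ≤ a/3
    have f1 : (XF t)^2 ≤ (aF t)/3 := by
      have hcs2 : (XF t)^2 ≤ (∫ x in (0:ℝ)..1, x^2) * (aF t) := by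
        rw [hXF, haF]
        exact cs_integral continuous_id hvc (by norm_num : (0:ℝ) ≤ 1)
      rw [integral_sq_id] at hcs2
      linarith
    -- (F2) trace: B² ≤ b2
    have f2 : (BF t)^2 ≤ b2F t := by
      rw [hBF, hb2F]
      exact trace_sq_le (fun x => hasDerivAt_px hv t x) hpxvc (hvbc0 t ht.le)
    -- (F4) I1² ≤ a·c2
    have f4 : I1^2 ≤ (aF t) * (c2F t) := by
      rw [hI1eq, haF, hc2F]
      exact cs_integral hvc hpxxvc (by norm_num : (0:ℝ) ≤ 1)
    -- Agmon: pointwise (w t x)⁴ ≤ 4 W0 W1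
    have hAgmon : ∀ x ∈ Icc (0:ℝ) 1, (w t x)^4 ≤ 4 * (W0F t) * (W1F t) := by
      intro x hx
      rw [hW0F, hW1F]
      exact pointwise_quad_le (fun y => hasDerivAt_px hw t y) hpxwc
        (hwbc0 t ht.le) hwc hx
    -- ∫ (cc·v)² ≤ 36δ² W0 W1 a
    have hccv : (∫ x in (0:ℝ)..1, (3*δ*(w t x)^2 * pt w t x)^2)
        ≤ 36*δ^2*(W0F t * W1F t) * (aF t) := by
      have hles : ∀ x ∈ Icc (0:ℝ) 1, (3*δ*(w t x)^2 * pt w t x)^2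
          ≤ (36*δ^2*(W0F t * W1F t)) * (pt w t x)^2 := by
        intro x hx
        have h4 := hAgmon x hx
        have hsq : (3*δ*(w t x)^2)^2 = 9*δ^2*((w t x)^2)^2 := by ring
        have h5 : ((w t x)^2)^2 = (w t x)^4 := by ring
        nlinarith [sq_nonneg (pt w t x), sq_nonneg (w t x), sq_nonneg δ,
          mul_le_mul_of_nonneg_left h4 (mul_nonneg (by positivity : (0:ℝ) ≤ 9*δ^2)
            (sq_nonneg (pt w t x)))]
      have hmono : (∫ x in (0:ℝ)..1, (3*δ*(w t x)^2 * pt w t x)^2)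
          ≤ ∫ x in (0:ℝ)..1, (36*δ^2*(W0F t * W1F t)) * (pt w t x)^2 := by
        apply intervalIntegral.integral_mono_on (by norm_num)
          (((hccc).pow 2).intervalIntegrable _ _)
          ((continuous_const.mul (hvc.pow 2)).intervalIntegrable _ _)
        intro x hx
        exact hles x hx
      rw [intervalIntegral.integral_const_mul] at hmono
      rw [haF]
      exact hmono
    have hccvNN : 0 ≤ ∫ x in (0:ℝ)..1, (3*δ*(w t x)^2 * pt w t x)^2 :=
      intervalIntegral.integral_nonneg (by norm_num) (fun x _ => sq_nonneg _)
    -- (F5)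
    have f5 : I2^2 ≤ (36*δ^2*(W0F t * W1F t)*(aF t)) * (c2F t) := by
      have hcs3 : I2^2 ≤ (∫ x in (0:ℝ)..1, (3*δ*(w t x)^2 * pt w t x)^2) * (c2F t) := by
        rw [hI2eq, hc2F]
        exact cs_integral hccc hpxxvc (by norm_num : (0:ℝ) ≤ 1)
      calc I2^2 ≤ (∫ x in (0:ℝ)..1, (3*δ*(w t x)^2 * pt w t x)^2) * (c2F t) := hcs3
        _ ≤ (36*δ^2*(W0F t * W1F t)*(aF t)) * (c2F t) :=
            mul_le_mul_of_nonneg_right hccv (hc2NN t)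
    -- (F6)
    have f6 : I3^2 ≤ 12*δ^2*(W0F t * W1F t)*(aF t) := by
      have hcs4 : I3^2 ≤ (∫ x in (0:ℝ)..1, x^2)
          * ∫ x in (0:ℝ)..1, (3*δ*(w t x)^2 * pt w t x)^2 := by
        rw [hI3eq]
        exact cs_integral continuous_id hccc (by norm_num : (0:ℝ) ≤ 1)
      rw [integral_sq_id] at hcs4
      nlinarith [hccv, hccvNN]
    -- (F7) B2 = Bb·PV1 − I1  (IBP)
    have f7 : b2F t = (BF t)*PV1 - I1 := by
      have hIBP := intervalIntegral.integral_mul_deriv_eq_deriv_mul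
        (a := (0:ℝ)) (b := (1:ℝ))
        (u := pt w t) (u' := px (pt w) t) (v := px (pt w) t) (v' := px (px (pt w)) t)
        (fun x _ => hasDerivAt_px hv t x) (fun x _ => hasDerivAt_px hpxv t x)
        (hpxvc.intervalIntegrable _ _) (hpxxvc.intervalIntegrable _ _)
      rw [hvbc0 t ht.le] at hIBP
      have he1 : (∫ x in (0:ℝ)..1, pt w t x * px (px (pt w)) t x) = I1 := hI1eq.symm
      have he2 : (∫ x in (0:ℝ)..1, px (pt w) t x * px (pt w) t x) = b2F t := by
        rw [hb2F]; apply intervalIntegral.integral_congr; intro x _; ring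
      rw [he1, he2] at hIBP
      rw [hBF, hPV1eq]; linarith [hIBP]
    -- PDE substitution in ∫ pxxv·u
    have hsub1 : (∫ x in (0:ℝ)..1, 2 * px (pt w) t x * px (pt (pt w)) t x)
        = 2*(PV1*U1 - (ν*(c2F t) + α*I1 - I2)) := by
      -- first IBP:  ∫ pxv·(px u) = PV1·U1 − ∫ pxxv·u
      have hIBP := intervalIntegral.integral_mul_deriv_eq_deriv_mul
        (a := (0:ℝ)) (b := (1:ℝ))
        (u := px (pt w) t) (u' := px (px (pt w)) t) (v := pt (pt w) t) (v' := px (pt (pt w)) t)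
        (fun x _ => hasDerivAt_px hpxv t x) (fun x _ => hasDerivAt_px hu t x)
        (hpxxvc.intervalIntegrable _ _)
        ((cont_slice (contDiff_px hu).continuous t).intervalIntegrable _ _)
      rw [hu0, mul_zero, sub_zero] at hIBP
      -- PDE substitution inside ∫ pxxv·u
      have hsubst : (∫ x in (0:ℝ)..1, px (px (pt w)) t x * pt (pt w) t x)
          = ν*(c2F t) + α*I1 - I2 := by
        have hcongr : (∫ x in (0:ℝ)..1, px (px (pt w)) t x * pt (pt w) t x)
            = ∫ x in (0:ℝ)..1, (ν*(px (px (pt w)) t x)^2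
                + α*((pt w t x) * (px (px (pt w)) t x))
                - (3*δ*(w t x)^2 * pt w t x) * (px (px (pt w)) t x)) := by
          apply integral_congr_Ioo; intro x hx
          rw [hvpde t ht x hx]; ring
        have i1 : IntervalIntegrable (fun x => (px (px (pt w)) t x)^2) volume 0 1 :=
          (hpxxvc.pow 2).intervalIntegrable _ _
        have i2 : IntervalIntegrable (fun x => (pt w t x) * (px (px (pt w)) t x)) volume 0 1 :=
          (hvc.mul hpxxvc).intervalIntegrable _ _
        have i3 : IntervalIntegrable
            (fun x => (3*δ*(w t x)^2 * pt w t x) * (px (px (pt w)) t x)) volume 0 1 :=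
          (hccc.mul hpxxvc).intervalIntegrable _ _
        have hc2a : (∫ x in (0:ℝ)..1, (px (px (pt w)) t x)^2) = c2F t := by rw [hc2F]
        rw [hcongr, intervalIntegral.integral_sub ((i1.const_mul _).add (i2.const_mul _)) i3,
          intervalIntegral.integral_add (i1.const_mul _) (i2.const_mul _),
          intervalIntegral.integral_const_mul, intervalIntegral.integral_const_mul,
          hc2a, ← hI1eq, ← hI2eq]
      -- combine
      have he3 : (∫ x in (0:ℝ)..1, px (pt w) t x * px (pt (pt w)) t x)
          = PV1 * U1 - (ν*(c2F t) + α*I1 - I2) := by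
        rw [hIBP, hsubst, hPV1eq, hU1eq]
        all_goals ring
      have he4 : (∫ x in (0:ℝ)..1, 2 * px (pt w) t x * px (pt (pt w)) t x)
          = 2 * ∫ x in (0:ℝ)..1, px (pt w) t x * px (pt (pt w)) t x := by
        rw [← intervalIntegral.integral_const_mul]
        apply intervalIntegral.integral_congr; intro x _; ring
      rw [he4, he3]
    -- PDE substitution in ∫ x·u
    have hsub2 : (∫ x in (0:ℝ)..1, x * pt (pt w) t x)
        = ν*(PV1 - BF t) + α*(XF t) - I3 := by
      have hcongr : (∫ x in (0:ℝ)..1, x * pt (pt w) t x)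
          = ∫ x in (0:ℝ)..1, (ν*(x * px (px (pt w)) t x)
              + α*(x * pt w t x) - x * (3*δ*(w t x)^2 * pt w t x)) := by
        apply integral_congr_Ioo; intro x hx
        rw [hvpde t ht x hx]; ring
      have i1 : IntervalIntegrable (fun x => x * px (px (pt w)) t x) volume 0 1 :=
        (continuous_id.mul hpxxvc).intervalIntegrable _ _
      have i2 : IntervalIntegrable (fun x => x * pt w t x) volume 0 1 :=
        (continuous_id.mul hvc).intervalIntegrable _ _
      have i3 : IntervalIntegrable (fun x => x * (3*δ*(w t x)^2 * pt w t x)) volume 0 1 :=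
        (continuous_id.mul hccc).intervalIntegrable _ _
      have hIBPx : (∫ x in (0:ℝ)..1, x * px (px (pt w)) t x) = PV1 - BF t := by
        have hIBP := intervalIntegral.integral_mul_deriv_eq_deriv_mul
          (a := (0:ℝ)) (b := (1:ℝ))
          (u := fun x => x) (u' := fun _ => (1:ℝ)) (v := px (pt w) t) (v' := px (px (pt w)) t)
          (fun x _ => hasDerivAt_id x) (fun x _ => hasDerivAt_px hpxv t x)
          (continuous_const.intervalIntegrable _ _) (hpxxvc.intervalIntegrable _ _)
        have hFTC : (∫ x in (0:ℝ)..1, px (pt w) t x) = pt w t 1 - pt w t 0 :=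
          ftc2 (fun x => hasDerivAt_px hv t x) hpxvc 0 1
        rw [hvbc0 t ht.le, sub_zero] at hFTC
        have he5 : (∫ x in (0:ℝ)..1, (1:ℝ) * px (pt w) t x)
            = ∫ x in (0:ℝ)..1, px (pt w) t x := by
          apply intervalIntegral.integral_congr; intro x _; ring
        rw [he5, hFTC] at hIBP
        rw [hIBP, hPV1eq, hBF]; ring
      have hXFa : (∫ x in (0:ℝ)..1, x * pt w t x) = XF t := by rw [hXF]
      rw [hcongr, intervalIntegral.integral_sub ((i1.const_mul _).add (i2.const_mul _)) i3,
        intervalIntegral.integral_add (i1.const_mul _) (i2.const_mul _),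
        intervalIntegral.integral_const_mul, intervalIntegral.integral_const_mul,
        hIBPx, hXFa, ← hI3eq]
    -- boundary cancellation
    have hcancel : 2*(PV1*U1) + (1/ε)*(2*(BF t)*U1) + (2*r/ε)*((XF t)*U1) = 0 := by
      rw [hrob]; field_simp; ring
    -- apply the key algebraic inequality
    have hmain := keyIneq ν α δ r γ ε hν hα hδ hr0 hε hγ0
      (aF t) (b2F t) (c2F t) (BF t) (XF t) (W0F t) (W1F t) I1 I2 I3 PV1
      ((∫ x in (0:ℝ)..1, 2 * px (pt w) t x * px (pt (pt w)) t x)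
        + (1/ε)*(2*(BF t)*(pt (pt w) t 1))
        + (2*r/ε)*((∫ x in (0:ℝ)..1, x * pt (pt w) t x)*(BF t)
            + (XF t)*(pt (pt w) t 1)))
      (haNN t) (hb2NN t) (hc2NN t) (hW0NN t) (hW1NN t)
      f1 f2 f4 f5 f6 hrob f7 ?_
    · -- conclude
      have hEt : EF t = b2F t + (1/ε)*(BF t)^2 + (2*r/ε)*(XF t)*(BF t) := by
          simp only [hEF]; ring
      have hφt : φ t = Real.exp (2*γ*t)
          * (A1c * aF t + A2c * (W0F t * W1F t) * aF t) := by rw [hφ]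
      have hexp : (0:ℝ) < Real.exp (2*γ*t) := Real.exp_pos _
      have hfact : 2*γ*(EF t)
          + ((∫ x in (0:ℝ)..1, 2 * px (pt w) t x * px (pt (pt w)) t x)
            + (1/ε)*(2*(BF t)*(pt (pt w) t 1))
            + (2*r/ε)*((∫ x in (0:ℝ)..1, x * pt (pt w) t x)*(BF t)
                + (XF t)*(pt (pt w) t 1)))
          + ν*(c2F t) - (A1c * aF t + A2c * (W0F t * W1F t) * aF t) ≤ 0 := by
        rw [← hA1c, ← hA2c] at hmain
        rw [hEt]
        ring_nf at hmain ⊢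
        linarith [hmain]
      calc (2*γ) * Real.exp (2*γ*t) * EF t
            + Real.exp (2*γ*t) * ((∫ x in (0:ℝ)..1, 2 * px (pt w) t x * px (pt (pt w)) t x)
                + (1/ε)*(2*(BF t)*(pt (pt w) t 1))
                + (2*r/ε)*((∫ x in (0:ℝ)..1, x * pt (pt w) t x)*(BF t)
                    + (XF t)*(pt (pt w) t 1)))
            + ν * (Real.exp (2*γ*t) * c2F t) - φ t
          = Real.exp (2*γ*t) * (2*γ*(EF t)
            + ((∫ x in (0:ℝ)..1, 2 * px (pt w) t x * px (pt (pt w)) t x)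
              + (1/ε)*(2*(BF t)*(pt (pt w) t 1))
              + (2*r/ε)*((∫ x in (0:ℝ)..1, x * pt (pt w) t x)*(BF t)
                  + (XF t)*(pt (pt w) t 1)))
            + ν*(c2F t) - (A1c * aF t + A2c * (W0F t * W1F t) * aF t)) := by
            rw [hφt]; ring
        _ ≤ Real.exp (2*γ*t) * 0 := mul_le_mul_of_nonneg_left hfact hexp.le
        _ = 0 := by ring
    · -- the E' identity
      rw [hsub1, hsub2, ← hU1eq]
      linear_combination hcancel
  -- antitone argument
  have hanti : AntitoneOn G (Ici (0:ℝ)) := by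
    apply antitoneOn_of_deriv_nonpos (convex_Ici 0)
    · exact (fun t _ => ((hGd t).differentiableAt).continuousAt.continuousWithinAt)
    · intro t _
      exact ((hGd t).differentiableAt).differentiableWithinAt
    · intro t ht
      rw [interior_Ici] at ht
      rw [(hGd t).deriv]
      exact hkey t ht
  have hG0 : G 0 = EF 0 := by rw [hG]; simp
  have hGle : ∀ t, 0 ≤ t → Real.exp (2*γ*t) * EF t
      + ν * (∫ s in (0:ℝ)..t, Real.exp (2*γ*s) * c2F s)
      ≤ EF 0 + ∫ s in (0:ℝ)..t, φ s := by
    intro t ht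
    have := hanti self_mem_Ici (mem_Ici.2 ht) ht
    rw [hG0] at this
    rw [hG] at this
    simp only at this
    linarith
  -- fold the template estimates
  have hTV' : ∀ t, 0 ≤ t → Real.exp ((2*γ + ν*r^2/ε)*t) * aF t
      + (ν*r^2/(12*ε)) * (∫ s in (0:ℝ)..t, Real.exp ((2*γ + ν*r^2/ε)*s) * b2F s)
      ≤ aF 0 := by
    intro t ht; simp only [haF, hb2F]; exact hTV t ht
  have hTW' : ∀ t, 0 ≤ t → Real.exp ((2*γ + ν*r^2/ε)*t) * W0F t
      + (ν*r^2/(12*ε)) * (∫ s in (0:ℝ)..t, Real.exp ((2*γ + ν*r^2/ε)*s) * W1F s)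
      ≤ W0F 0 := by
    intro t ht; simp only [hW0F, hW1F]; exact hTW t ht
  have hθc : (0:ℝ) < ν*r^2/ε := by positivity
  have hκc : (0:ℝ) < ν*r^2/(12*ε) := by positivity
  have hIntNN1 : ∀ t, 0 ≤ t →
      0 ≤ ∫ s in (0:ℝ)..t, Real.exp ((2*γ + ν*r^2/ε)*s) * b2F s := fun t ht =>
    intervalIntegral.integral_nonneg ht
      (fun s _ => mul_nonneg (Real.exp_pos _).le (hb2NN s))
  have hIntNN2 : ∀ t, 0 ≤ t →
      0 ≤ ∫ s in (0:ℝ)..t, Real.exp ((2*γ + ν*r^2/ε)*s) * W1F s := fun t ht =>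
    intervalIntegral.integral_nonneg ht
      (fun s _ => mul_nonneg (Real.exp_pos _).le (hW1NN s))
  have pTV : ∀ s, 0 ≤ s → Real.exp ((2*γ + ν*r^2/ε)*s) * aF s ≤ aF 0 := by
    intro s hs
    have h1 := hTV' s hs
    have h2 := mul_nonneg hκc.le (hIntNN1 s hs)
    linarith
  have pTW : ∀ s, 0 ≤ s → Real.exp ((2*γ + ν*r^2/ε)*s) * W0F s ≤ W0F 0 := by
    intro s hs
    have h1 := hTW' s hs
    have h2 := mul_nonneg hκc.le (hIntNN2 s hs)
    linarith
  have hone : ∀ s, 0 ≤ s → (1:ℝ) ≤ Real.exp ((2*γ + ν*r^2/ε)*s) := by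
    intro s hs
    rw [show (1:ℝ) = Real.exp 0 by simp]
    exact Real.exp_le_exp.mpr (mul_nonneg (by positivity) hs)
  have p2 : ∀ s, 0 ≤ s → W0F s ≤ W0F 0 := by
    intro s hs
    nlinarith [mul_le_mul_of_nonneg_left (hone s hs) (hW0NN s), pTW s hs]
  have p3 : ∀ s, 0 ≤ s → aF s ≤ aF 0 := by
    intro s hs
    nlinarith [mul_le_mul_of_nonneg_left (hone s hs) (haNN s), pTV s hs]
  have p1 : ∀ s, 0 ≤ s → Real.exp (2*γ*s) * aF s ≤ aF 0 * Real.exp (-(ν*r^2/ε)*s) := by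
    intro s hs
    have h1 := mul_le_mul_of_nonneg_right (pTV s hs) (Real.exp_pos (-(ν*r^2/ε)*s)).le
    have h2 : Real.exp ((2*γ + ν*r^2/ε)*s) * Real.exp (-(ν*r^2/ε)*s) = Real.exp (2*γ*s) := by
      rw [← Real.exp_add]; congr 1; ring
    calc Real.exp (2*γ*s) * aF s
        = Real.exp ((2*γ + ν*r^2/ε)*s) * aF s * Real.exp (-(ν*r^2/ε)*s) := by
          rw [← h2]; ring
      _ ≤ aF 0 * Real.exp (-(ν*r^2/ε)*s) := h1
  have pae : ∀ s, 0 ≤ s → Real.exp (2*γ*s) * aF s ≤ aF 0 := by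
    intro s hs
    have h3 : Real.exp (2*γ*s) ≤ Real.exp ((2*γ + ν*r^2/ε)*s) :=
      Real.exp_le_exp.mpr (by nlinarith [mul_nonneg hθc.le hs])
    nlinarith [mul_le_mul_of_nonneg_right h3 (haNN s), pTV s hs]
  have p4 : ∀ t, 0 ≤ t → (∫ s in (0:ℝ)..t, Real.exp (2*γ*s) * W1F s)
      ≤ W0F 0 / (ν*r^2/(12*ε)) := by
    intro t ht
    have h1 := hTW' t ht
    have h2 : 0 ≤ Real.exp ((2*γ + ν*r^2/ε)*t) * W0F t :=
      mul_nonneg (Real.exp_pos _).le (hW0NN t)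
    have h3 : (ν*r^2/(12*ε)) * (∫ s in (0:ℝ)..t, Real.exp ((2*γ + ν*r^2/ε)*s) * W1F s)
        ≤ W0F 0 := by linarith
    have h4 : (∫ s in (0:ℝ)..t, Real.exp (2*γ*s) * W1F s)
        ≤ ∫ s in (0:ℝ)..t, Real.exp ((2*γ + ν*r^2/ε)*s) * W1F s := by
      apply intervalIntegral.integral_mono_on ht
        (((Real.continuous_exp.comp (by continuity)).mul hW1C).intervalIntegrable _ _)
        (((Real.continuous_exp.comp (by continuity)).mul hW1C).intervalIntegrable _ _)
      intro s hs
      have h5 : Real.exp (2*γ*s) ≤ Real.exp ((2*γ + ν*r^2/ε)*s) :=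
        Real.exp_le_exp.mpr (by nlinarith [mul_nonneg hθc.le hs.1])
      exact mul_le_mul_of_nonneg_right h5 (hW1NN s)
    rw [le_div_iff₀ hκc]
    nlinarith [h4]
  -- bound on the source integral
  have hΦ : ∀ t, 0 ≤ t → (∫ s in (0:ℝ)..t, φ s)
      ≤ (A1c*(aF 0))*(1/(ν*r^2/ε))
        + (A2c*((W0F 0)*(aF 0)))*(W0F 0/(ν*r^2/(12*ε))) := by
    intro t ht
    have hmaj : ∀ s ∈ Icc (0:ℝ) t, φ s
        ≤ (A1c*(aF 0))*Real.exp (-(ν*r^2/ε)*s)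
          + (A2c*((W0F 0)*(aF 0)))*(Real.exp (2*γ*s)*W1F s) := by
      intro s hs
      have hs0 : 0 ≤ s := hs.1
      have hφs : φ s = A1c*(Real.exp (2*γ*s)*aF s)
          + A2c*(Real.exp (2*γ*s)*(W0F s * W1F s)*aF s) := by rw [hφ]; ring
      have hb1 : A1c*(Real.exp (2*γ*s)*aF s) ≤ A1c*(aF 0*Real.exp (-(ν*r^2/ε)*s)) :=
        mul_le_mul_of_nonneg_left (p1 s hs0) hA1cNN
      have hb2' : Real.exp (2*γ*s)*(W0F s*W1F s)*aF s
          ≤ (W0F 0)*(aF 0)*(Real.exp (2*γ*s)*W1F s) := by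
        have hq : W0F s * aF s ≤ W0F 0 * aF 0 :=
          mul_le_mul (p2 s hs0) (p3 s hs0) (haNN s) (hW0NN 0)
        have hnn : 0 ≤ Real.exp (2*γ*s) * W1F s :=
          mul_nonneg (Real.exp_pos _).le (hW1NN s)
        calc Real.exp (2*γ*s)*(W0F s*W1F s)*aF s
            = (Real.exp (2*γ*s)*W1F s) * (W0F s * aF s) := by ring
          _ ≤ (Real.exp (2*γ*s)*W1F s) * (W0F 0 * aF 0) := mul_le_mul_of_nonneg_left hq hnn
          _ = (W0F 0)*(aF 0)*(Real.exp (2*γ*s)*W1F s) := by ring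
      have hb2 : A2c*(Real.exp (2*γ*s)*(W0F s*W1F s)*aF s)
          ≤ A2c*((W0F 0)*(aF 0)*(Real.exp (2*γ*s)*W1F s)) :=
        mul_le_mul_of_nonneg_left hb2' hA2cNN
      rw [hφs]
      ring_nf at hb1 hb2 ⊢
      linarith [hb1, hb2]
    have i1 : IntervalIntegrable (fun s => (A1c*(aF 0))*Real.exp (-(ν*r^2/ε)*s)) volume 0 t :=
      (continuous_const.mul (Real.continuous_exp.comp (by continuity))).intervalIntegrable _ _
    have i2 : IntervalIntegrable
        (fun s => (A2c*((W0F 0)*(aF 0)))*(Real.exp (2*γ*s)*W1F s)) volume 0 t :=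
      (continuous_const.mul ((Real.continuous_exp.comp (by continuity)).mul hW1C)).intervalIntegrable _ _
    have hint : (∫ s in (0:ℝ)..t, φ s) ≤ ∫ s in (0:ℝ)..t,
        ((A1c*(aF 0))*Real.exp (-(ν*r^2/ε)*s)
          + (A2c*((W0F 0)*(aF 0)))*(Real.exp (2*γ*s)*W1F s)) := by
      apply intervalIntegral.integral_mono_on ht (hφC.intervalIntegrable _ _)
        (i1.add i2) hmaj
    have hsplit : (∫ s in (0:ℝ)..t,
        ((A1c*(aF 0))*Real.exp (-(ν*r^2/ε)*s)
          + (A2c*((W0F 0)*(aF 0)))*(Real.exp (2*γ*s)*W1F s)))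
        = (A1c*(aF 0))*(∫ s in (0:ℝ)..t, Real.exp (-(ν*r^2/ε)*s))
          + (A2c*((W0F 0)*(aF 0)))*(∫ s in (0:ℝ)..t, Real.exp (2*γ*s)*W1F s) := by
      rw [intervalIntegral.integral_add i1 i2,
        intervalIntegral.integral_const_mul, intervalIntegral.integral_const_mul]
    have hb3 : (A1c*(aF 0))*(∫ s in (0:ℝ)..t, Real.exp (-(ν*r^2/ε)*s))
        ≤ (A1c*(aF 0))*(1/(ν*r^2/ε)) :=
      mul_le_mul_of_nonneg_left (integral_exp_neg_le hθc ht)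
        (mul_nonneg hA1cNN (haNN 0))
    have hb4 : (A2c*((W0F 0)*(aF 0)))*(∫ s in (0:ℝ)..t, Real.exp (2*γ*s)*W1F s)
        ≤ (A2c*((W0F 0)*(aF 0)))*(W0F 0/(ν*r^2/(12*ε))) :=
      mul_le_mul_of_nonneg_left (p4 t ht)
        (mul_nonneg hA2cNN (mul_nonneg (hW0NN 0) (haNN 0)))
    rw [hsplit] at hint
    linarith [hint, hb3, hb4]
  -- the master bound
  obtain ⟨S', hS'def⟩ : ∃ x : ℝ, x = EF 0 + ((A1c*(aF 0))*(1/(ν*r^2/ε))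
      + (A2c*((W0F 0)*(aF 0)))*(W0F 0/(ν*r^2/(12*ε)))) := ⟨_, rfl⟩
  have hS' : ∀ t, 0 ≤ t → Real.exp (2*γ*t)*EF t
      + ν*(∫ s in (0:ℝ)..t, Real.exp (2*γ*s)*c2F s) ≤ S' := by
    intro t ht
    rw [hS'def]
    linarith [hGle t ht, hΦ t ht]
  -- conclusion
  refine ⟨2*S' + (4*r^2/(3*ε))*(aF 0), ?_⟩
  intro t ht
  have hgb2 : (∫ x in (0:ℝ)..1, (px (pt w) t x)^2) = b2F t := by rw [hb2F]
  have hgB : pt w t 1 = BF t := by rw [hBF]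
  have hgI : (∫ s in (0:ℝ)..t, Real.exp (2*γ*s) * ∫ x in (0:ℝ)..1, (px (px (pt w)) s x)^2)
      = ∫ s in (0:ℝ)..t, Real.exp (2*γ*s) * c2F s := by simp only [hc2F]
  rw [hgb2, hgB, hgI]
  obtain ⟨Iv, hIvdef⟩ : ∃ x : ℝ, x = ∫ s in (0:ℝ)..t, Real.exp (2*γ*s)*c2F s := ⟨_, rfl⟩
  rw [← hIvdef]
  have hIvNN : 0 ≤ Iv := by
    rw [hIvdef]
    exact intervalIntegral.integral_nonneg ht
      (fun s _ => mul_nonneg (Real.exp_pos _).le (hc2NN s))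
  have hX2 : (XF t)^2 ≤ aF t/3 := by
    have hvc : Continuous (pt w t) := cont_slice hv.continuous t
    have hcs2 : (XF t)^2 ≤ (∫ x in (0:ℝ)..1, x^2) * (aF t) := by
      rw [hXF, haF]
      exact cs_integral continuous_id hvc (by norm_num : (0:ℝ) ≤ 1)
    rw [integral_sq_id] at hcs2
    linarith
  have hq1 : b2F t + (1/ε)*(BF t)^2 ≤ 2*EF t + (4*r^2/(3*ε))*(aF t) := by
    have h1 : 0 ≤ (1/ε)*(BF t + 2*r*XF t)^2 := by positivity
    have h2 : (4*r^2/ε)*(XF t)^2 ≤ (4*r^2/ε)*(aF t/3) :=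
      mul_le_mul_of_nonneg_left hX2 (by positivity)
    have hEt2 : EF t = b2F t + (1/ε)*(BF t)^2 + (2*r/ε)*(XF t*BF t) := by simp only [hEF]
    rw [hEt2]
    ring_nf at h1 h2 ⊢
    linarith [h1, h2, hb2NN t]
  have he2 : (0:ℝ) < Real.exp (2*γ*t) := Real.exp_pos _
  have hexpneg : Real.exp (-(2*γ)*t) = (Real.exp (2*γ*t))⁻¹ := by
    rw [← Real.exp_neg]; ring_nf
  rw [hexpneg]
  have h9 : Real.exp (2*γ*t)*EF t + ν*Iv ≤ S' := by
    rw [hIvdef]; exact hS' t ht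
  have h8 : Real.exp (2*γ*t)*(b2F t + (1/ε)*(BF t)^2)
      ≤ Real.exp (2*γ*t)*(2*EF t + (4*r^2/(3*ε))*(aF t)) :=
    mul_le_mul_of_nonneg_left hq1 he2.le
  have h10 := pae t ht
  have h11 : Real.exp (2*γ*t)*((4*r^2/(3*ε))*(aF t)) ≤ (4*r^2/(3*ε))*(aF 0) := by
    have h12 := mul_le_mul_of_nonneg_left h10 (by positivity : (0:ℝ) ≤ 4*r^2/(3*ε))
    ring_nf at h12 ⊢
    linarith [h12]
  have h7 : Real.exp (2*γ*t)*(b2F t + (1/ε)*(BF t)^2) + ν*Iv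
      ≤ 2*S' + (4*r^2/(3*ε))*(aF 0) := by
    have h13 := mul_nonneg hν.le hIvNN
    ring_nf at h8 h9 h11 ⊢
    linarith [h8, h9, h11, h13]
  have h14 := mul_le_mul_of_nonneg_left h7 (inv_nonneg.2 he2.le)
  have h15 : (Real.exp (2*γ*t))⁻¹ * (Real.exp (2*γ*t)*(b2F t + (1/ε)*(BF t)^2) + ν*Iv)
      = b2F t + (1/ε)*(BF t)^2 + ν*(Real.exp (2*γ*t))⁻¹*Iv := by
    field_simp
  rw [h15] at h14
  linarith [h14]


end LevelD

end PWXT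

theorem penalized_wxt_stabilization
    (ν α δ r γ ε : ℝ) (w : ℝ → ℝ → ℝ)
    (hν : 0 < ν) (hα : 0 < α) (hδ : 0 < δ) (hr0 : 0 < r) (hε : 0 < ε)
    -- smooth classical solution (C^∞ up to the boundary)
    (hsmooth : ContDiff ℝ (⊤ : ℕ∞) (Function.uncurry w))
    -- penalized Chafee–Infante equation w_t = ν w_xx + α w − δ w³ on (0,∞) × (0,1)
    (hpde : ∀ t > (0:ℝ), ∀ x ∈ Set.Ioo (0:ℝ) 1,
      dt1 w t x = ν * dxx w t x + α * w t x - δ * (w t x)^3)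
    -- boundary conditions: w(t,0) = 0 and Robin condition ε w_x(t,1) + w(t,1) = u^ε(t)
    (hbc0 : ∀ t ≥ (0:ℝ), w t 0 = 0)
    (hrobin : ∀ t > (0:ℝ), ε * dx w t 1 + w t 1 = -r * xInner (w t))
    -- Assumption (A1)
    (hA1a : r^2 < 3*ε)
    (hA1b : α / ν ≤ 2 * (3*ε - r^2) / (3*ε))
    (hγ0 : 0 < γ) (hγ : γ ≤ 2*ν - 2*ν*r^2/(3*ε) - α) :
    ∃ C > (0:ℝ), ∀ t ≥ (0:ℝ),
      L2sq (dxt w t)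
        + ν * Real.exp (-2*γ*t) * (∫ s in (0:ℝ)..t, Real.exp (2*γ*s) * L2sq (dxxt w s))
        + (1/ε) * (dt1 w t 1)^2
      ≤ C * Real.exp (-2*γ*t) * (HkSq 3 (w 0) + L2sq (w 0) + L4q (w 0)) := by
  classical
  -- bridge to the pt/px formulation
  have hdxx : ∀ t x, dxx w t x = PWXT.px (PWXT.px w) t x := by
    intro t x
    show iteratedDeriv 2 (w t) x = _
    rw [iteratedDeriv_succ, iteratedDeriv_one]
    rfl
  have hpde' : ∀ t, 0 < t → ∀ x ∈ Set.Ioo (0:ℝ) 1,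
      PWXT.pt w t x = ν * PWXT.px (PWXT.px w) t x + α * w t x - δ * (w t x)^3 := by
    intro t ht x hx
    have h := hpde t ht x hx
    rw [hdxx] at h
    exact h
  have hrobin' : ∀ t, 0 < t →
      ε * PWXT.px w t 1 + w t 1 = -r * ∫ x in (0:ℝ)..1, x * w t x := by
    intro t ht
    exact hrobin t ht
  have hbc0' : ∀ t, 0 ≤ t → w t 0 = 0 := fun t ht => hbc0 t ht
  have hγ' : 2*γ ≤ 4*ν - 4*ν*r^2/(3*ε) - 2*α := by
    have he : 4*ν*r^2/(3*ε) = 2*(2*ν*r^2/(3*ε)) := by ring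
    linarith [hγ]
  -- L² estimate for w
  have hccW : Continuous (Function.uncurry (fun t x => δ*(w t x)^2)) := by
    have he : Function.uncurry (fun t x => δ*(w t x)^2)
        = fun p : ℝ × ℝ => δ * (Function.uncurry w p)^2 := rfl
    rw [he]
    exact continuous_const.mul (hsmooth.continuous.pow 2)
  have hTW := PWXT.L2_template ν α r γ ε w (fun t x => δ*(w t x)^2) hν hα hr0 hε hsmooth
    hccW
    (fun t _ x _ => mul_nonneg hδ.le (sq_nonneg _))
    (fun t ht x hx => by rw [hpde' t ht x hx]; ring)
    hbc0' hrobin' hγ0 hγ'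
  -- transported hypotheses for v = ∂ₜw
  have hvbc0 : ∀ t, 0 ≤ t → PWXT.pt w t 0 = 0 := by
    intro t ht
    rcases eq_or_lt_of_le ht with h0 | hp
    · rw [← h0]
      show deriv (fun s => w s 0) 0 = 0
      exact PWXT.deriv_zero_of_Ici
        ((PWXT.hasDerivAt_pt hsmooth 0 0).differentiableAt)
        (fun s hs => hbc0' s hs)
    · show deriv (fun s => w s 0) t = 0
      exact PWXT.deriv_zero_of_Ioi hp (fun s hs => hbc0' s hs.le)
  have hvpde : ∀ t, 0 < t → ∀ x ∈ Set.Ioo (0:ℝ) 1,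
      PWXT.pt (PWXT.pt w) t x = ν * PWXT.px (PWXT.px (PWXT.pt w)) t x
        + α * PWXT.pt w t x - 3*δ*(w t x)^2 * PWXT.pt w t x := by
    intro t ht x hx
    have hL : deriv (fun s => PWXT.pt w s x) t
        = deriv (fun s => ν * PWXT.px (PWXT.px w) s x + α * w s x - δ * (w s x)^3) t :=
      PWXT.deriv_congr_Ioi ht (fun s hs => hpde' s hs x hx)
    have hR : HasDerivAt (fun s => ν * PWXT.px (PWXT.px w) s x + α * w s x - δ * (w s x)^3)
        (ν * PWXT.pt (PWXT.px (PWXT.px w)) t x + α * PWXT.pt w t x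
          - δ * (3*(w t x)^2 * PWXT.pt w t x)) t := by
      have h1 := (PWXT.hasDerivAt_pt (PWXT.contDiff_px (PWXT.contDiff_px hsmooth)) t x).const_mul ν
      have h2 := (PWXT.hasDerivAt_pt hsmooth t x).const_mul α
      have h3 := ((PWXT.hasDerivAt_pt hsmooth t x).pow 3).const_mul δ
      norm_num at h3
      refine ((h1.add h2).sub h3).congr_deriv ?_; ring
    have hswap : PWXT.pt (PWXT.px (PWXT.px w)) t x = PWXT.px (PWXT.px (PWXT.pt w)) t x := by
      have e1 : PWXT.pt (PWXT.px (PWXT.px w)) = PWXT.px (PWXT.pt (PWXT.px w)) :=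
        PWXT.swap_pt_px (PWXT.contDiff_px hsmooth)
      have e2 : PWXT.pt (PWXT.px w) = PWXT.px (PWXT.pt w) := PWXT.swap_pt_px hsmooth
      rw [e1, e2]
    calc PWXT.pt (PWXT.pt w) t x = deriv (fun s => PWXT.pt w s x) t := rfl
      _ = deriv (fun s => ν * PWXT.px (PWXT.px w) s x + α * w s x - δ * (w s x)^3) t := hL
      _ = ν * PWXT.pt (PWXT.px (PWXT.px w)) t x + α * PWXT.pt w t x
          - δ * (3*(w t x)^2 * PWXT.pt w t x) := hR.deriv
      _ = ν * PWXT.px (PWXT.px (PWXT.pt w)) t x + α * PWXT.pt w t x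
          - 3*δ*(w t x)^2 * PWXT.pt w t x := by rw [hswap]; ring
  have hvrobin : ∀ t, 0 < t → ε * PWXT.px (PWXT.pt w) t 1 + PWXT.pt w t 1
      = -r * ∫ x in (0:ℝ)..1, x * PWXT.pt w t x := by
    intro t ht
    have hxw : ContDiff ℝ (⊤ : ℕ∞) (Function.uncurry (fun t x => x * w t x)) := by
      have he : Function.uncurry (fun t x => x * w t x)
          = fun p : ℝ × ℝ => p.2 * Function.uncurry w p := rfl
      rw [he]; exact contDiff_snd.mul hsmooth
    have hFd : HasDerivAt
        (fun s => ε * PWXT.px w s 1 + w s 1 + r * ∫ x in (0:ℝ)..1, x * w s x)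
        (ε * PWXT.pt (PWXT.px w) t 1 + PWXT.pt w t 1
          + r * ∫ x in (0:ℝ)..1, x * PWXT.pt w t x) t := by
      have h1 := (PWXT.hasDerivAt_pt (PWXT.contDiff_px hsmooth) t 1).const_mul ε
      have h2 := PWXT.hasDerivAt_pt hsmooth t 1
      have h3 := (PWXT.hasDerivAt_param hxw t).const_mul r
      have he : (∫ x in (0:ℝ)..1, PWXT.pt (fun t x => x * w t x) t x)
          = ∫ x in (0:ℝ)..1, x * PWXT.pt w t x := by
        apply intervalIntegral.integral_congr; intro x _
        have h4 := ((PWXT.hasDerivAt_pt hsmooth t x).const_mul x).deriv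
        show deriv (fun s => x * w s x) t = _
        rw [h4]
      rw [he] at h3
      exact (h1.add h2).add h3
    have hzero : deriv (fun s => ε * PWXT.px w s 1 + w s 1
        + r * ∫ x in (0:ℝ)..1, x * w s x) t = 0 :=
      PWXT.deriv_zero_of_Ioi ht (fun s hs => by
        have := hrobin' s hs; linarith)
    have hval : ε * PWXT.pt (PWXT.px w) t 1 + PWXT.pt w t 1
        + r * ∫ x in (0:ℝ)..1, x * PWXT.pt w t x = 0 := by
      rw [← hFd.deriv]; exact hzero
    have hswap2 : PWXT.pt (PWXT.px w) t 1 = PWXT.px (PWXT.pt w) t 1 := by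
      rw [PWXT.swap_pt_px hsmooth]
    rw [hswap2] at hval
    linarith
  -- L² estimate for v
  have hccV : Continuous (Function.uncurry (fun t x => 3*δ*(w t x)^2)) := by
    have he : Function.uncurry (fun t x => 3*δ*(w t x)^2)
        = fun p : ℝ × ℝ => 3*δ * (Function.uncurry w p)^2 := rfl
    rw [he]
    exact continuous_const.mul (hsmooth.continuous.pow 2)
  have hTV := PWXT.L2_template ν α r γ ε (PWXT.pt w) (fun t x => 3*δ*(w t x)^2)
    hν hα hr0 hε (PWXT.contDiff_pt hsmooth) hccV
    (fun t _ x _ => by positivity)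
    (fun t ht x hx => hvpde t ht x hx)
    hvbc0 hvrobin hγ0 hγ'
  -- the H¹ estimate
  obtain ⟨S, hS⟩ := PWXT.levelD ν α δ r γ ε w hν hα hδ hr0 hε hγ0 hsmooth
    hbc0' hvpde hvbc0 hvrobin hTW hTV
  -- nonnegativity of the data norms
  have hHkNN : 0 ≤ HkSq 3 (w 0) :=
    Finset.sum_nonneg (fun i _ =>
      intervalIntegral.integral_nonneg (by norm_num) (fun x _ => sq_nonneg _))
  have hL2NN : 0 ≤ L2sq (w 0) :=
    intervalIntegral.integral_nonneg (by norm_num) (fun x _ => sq_nonneg _)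
  have hL4NN : 0 ≤ L4q (w 0) :=
    intervalIntegral.integral_nonneg (by norm_num) (fun x _ => by positivity)
  -- goal-shape conversions
  have hgoal1 : ∀ t, L2sq (dxt w t) = ∫ x in (0:ℝ)..1, (PWXT.px (PWXT.pt w) t x)^2 :=
    fun t => rfl
  have hgoal3 : ∀ t, dt1 w t 1 = PWXT.pt w t 1 := fun t => rfl
  have hgoal2 : ∀ s, L2sq (dxxt w s)
      = ∫ x in (0:ℝ)..1, (PWXT.px (PWXT.px (PWXT.pt w)) s x)^2 := by
    intro s
    apply intervalIntegral.integral_congr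
    intro x _
    show (dxxt w s x)^2 = (PWXT.px (PWXT.px (PWXT.pt w)) s x)^2
    have hxx : dxxt w s x = PWXT.px (PWXT.px (PWXT.pt w)) s x := by
      show iteratedDeriv 2 (dt1 w s) x = _
      rw [iteratedDeriv_succ, iteratedDeriv_one]
      rfl
    rw [hxx]
  have hmaster : ∀ t, 0 ≤ t → L2sq (dxt w t)
      + ν * Real.exp (-2*γ*t) * (∫ s in (0:ℝ)..t, Real.exp (2*γ*s) * L2sq (dxxt w s))
      + (1/ε) * (dt1 w t 1)^2 ≤ Real.exp (-2*γ*t) * S := by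
    intro t ht
    have h := hS t ht
    have hexpa : Real.exp (-2*γ*t) = Real.exp (-(2*γ)*t) := by congr 1; ring
    rw [hexpa, hgoal1 t, hgoal3 t]
    have hI : (∫ s in (0:ℝ)..t, Real.exp (2*γ*s) * L2sq (dxxt w s))
        = ∫ s in (0:ℝ)..t, Real.exp (2*γ*s)
            * ∫ x in (0:ℝ)..1, (PWXT.px (PWXT.px (PWXT.pt w)) s x)^2 := by
      apply intervalIntegral.integral_congr; intro s _
      show Real.exp (2*γ*s) * L2sq (dxxt w s) = _
      rw [hgoal2 s]
    rw [hI]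
    exact h
  -- case split on the data norm
  rcases eq_or_lt_of_le (add_nonneg (add_nonneg hHkNN hL2NN) hL4NN) with hzero | hpos
  · -- vanishing data
    refine ⟨1, one_pos, ?_⟩
    intro t ht
    have hw00 : (∫ x in (0:ℝ)..1, (w 0 x)^2) = 0 := by
      have : L2sq (w 0) = 0 := le_antisymm (by linarith) hL2NN
      exact this
    have hwz : ∀ s, 0 ≤ s → ∀ x ∈ Set.Icc (0:ℝ) 1, w s x = 0 := by
      intro s hs x hx
      have h1 := hTW s hs
      rw [hw00] at h1
      have hIk : 0 ≤ (ν*r^2/(12*ε)) * (∫ u in (0:ℝ)..s,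
          Real.exp ((2*γ + ν*r^2/ε)*u) * ∫ x in (0:ℝ)..1, (PWXT.px w u x)^2) :=
        mul_nonneg (by positivity)
          (intervalIntegral.integral_nonneg hs (fun u _ =>
            mul_nonneg (Real.exp_pos _).le
              (intervalIntegral.integral_nonneg (by norm_num) (fun x _ => sq_nonneg _))))
      have hWn : 0 ≤ ∫ x in (0:ℝ)..1, (w s x)^2 :=
        intervalIntegral.integral_nonneg (by norm_num) (fun x _ => sq_nonneg _)
      have hWz : (∫ x in (0:ℝ)..1, (w s x)^2) = 0 := by
        by_contra hne
        have hWp : 0 < ∫ x in (0:ℝ)..1, (w s x)^2 := lt_of_le_of_ne hWn (Ne.symm hne)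
        have := mul_pos (Real.exp_pos ((2*γ + ν*r^2/ε)*s)) hWp
        linarith
      have hsq := PWXT.eq_zero_of_integral_zero
        ((PWXT.cont_slice hsmooth.continuous s).pow 2)
        (fun x => sq_nonneg _) hWz hx
      exact (pow_eq_zero_iff (by norm_num : (2:ℕ) ≠ 0)).mp hsq
    have hvz : ∀ s, 0 ≤ s → ∀ x ∈ Set.Icc (0:ℝ) 1, PWXT.pt w s x = 0 := by
      intro s hs x hx
      rcases eq_or_lt_of_le hs with h0 | hp
      · rw [← h0]
        show deriv (fun u => w u x) 0 = 0
        exact PWXT.deriv_zero_of_Ici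
          ((PWXT.hasDerivAt_pt hsmooth 0 x).differentiableAt)
          (fun u hu => hwz u hu x hx)
      · show deriv (fun u => w u x) s = 0
        exact PWXT.deriv_zero_of_Ioi hp (fun u hu => hwz u hu.le x hx)
    have hpxvz : ∀ s, 0 ≤ s → ∀ x ∈ Set.Ioo (0:ℝ) 1, PWXT.px (PWXT.pt w) s x = 0 := by
      intro s hs x hx
      have hev : (PWXT.pt w s) =ᶠ[nhds x] (fun _ => (0:ℝ)) :=
        Filter.eventually_of_mem (isOpen_Ioo.mem_nhds hx)
          (fun y hy => hvz s hs y (Set.Ioo_subset_Icc_self hy))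
      show deriv (PWXT.pt w s) x = 0
      rw [hev.deriv_eq, deriv_const]
    have hpxxvz : ∀ s, 0 ≤ s → ∀ x ∈ Set.Ioo (0:ℝ) 1,
        PWXT.px (PWXT.px (PWXT.pt w)) s x = 0 := by
      intro s hs x hx
      have hev : (PWXT.px (PWXT.pt w) s) =ᶠ[nhds x] (fun _ => (0:ℝ)) :=
        Filter.eventually_of_mem (isOpen_Ioo.mem_nhds hx)
          (fun y hy => hpxvz s hs y hy)
      show deriv (PWXT.px (PWXT.pt w) s) x = 0
      rw [hev.deriv_eq, deriv_const]
    have hterm1 : L2sq (dxt w t) = 0 := by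
      rw [hgoal1 t, PWXT.integral_congr_Ioo
        (g := fun _ => (0:ℝ))
        (fun x hx => by rw [hpxvz t ht x hx]; norm_num)]
      simp
    have hterm2 : (∫ s in (0:ℝ)..t, Real.exp (2*γ*s) * L2sq (dxxt w s)) = 0 := by
      have he : ∀ s ∈ Set.uIcc (0:ℝ) t, Real.exp (2*γ*s) * L2sq (dxxt w s)
          = (fun _ => (0:ℝ)) s := by
        intro s hs
        rw [Set.uIcc_of_le ht] at hs
        have hz : L2sq (dxxt w s) = 0 := by
          rw [hgoal2 s, PWXT.integral_congr_Ioo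
            (g := fun _ => (0:ℝ))
            (fun x hx => by rw [hpxxvz s hs.1 x hx]; norm_num)]
          simp
        simp [hz]
      rw [intervalIntegral.integral_congr he]
      simp
    have hterm3 : dt1 w t 1 = 0 := hvz t ht 1 (by norm_num)
    rw [hterm1, hterm2, hterm3, ← hzero]
    norm_num
  · -- nonvanishing data
    refine ⟨max 1 ((S+1)/(HkSq 3 (w 0) + L2sq (w 0) + L4q (w 0))),
      lt_of_lt_of_le one_pos (le_max_left _ _), ?_⟩
    intro t ht
    have hCb : S ≤ max 1 ((S+1)/(HkSq 3 (w 0) + L2sq (w 0) + L4q (w 0)))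
        * (HkSq 3 (w 0) + L2sq (w 0) + L4q (w 0)) := by
      have h1 : (S+1)/(HkSq 3 (w 0) + L2sq (w 0) + L4q (w 0))
          ≤ max 1 ((S+1)/(HkSq 3 (w 0) + L2sq (w 0) + L4q (w 0))) := le_max_right _ _
      have h2 := (div_le_iff₀ hpos).mp h1
      linarith
    calc L2sq (dxt w t)
          + ν * Real.exp (-2*γ*t) * (∫ s in (0:ℝ)..t, Real.exp (2*γ*s) * L2sq (dxxt w s))
          + (1/ε) * (dt1 w t 1)^2
        ≤ Real.exp (-2*γ*t) * S := hmaster t ht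
      _ ≤ Real.exp (-2*γ*t) * (max 1 ((S+1)/(HkSq 3 (w 0) + L2sq (w 0) + L4q (w 0)))
            * (HkSq 3 (w 0) + L2sq (w 0) + L4q (w 0))) :=
          mul_le_mul_of_nonneg_left hCb (Real.exp_pos _).le
      _ = max 1 ((S+1)/(HkSq 3 (w 0) + L2sq (w 0) + L4q (w 0)))
            * Real.exp (-2*γ*t) * (HkSq 3 (w 0) + L2sq (w 0) + L4q (w 0)) := by ring
end

section
/- There exists a constant C > 0 (depending on ν, α, δ, r, γ, ε and on y₀, but not on t) such that for all t ≥ 0: ν ‖y^ε_{xx}(t)‖² ≤ C e^{−2γt} ‖y₀‖₂². -/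
open MeasureTheory intervalIntegral Real Function ContDiff

namespace PW

/-- working smoothness class -/
def Sm (f : ℝ → ℝ → ℝ) : Prop := ContDiff ℝ ∞ (uncurry f)

variable {f : ℝ → ℝ → ℝ}

theorem one_le_inf : (∞ : WithTop ℕ∞) ≠ 0 := by simp

noncomputable def Dx (f : ℝ → ℝ → ℝ) : ℝ → ℝ → ℝ := fun t x => deriv (f t) x
noncomputable def Dt (f : ℝ → ℝ → ℝ) : ℝ → ℝ → ℝ := fun t x => deriv (fun s => f s x) t

theorem hasDerivAt_sect2 (hf : Sm f) (t x : ℝ) :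
    HasDerivAt (f t) (fderiv ℝ (uncurry f) (t, x) (0, 1)) x := by
  have h1 : HasDerivAt (fun x : ℝ => (t, x)) ((0 : ℝ), (1 : ℝ)) x :=
    (hasDerivAt_const x t).prodMk (hasDerivAt_id x)
  exact ((hf.differentiable one_le_inf (t, x)).hasFDerivAt).comp_hasDerivAt x h1

theorem hasDerivAt_sect1 (hf : Sm f) (t x : ℝ) :
    HasDerivAt (fun s => f s x) (fderiv ℝ (uncurry f) (t, x) (1, 0)) t := by
  have h1 : HasDerivAt (fun s : ℝ => (s, x)) ((1 : ℝ), (0 : ℝ)) t :=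
    (hasDerivAt_id t).prodMk (hasDerivAt_const t x)
  exact ((hf.differentiable one_le_inf (t, x)).hasFDerivAt).comp_hasDerivAt t h1

theorem Dx_eq (hf : Sm f) (t x : ℝ) :
    Dx f t x = fderiv ℝ (uncurry f) (t, x) (0, 1) := (hasDerivAt_sect2 hf t x).deriv

theorem Dt_eq (hf : Sm f) (t x : ℝ) :
    Dt f t x = fderiv ℝ (uncurry f) (t, x) (1, 0) := (hasDerivAt_sect1 hf t x).deriv

theorem contDiff_fderiv_apply (hf : Sm f) (v : ℝ × ℝ) :
    ContDiff ℝ ∞ (fun p => fderiv ℝ (uncurry f) p v) :=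
  ((contDiff_infty_iff_fderiv.mp hf).2).clm_apply contDiff_const

theorem smooth_Dx (hf : Sm f) : Sm (Dx f) := by
  have h : uncurry (Dx f) = fun p => fderiv ℝ (uncurry f) p (0, 1) := by
    funext p; cases p with | mk t x => exact Dx_eq hf t x
  unfold Sm; rw [h]; exact contDiff_fderiv_apply hf _

theorem smooth_Dt (hf : Sm f) : Sm (Dt f) := by
  have h : uncurry (Dt f) = fun p => fderiv ℝ (uncurry f) p (1, 0) := by
    funext p; cases p with | mk t x => exact Dt_eq hf t x
  unfold Sm; rw [h]; exact contDiff_fderiv_apply hf _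

theorem swap_Dt_Dx (hf : Sm f) (t x : ℝ) :
    Dt (Dx f) t x = Dx (Dt f) t x := by
  set F := uncurry f with hF
  have hdF : ContDiff ℝ ∞ (fderiv ℝ F) := (contDiff_infty_iff_fderiv.mp hf).2
  have hdF' : Differentiable ℝ (fderiv ℝ F) := hdF.differentiable one_le_inf
  have key : ∀ v : ℝ × ℝ, ∀ u : ℝ × ℝ, ∀ p : ℝ × ℝ,
      fderiv ℝ (fun q => fderiv ℝ F q v) p u = fderiv ℝ (fderiv ℝ F) p u v := by
    intro v u p
    have h1 : HasFDerivAt (fderiv ℝ F) (fderiv ℝ (fderiv ℝ F) p) p :=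
      (hdF' p).hasFDerivAt
    have h2 : HasFDerivAt (fun q => fderiv ℝ F q v)
        ((ContinuousLinearMap.apply ℝ ℝ v).comp (fderiv ℝ (fderiv ℝ F) p)) p :=
      (ContinuousLinearMap.apply ℝ ℝ v).hasFDerivAt.comp p h1
    rw [h2.fderiv]; rfl
  have symm : ∀ u v : ℝ × ℝ,
      fderiv ℝ (fderiv ℝ F) (t, x) u v = fderiv ℝ (fderiv ℝ F) (t, x) v u := by
    intro u v
    exact (hf.contDiffAt.isSymmSndFDerivAt (by simp; exact WithTop.coe_le_coe.mpr le_top)) u v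
  -- Dt (Dx f) t x
  have e1 : Dt (Dx f) t x = fderiv ℝ (fderiv ℝ F) (t, x) (1, 0) (0, 1) := by
    have := Dt_eq (smooth_Dx hf) t x
    rw [this]
    have huD : uncurry (Dx f) = fun p => fderiv ℝ F p (0, 1) := by
      funext p; cases p with | mk t x => exact Dx_eq hf t x
    calc fderiv ℝ (uncurry (Dx f)) (t, x) (1, 0)
        = fderiv ℝ (fun p => fderiv ℝ F p (0, 1)) (t, x) (1, 0) := by rw [huD]
      _ = _ := key _ _ _
  have e2 : Dx (Dt f) t x = fderiv ℝ (fderiv ℝ F) (t, x) (0, 1) (1, 0) := by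
    have := Dx_eq (smooth_Dt hf) t x
    rw [this]
    have huD : uncurry (Dt f) = fun p => fderiv ℝ F p (1, 0) := by
      funext p; cases p with | mk t x => exact Dt_eq hf t x
    calc fderiv ℝ (uncurry (Dt f)) (t, x) (0, 1)
        = fderiv ℝ (fun p => fderiv ℝ F p (1, 0)) (t, x) (0, 1) := by rw [huD]
      _ = _ := key _ _ _
  rw [e1, e2, symm]


/-! ### Integral toolkit -/

theorem ii {a b : ℝ} (g : ℝ → ℝ) (hg : Continuous g) :
    IntervalIntegrable g MeasureTheory.volume a b :=
  hg.intervalIntegrable a b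

/-- Cauchy–Schwarz for interval integrals of continuous functions. -/
theorem CS {a b : ℝ} (hab : a ≤ b) {g h : ℝ → ℝ} (hg : Continuous g) (hh : Continuous h) :
    (∫ x in a..b, g x * h x) ^ 2 ≤
      (∫ x in a..b, g x ^ 2) * (∫ x in a..b, h x ^ 2) := by
  set A := ∫ x in a..b, g x ^ 2 with hA
  set B := ∫ x in a..b, h x ^ 2 with hB
  set C := ∫ x in a..b, g x * h x with hC
  have expand : ∀ lam : ℝ, 0 ≤ lam ^ 2 * A + 2 * lam * C + B := by
    intro lam
    have h0 : (0:ℝ) ≤ ∫ x in a..b, (lam * g x + h x) ^ 2 :=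
      intervalIntegral.integral_nonneg hab (fun x _ => sq_nonneg _)
    have he : (∫ x in a..b, (lam * g x + h x) ^ 2)
        = lam ^ 2 * A + 2 * lam * C + B := by
      have : ∀ x : ℝ, (lam * g x + h x) ^ 2
          = lam ^ 2 * g x ^ 2 + 2 * lam * (g x * h x) + h x ^ 2 := by intro x; ring
      rw [intervalIntegral.integral_congr (fun x _ => this x)]
      rw [intervalIntegral.integral_add, intervalIntegral.integral_add]
      · rw [intervalIntegral.integral_const_mul, intervalIntegral.integral_const_mul]
      · exact (ii _ (continuous_const.mul (hg.pow 2)))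
      · exact (ii _ (continuous_const.mul (hg.mul hh)))
      · exact ((ii _ (continuous_const.mul (hg.pow 2)))).add ((ii _ (continuous_const.mul (hg.mul hh))))
      · exact (ii _ (hh.pow 2))
    linarith [h0, he.ge, he.le]
  have hAnn : (0:ℝ) ≤ A :=
    intervalIntegral.integral_nonneg hab (fun x _ => sq_nonneg _)
  have hBnn : (0:ℝ) ≤ B :=
    intervalIntegral.integral_nonneg hab (fun x _ => sq_nonneg _)
  rcases eq_or_lt_of_le hAnn with hA0 | hA0
  · have hC0 : C = 0 := by
      by_contra hne
      have h1 := expand (-(B + 1) / (2 * C))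
      rw [← hA0] at h1
      have h2 : 2 * (-(B + 1) / (2 * C)) * C = -(B + 1) := by field_simp
      rw [h2] at h1
      linarith
    rw [hC0, ← hA0]; norm_num
  · have h1 := expand (-C / A)
    have he2 : (-C / A) ^ 2 * A + 2 * (-C / A) * C + B = -(C ^ 2) / A + B := by
      field_simp; ring
    rw [he2] at h1
    have hne : -(C ^ 2) / A = -(C ^ 2 / A) := by ring
    have hC2 : C ^ 2 / A ≤ B := by linarith [hne ▸ h1]
    calc C ^ 2 = C ^ 2 / A * A := by field_simp
    _ ≤ B * A := mul_le_mul_of_nonneg_right hC2 hA0.le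
    _ = A * B := mul_comm _ _

theorem abs_integral_mul_le {a b : ℝ} (hab : a ≤ b) {g h : ℝ → ℝ}
    (hg : Continuous g) (hh : Continuous h) :
    |∫ x in a..b, g x * h x| ≤
      Real.sqrt (∫ x in a..b, g x ^ 2) * Real.sqrt (∫ x in a..b, h x ^ 2) := by
  have h1 := CS hab hg hh
  have hA : (0:ℝ) ≤ ∫ x in a..b, g x ^ 2 :=
    intervalIntegral.integral_nonneg hab (fun x _ => sq_nonneg _)
  have hB : (0:ℝ) ≤ ∫ x in a..b, h x ^ 2 :=
    intervalIntegral.integral_nonneg hab (fun x _ => sq_nonneg _)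
  have := Real.sqrt_le_sqrt h1
  rw [Real.sqrt_sq_eq_abs, Real.sqrt_mul hA] at this
  exact this


theorem cont_sect2 (hf : Sm f) (t : ℝ) : Continuous (f t) := by
  have : f t = fun x => uncurry f (t, x) := rfl
  rw [this]; exact hf.continuous.comp (by fun_prop)

theorem cont_sect1 (hf : Sm f) (x : ℝ) : Continuous (fun s => f s x) := by
  have : (fun s => f s x) = fun s => uncurry f (s, x) := rfl
  rw [this]; exact hf.continuous.comp (by fun_prop)

/-- Differentiation under the integral sign. -/
theorem hasDerivAt_int (hf : Sm f) (t₀ : ℝ) :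
    HasDerivAt (fun t => ∫ x in (0:ℝ)..1, f t x)
      (∫ x in (0:ℝ)..1, Dt f t₀ x) t₀ := by
  have hDt := smooth_Dt hf
  obtain ⟨M, hM⟩ := (isCompact_Icc.prod isCompact_Icc).exists_bound_of_continuousOn
      (s := Set.Icc (t₀ - 1) (t₀ + 1) ×ˢ Set.Icc (0:ℝ) 1) hDt.continuous.continuousOn
  have hmem : ∀ x ∈ Set.uIoc (0:ℝ) 1, ∀ t ∈ Metric.ball t₀ 1,
      (t, x) ∈ Set.Icc (t₀ - 1) (t₀ + 1) ×ˢ Set.Icc (0:ℝ) 1 := by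
    intro x hx t ht
    rw [Set.uIoc_of_le (by norm_num : (0:ℝ) ≤ 1)] at hx
    rw [Metric.mem_ball, Real.dist_eq, abs_lt] at ht
    exact ⟨⟨by linarith [ht.1], by linarith [ht.2]⟩, ⟨hx.1.le, hx.2⟩⟩
  have key := intervalIntegral.hasDerivAt_integral_of_dominated_loc_of_deriv_le
      (F := fun t x => f t x) (F' := fun t x => Dt f t x) (x₀ := t₀)
      (bound := fun _ => M) (a := 0) (b := 1) (μ := MeasureTheory.volume)
      (Metric.ball_mem_nhds t₀ one_pos)
      (Filter.Eventually.of_forall fun t => (cont_sect2 hf t).aestronglyMeasurable)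
      ((cont_sect2 hf t₀).intervalIntegrable 0 1)
      ((cont_sect2 hDt t₀).aestronglyMeasurable)
      (Filter.Eventually.of_forall (fun x hx t ht => hM (t, x) (hmem x hx t ht)))
      intervalIntegrable_const
      (Filter.Eventually.of_forall (fun x _ t _ => by
        have h := hasDerivAt_sect1 hf t x
        rwa [← Dt_eq hf t x] at h))
  exact key.2


theorem smooth_sect2 (hf : Sm f) (t : ℝ) : ContDiff ℝ ∞ (f t) :=
  hf.comp (contDiff_const.prodMk contDiff_id)

theorem smooth_sect1 (hf : Sm f) (x : ℝ) : ContDiff ℝ ∞ (fun s => f s x) :=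
  hf.comp (contDiff_id.prodMk contDiff_const)

theorem cderiv {φ : ℝ → ℝ} (hφ : ContDiff ℝ ∞ φ) : ContDiff ℝ ∞ (deriv φ) :=
  (contDiff_infty_iff_deriv.mp hφ).2

theorem hda {φ : ℝ → ℝ} (hφ : ContDiff ℝ ∞ φ) (x : ℝ) : HasDerivAt φ (deriv φ x) x :=
  ((hφ.differentiable one_le_inf) x).hasDerivAt

/-- Integration by parts on `[0,1]`. -/
theorem ibp {φ ψ : ℝ → ℝ} (hφ : ContDiff ℝ ∞ φ) (hψ : ContDiff ℝ ∞ ψ) :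
    ∫ x in (0:ℝ)..1, φ x * deriv ψ x
      = φ 1 * ψ 1 - φ 0 * ψ 0 - ∫ x in (0:ℝ)..1, deriv φ x * ψ x := by
  exact intervalIntegral.integral_mul_deriv_eq_deriv_mul
    (fun x _ => hda hφ x) (fun x _ => hda hψ x)
    (ii _ (cderiv hφ).continuous) (ii _ (cderiv hψ).continuous)

/-- FTC for smooth functions. -/
theorem ftc {φ : ℝ → ℝ} (hφ : ContDiff ℝ ∞ φ) (a b : ℝ) :
    ∫ x in a..b, deriv φ x = φ b - φ a :=
  intervalIntegral.integral_deriv_eq_sub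
    (fun x _ => (hφ.differentiable one_le_inf) x) (ii _ (cderiv hφ).continuous)

/-- monotonicity of integrals of nonneg functions in the upper limit, within [0,1] -/
theorem int_mono_upper {g : ℝ → ℝ} (hg : Continuous g) (hgn : ∀ y, 0 ≤ g y)
    {x : ℝ} (hx0 : 0 ≤ x) (hx1 : x ≤ 1) :
    ∫ y in (0:ℝ)..x, g y ≤ ∫ y in (0:ℝ)..1, g y := by
  have hsplit : (∫ y in (0:ℝ)..x, g y) + ∫ y in x..1, g y = ∫ y in (0:ℝ)..1, g y :=
    intervalIntegral.integral_add_adjacent_intervals (ii _ hg) (ii _ hg)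
  have h2 : (0:ℝ) ≤ ∫ y in x..1, g y :=
    intervalIntegral.integral_nonneg hx1 (fun y _ => hgn y)
  linarith

/-- Poincaré inequality: `φ(0) = 0` implies `∫ φ² ≤ (1/2) ∫ (φ')²`. -/
theorem poincare {φ : ℝ → ℝ} (hφ : ContDiff ℝ ∞ φ) (h0 : φ 0 = 0) :
    ∫ x in (0:ℝ)..1, φ x ^ 2 ≤ (1/2) * ∫ x in (0:ℝ)..1, deriv φ x ^ 2 := by
  set E := ∫ x in (0:ℝ)..1, deriv φ x ^ 2 with hE
  have hpt : ∀ x ∈ Set.Icc (0:ℝ) 1, φ x ^ 2 ≤ x * E := by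
    intro x hx
    have hftc : φ x = ∫ y in (0:ℝ)..x, deriv φ y := by
      rw [ftc hφ 0 x, h0, sub_zero]
    have hcs : (∫ y in (0:ℝ)..x, 1 * deriv φ y) ^ 2
        ≤ (∫ y in (0:ℝ)..x, (1:ℝ) ^ 2) * ∫ y in (0:ℝ)..x, deriv φ y ^ 2 :=
      CS hx.1 continuous_const (cderiv hφ).continuous
    simp only [one_mul, one_pow] at hcs
    rw [intervalIntegral.integral_const, smul_eq_mul, mul_one, sub_zero] at hcs
    have hmono : ∫ y in (0:ℝ)..x, deriv φ y ^ 2 ≤ E :=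
      int_mono_upper ((cderiv hφ).continuous.pow 2) (fun y => sq_nonneg _) hx.1 hx.2
    calc φ x ^ 2 = (∫ y in (0:ℝ)..x, deriv φ y) ^ 2 := by rw [hftc]
    _ ≤ x * ∫ y in (0:ℝ)..x, deriv φ y ^ 2 := hcs
    _ ≤ x * E := by
        apply mul_le_mul_of_nonneg_left hmono hx.1
  have hint : ∫ x in (0:ℝ)..1, φ x ^ 2 ≤ ∫ x in (0:ℝ)..1, x * E := by
    apply intervalIntegral.integral_mono_on (by norm_num)
      (ii _ ((hφ.continuous).pow 2)) (ii _ (continuous_id.mul continuous_const)) hpt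
  have : ∫ x in (0:ℝ)..1, x * E = (1/2) * E := by
    rw [intervalIntegral.integral_mul_const]
    norm_num [integral_id]
  linarith [hint, this.le, this.ge]

/-- Agmon-type inequality: `φ(0)=0` implies
`φ(x)² ≤ 2 √(∫φ²) √(∫(φ')²)` on `[0,1]`. -/
theorem agmon {φ : ℝ → ℝ} (hφ : ContDiff ℝ ∞ φ) (h0 : φ 0 = 0)
    {x : ℝ} (hx0 : 0 ≤ x) (hx1 : x ≤ 1) :
    φ x ^ 2 ≤ 2 * Real.sqrt (∫ y in (0:ℝ)..1, φ y ^ 2)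
        * Real.sqrt (∫ y in (0:ℝ)..1, deriv φ y ^ 2) := by
  have hsq : ContDiff ℝ ∞ (fun y => φ y ^ 2) := hφ.pow 2
  have hds : ∀ y, deriv (fun z => φ z ^ 2) y = 2 * φ y * deriv φ y := by
    intro y
    have := (hda hφ y).fun_pow 2
    rw [this.deriv]; ring
  have hftc : φ x ^ 2 = ∫ y in (0:ℝ)..x, deriv (fun z => φ z ^ 2) y := by
    rw [ftc hsq 0 x]; simp [h0]
  have habs : ∀ y, deriv (fun z => φ z ^ 2) y ≤ 2 * (|φ y| * |deriv φ y|) := by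
    intro y
    rw [hds y]
    calc 2 * φ y * deriv φ y ≤ |2 * φ y * deriv φ y| := le_abs_self _
    _ = 2 * (|φ y| * |deriv φ y|) := by rw [abs_mul, abs_mul]; simp [abs_of_nonneg]; ring
  have hmono1 : ∫ y in (0:ℝ)..x, deriv (fun z => φ z ^ 2) y
      ≤ ∫ y in (0:ℝ)..x, 2 * (|φ y| * |deriv φ y|) := by
    apply intervalIntegral.integral_mono_on hx0
      (ii _ (cderiv hsq).continuous)
      (ii _ (continuous_const.mul (hφ.continuous.abs.mul (cderiv hφ).continuous.abs)))
      (fun y _ => habs y)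
  have hmono2 : ∫ y in (0:ℝ)..x, 2 * (|φ y| * |deriv φ y|)
      ≤ ∫ y in (0:ℝ)..1, 2 * (|φ y| * |deriv φ y|) := by
    apply int_mono_upper (continuous_const.mul (hφ.continuous.abs.mul (cderiv hφ).continuous.abs))
      (fun y => mul_nonneg (by norm_num) (mul_nonneg (abs_nonneg _) (abs_nonneg _))) hx0 hx1
  have hcs : ∫ y in (0:ℝ)..1, |φ y| * |deriv φ y|
      ≤ Real.sqrt (∫ y in (0:ℝ)..1, φ y ^ 2) * Real.sqrt (∫ y in (0:ℝ)..1, deriv φ y ^ 2) := by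
    have h1 := abs_integral_mul_le (by norm_num : (0:ℝ) ≤ 1)
      hφ.continuous.abs (cderiv hφ).continuous.abs
    simp only [sq_abs] at h1
    exact (le_abs_self _).trans h1
  have h2 : ∫ y in (0:ℝ)..1, 2 * (|φ y| * |deriv φ y|)
      = 2 * ∫ y in (0:ℝ)..1, |φ y| * |deriv φ y| := intervalIntegral.integral_const_mul _ _
  calc φ x ^ 2 = ∫ y in (0:ℝ)..x, deriv (fun z => φ z ^ 2) y := hftc
  _ ≤ ∫ y in (0:ℝ)..1, 2 * (|φ y| * |deriv φ y|) := le_trans hmono1 hmono2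
  _ = 2 * ∫ y in (0:ℝ)..1, |φ y| * |deriv φ y| := h2
  _ ≤ 2 * (Real.sqrt (∫ y in (0:ℝ)..1, φ y ^ 2) * Real.sqrt (∫ y in (0:ℝ)..1, deriv φ y ^ 2)) := by
        linarith [hcs]
  _ = _ := by ring


/-- Gronwall-type decay lemma. -/
theorem decay {V V' : ℝ → ℝ} {lam s : ℝ}
    (hd : ∀ t, HasDerivAt V (V' t) t)
    (hineq : ∀ t > s, V' t ≤ -lam * V t) :
    ∀ t ≥ s, V t ≤ Real.exp (-lam * (t - s)) * V s := by
  intro t ht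
  set g : ℝ → ℝ := fun u => V u * Real.exp (lam * u) with hgdef
  have hg : ∀ u, HasDerivAt g
      (V' u * Real.exp (lam * u) + V u * (Real.exp (lam * u) * lam)) u := by
    intro u
    have he : HasDerivAt (fun u : ℝ => Real.exp (lam * u)) (Real.exp (lam * u) * lam) u := by
      simpa using (((hasDerivAt_id u).const_mul lam).exp)
    exact (hd u).mul he
  have hanti : AntitoneOn g (Set.Ici s) := by
    apply antitoneOn_of_deriv_nonpos (convex_Ici s)
    · exact fun u _ => ((hg u).continuousAt).continuousWithinAt
    · intro u hu
      exact ((hg u).differentiableAt).differentiableWithinAt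
    · intro u hu
      rw [interior_Ici] at hu
      rw [(hg u).deriv]
      have h1 := hineq u hu
      have h2 : (0:ℝ) < Real.exp (lam * u) := Real.exp_pos _
      nlinarith
  have hgle : g t ≤ g s := hanti (Set.self_mem_Ici) ht ht
  have hexp : Real.exp (lam * t) > 0 := Real.exp_pos _
  have hVt : V t = g t * Real.exp (-(lam * t)) := by
    rw [hgdef]
    simp only [Real.exp_neg]
    field_simp
  rw [hVt]
  calc g t * Real.exp (-(lam * t)) ≤ g s * Real.exp (-(lam * t)) := by
        apply mul_le_mul_of_nonneg_right hgle (Real.exp_pos _).le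
  _ = Real.exp (-lam * (t - s)) * V s := by
        show V s * Real.exp (lam * s) * Real.exp (-(lam * t)) = _
        rw [mul_assoc, ← Real.exp_add,
          show lam * s + -(lam * t) = -lam * (t - s) by ring]
        ring

theorem deriv_congr_Ioi {F G : ℝ → ℝ} {c t : ℝ} (ht : c < t) (h : ∀ u > c, F u = G u) :
    deriv F t = deriv G t := by
  apply Filter.EventuallyEq.deriv_eq
  filter_upwards [isOpen_Ioi.mem_nhds (Set.mem_Ioi.mpr ht)] with u hu
  exact h u hu

/-- integrands agreeing on `Ioo 0 1` have same integral over `0..1` -/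
theorem integral_congr_Ioo {g h : ℝ → ℝ} (he : ∀ x ∈ Set.Ioo (0:ℝ) 1, g x = h x) :
    ∫ x in (0:ℝ)..1, g x = ∫ x in (0:ℝ)..1, h x := by
  apply intervalIntegral.integral_congr_ae
  have h1 : ∀ᵐ (x:ℝ), x ≠ 1 := by
    have : MeasureTheory.volume ({1} : Set ℝ) = 0 := Real.volume_singleton
    exact (MeasureTheory.measure_eq_zero_iff_ae_notMem.mp this).mono (by simp)
  filter_upwards [h1] with x hx hmem
  rw [Set.uIoc_of_le (by norm_num : (0:ℝ) ≤ 1)] at hmem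
  exact he x ⟨hmem.1, lt_of_le_of_ne hmem.2 hx⟩

theorem integral_mono_Ioo {g h : ℝ → ℝ} (hg : Continuous g) (hh : Continuous h)
    (he : ∀ x ∈ Set.Ioo (0:ℝ) 1, g x ≤ h x) :
    ∫ x in (0:ℝ)..1, g x ≤ ∫ x in (0:ℝ)..1, h x := by
  apply intervalIntegral.integral_mono_ae_restrict (by norm_num : (0:ℝ) ≤ 1) (ii _ hg) (ii _ hh)
  have h1 : ∀ᵐ (x:ℝ), x ≠ 1 ∧ x ≠ 0 := by
    have u1 : MeasureTheory.volume ({1} : Set ℝ) = 0 := Real.volume_singleton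
    have u0 : MeasureTheory.volume ({0} : Set ℝ) = 0 := Real.volume_singleton
    exact ((MeasureTheory.measure_eq_zero_iff_ae_notMem.mp u1).mono (by simp)).and
      ((MeasureTheory.measure_eq_zero_iff_ae_notMem.mp u0).mono (by simp))
  rw [Filter.EventuallyLE, MeasureTheory.ae_restrict_iff' measurableSet_Icc]
  filter_upwards [h1] with x hx hmem
  exact he x ⟨lt_of_le_of_ne hmem.1 (Ne.symm hx.2), lt_of_le_of_ne hmem.2 hx.1⟩

/-- squared Agmon inequality -/
theorem agmon_sq {φ : ℝ → ℝ} (hφ : ContDiff ℝ ∞ φ) (h0 : φ 0 = 0)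
    {x : ℝ} (hx0 : 0 ≤ x) (hx1 : x ≤ 1) :
    φ x ^ 4 ≤ 4 * (∫ y in (0:ℝ)..1, φ y ^ 2) * (∫ y in (0:ℝ)..1, deriv φ y ^ 2) := by
  have h := agmon hφ h0 hx0 hx1
  have hA : (0:ℝ) ≤ ∫ y in (0:ℝ)..1, φ y ^ 2 :=
    intervalIntegral.integral_nonneg (by norm_num) (fun y _ => sq_nonneg _)
  have hB : (0:ℝ) ≤ ∫ y in (0:ℝ)..1, deriv φ y ^ 2 :=
    intervalIntegral.integral_nonneg (by norm_num) (fun y _ => sq_nonneg _)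
  have h2 : (φ x ^ 2) ^ 2 ≤ (2 * Real.sqrt (∫ y in (0:ℝ)..1, φ y ^ 2)
      * Real.sqrt (∫ y in (0:ℝ)..1, deriv φ y ^ 2)) ^ 2 := by
    apply sq_le_sq' _ h
    nlinarith [sq_nonneg (φ x), Real.sqrt_nonneg (∫ y in (0:ℝ)..1, φ y ^ 2),
      Real.sqrt_nonneg (∫ y in (0:ℝ)..1, deriv φ y ^ 2)]
  calc φ x ^ 4 = (φ x ^ 2) ^ 2 := by ring
  _ ≤ _ := h2
  _ = 4 * Real.sqrt (∫ y in (0:ℝ)..1, φ y ^ 2) ^ 2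
        * Real.sqrt (∫ y in (0:ℝ)..1, deriv φ y ^ 2) ^ 2 := by ring
  _ = _ := by rw [Real.sq_sqrt hA, Real.sq_sqrt hB]

/-- third-order derivative swap -/
theorem swap_Dt_Dxx (hf : Sm f) (t x : ℝ) :
    Dt (Dx (Dx f)) t x = Dx (Dx (Dt f)) t x := by
  have h1 : Dt (Dx (Dx f)) t x = Dx (Dt (Dx f)) t x := swap_Dt_Dx (smooth_Dx hf) t x
  have h2 : Dt (Dx f) = Dx (Dt f) := by
    funext t' x'; exact swap_Dt_Dx hf t' x'
  rw [h1, h2]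

/-- derivative of the squared L² norm in time -/
theorem hasDerivAt_V (hf : Sm f) (t₀ : ℝ) :
    HasDerivAt (fun t => ∫ x in (0:ℝ)..1, (f t x) ^ 2)
      (∫ x in (0:ℝ)..1, 2 * f t₀ x * Dt f t₀ x) t₀ := by
  have hsq : Sm (fun t x => f t x ^ 2) := by
    have : ContDiff ℝ ∞ (fun p : ℝ × ℝ => (uncurry f p) ^ 2) := hf.pow 2
    exact this
  have h := hasDerivAt_int hsq t₀
  have he : ∀ x, Dt (fun t x => f t x ^ 2) t₀ x = 2 * f t₀ x * Dt f t₀ x := by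
    intro x
    have h2 := (hasDerivAt_sect1 hf t₀ x).fun_pow 2
    rw [← Dt_eq hf t₀ x] at h2
    have := h2.deriv
    simp only [Nat.cast_ofNat, pow_one] at this
    calc Dt (fun t x => f t x ^ 2) t₀ x = _ := this
    _ = 2 * f t₀ x * Dt f t₀ x := by ring
  rw [intervalIntegral.integral_congr (fun x _ => he x)] at h
  exact h

/-- continuity of the squared L² norm in time -/
theorem cont_V (hf : Sm f) : Continuous (fun t => ∫ x in (0:ℝ)..1, (f t x) ^ 2) :=
  continuous_iff_continuousAt.mpr (fun t => (hasDerivAt_V hf t).continuousAt)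

theorem V_nonneg (f : ℝ → ℝ → ℝ) (t : ℝ) : 0 ≤ ∫ x in (0:ℝ)..1, (f t x) ^ 2 :=
  intervalIntegral.integral_nonneg (by norm_num) (fun x _ => sq_nonneg _)

/-- a continuous nonnegative function with zero integral vanishes on `Ioo 0 1` -/
theorem zero_of_integral_zero {h : ℝ → ℝ} (hc : Continuous h) (hn : ∀ x, 0 ≤ h x)
    (hi : ∫ x in (0:ℝ)..1, h x = 0) : ∀ x ∈ Set.Ioo (0:ℝ) 1, h x = 0 := by
  intro x₀ hx₀
  by_contra hne
  have hpos : 0 < h x₀ := lt_of_le_of_ne (hn x₀) (Ne.symm hne)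
  -- find a small interval around x₀ inside (0,1) where h > h x₀ / 2
  have hcont : ContinuousAt h x₀ := hc.continuousAt
  obtain ⟨η, hη, hball⟩ := Metric.continuousAt_iff.mp hcont (h x₀ / 2) (by linarith)
  set u := max (x₀ - η/2) (x₀ - x₀/2) with hu
  set v := min (x₀ + η/2) (x₀ + (1 - x₀)/2) with hv
  have hu0 : 0 < u := lt_max_of_lt_right (by linarith [hx₀.1])
  have huu : u < x₀ := max_lt (by linarith) (by linarith [hx₀.1])
  have hvv : x₀ < v := lt_min (by linarith) (by linarith [hx₀.2])
  have hv1 : v < 1 := min_lt_of_right_lt (by linarith [hx₀.2])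
  have hhalf : ∀ y ∈ Set.Ioo u v, h x₀ / 2 < h y := by
    intro y hy
    have hdist : dist y x₀ < η := by
      rw [Real.dist_eq, abs_lt]
      constructor
      · have : x₀ - η/2 ≤ u := le_max_left _ _
        have := hy.1; linarith
      · have : v ≤ x₀ + η/2 := min_le_left _ _
        have := hy.2; linarith
    have := hball hdist
    rw [Real.dist_eq, abs_lt] at this
    linarith [this.1]
  have hsub : ∫ y in u..v, h y ≤ ∫ y in (0:ℝ)..1, h y := by
    have h1 : (∫ y in (0:ℝ)..u, h y) + ∫ y in u..v, h y = ∫ y in (0:ℝ)..v, h y :=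
      intervalIntegral.integral_add_adjacent_intervals (ii _ hc) (ii _ hc)
    have h2 : (∫ y in (0:ℝ)..v, h y) + ∫ y in v..1, h y = ∫ y in (0:ℝ)..1, h y :=
      intervalIntegral.integral_add_adjacent_intervals (ii _ hc) (ii _ hc)
    have h3 : (0:ℝ) ≤ ∫ y in (0:ℝ)..u, h y :=
      intervalIntegral.integral_nonneg hu0.le (fun y _ => hn y)
    have h4 : (0:ℝ) ≤ ∫ y in v..1, h y :=
      intervalIntegral.integral_nonneg hv1.le (fun y _ => hn y)
    linarith
  have hposint : 0 < ∫ y in u..v, h y := by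
    apply intervalIntegral.intervalIntegral_pos_of_pos_on (ii _ hc)
      (fun y hy => lt_trans (by linarith) (hhalf y hy)) (lt_trans huu hvv)
  linarith


/-- Core energy estimate: exponential decay of the squared `L²` norm for
solutions of the linear part with a dissipative extra term. -/
theorem energy_decay {v g : ℝ → ℝ → ℝ} (hv : Sm v) {nu al rr ga ep s : ℝ}
    (hnu : 0 < nu) (hep : 0 < ep) (hrr : 0 ≤ rr)
    (hga : 2 * ga ≤ 4 * nu - 2 * al - nu * rr ^ 2 / (6 * ep))
    (hgc : ∀ t, Continuous (g t))
    (hgpos : ∀ t x, 0 ≤ g t x * v t x)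
    (hpde : ∀ t > s, ∀ x ∈ Set.Ioo (0:ℝ) 1,
      Dt v t x = nu * Dx (Dx v) t x + al * v t x - g t x)
    (hbc0 : ∀ t > s, v t 0 = 0)
    (hrobin : ∀ t > s, ep * Dx v t 1 + v t 1 = -rr * ∫ x in (0:ℝ)..1, x * v t x) :
    ∀ t ≥ s, (∫ x in (0:ℝ)..1, (v t x) ^ 2)
      ≤ Real.exp (-(2 * ga) * (t - s)) * ∫ x in (0:ℝ)..1, (v s x) ^ 2 := by
  have hvt := smooth_Dt hv
  have hvx := smooth_Dx hv
  have hvxx := smooth_Dx hvx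
  apply decay (V' := fun t => ∫ x in (0:ℝ)..1, 2 * v t x * Dt v t x)
    (fun t => hasDerivAt_V hv t)
  intro t ht
  -- notation
  set Vt := ∫ x in (0:ℝ)..1, (v t x) ^ 2 with hVt
  set P := ∫ x in (0:ℝ)..1, (deriv (v t) x) ^ 2 with hP
  set I := ∫ x in (0:ℝ)..1, x * v t x with hI
  set q := v t 1 with hq
  set dd := Dx v t 1 with hdd
  -- rewrite the integrand using the PDE
  have step1 : (∫ x in (0:ℝ)..1, 2 * v t x * Dt v t x)
      = ∫ x in (0:ℝ)..1, (2 * nu * (v t x * Dx (Dx v) t x)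
          + 2 * al * (v t x) ^ 2 - 2 * (g t x * v t x)) := by
    apply integral_congr_Ioo
    intro x hx
    rw [hpde t ht x hx]; ring
  have c1 : Continuous (fun x => v t x * Dx (Dx v) t x) :=
    (cont_sect2 hv t).mul (cont_sect2 hvxx t)
  have c2 : Continuous (fun x => (v t x) ^ 2) := (cont_sect2 hv t).pow 2
  have c3 : Continuous (fun x => g t x * v t x) := (hgc t).mul (cont_sect2 hv t)
  have step2 : (∫ x in (0:ℝ)..1, (2 * nu * (v t x * Dx (Dx v) t x)
          + 2 * al * (v t x) ^ 2 - 2 * (g t x * v t x)))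
      = 2 * nu * (∫ x in (0:ℝ)..1, v t x * Dx (Dx v) t x)
          + 2 * al * Vt - 2 * ∫ x in (0:ℝ)..1, g t x * v t x := by
    rw [intervalIntegral.integral_sub (((ii _ c1).const_mul _).add ((ii _ c2).const_mul _))
      ((ii _ c3).const_mul _),
      intervalIntegral.integral_add ((ii _ c1).const_mul _) ((ii _ c2).const_mul _),
      intervalIntegral.integral_const_mul, intervalIntegral.integral_const_mul,
      intervalIntegral.integral_const_mul]
  -- integration by parts
  have hibp : (∫ x in (0:ℝ)..1, v t x * Dx (Dx v) t x) = q * dd - P := by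
    have h := ibp (φ := v t) (ψ := deriv (v t)) (smooth_sect2 hv t) (cderiv (smooth_sect2 hv t))
    have hb : v t 0 = 0 := hbc0 t ht
    have heq : (∫ x in (0:ℝ)..1, v t x * Dx (Dx v) t x)
        = ∫ x in (0:ℝ)..1, v t x * deriv (deriv (v t)) x := rfl
    have heq2 : (∫ x in (0:ℝ)..1, deriv (v t) x * deriv (v t) x)
        = ∫ x in (0:ℝ)..1, (deriv (v t) x) ^ 2 := by
      apply intervalIntegral.integral_congr; intro x _; ring
    rw [heq, h, hb, heq2]
    have hde : dd = deriv (v t) 1 := rfl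
    rw [hde]; ring
  -- Cauchy-Schwarz for I
  have hI2 : I ^ 2 ≤ (1/3) * Vt := by
    have h := CS (by norm_num : (0:ℝ) ≤ 1) continuous_id (cont_sect2 hv t)
    have h13 : (∫ x in (0:ℝ)..1, x ^ 2) = 1/3 := by
      rw [integral_pow]; norm_num
    calc I ^ 2 = (∫ x in (0:ℝ)..1, (id x : ℝ) * v t x) ^ 2 := rfl
    _ ≤ (∫ x in (0:ℝ)..1, (id x : ℝ) ^ 2) * ∫ x in (0:ℝ)..1, (v t x) ^ 2 := h
    _ = (1/3) * Vt := by rw [show (∫ x in (0:ℝ)..1, (id x : ℝ) ^ 2) = 1/3 from h13]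
  -- Poincaré
  have hpoin : Vt ≤ (1/2) * P := poincare (smooth_sect2 hv t) (hbc0 t ht)
  -- nonnegativity of the dissipative term
  have hgint : 0 ≤ ∫ x in (0:ℝ)..1, g t x * v t x :=
    intervalIntegral.integral_nonneg (by norm_num) (fun x _ => hgpos t x)
  have hVnn : 0 ≤ Vt := V_nonneg v t
  have hPnn : 0 ≤ P := intervalIntegral.integral_nonneg (by norm_num) (fun x _ => sq_nonneg _)
  -- Robin boundary condition
  have hrob := hrobin t ht
  have hddeq : dd = (-rr * I - q) / ep := by
    field_simp
    linarith [hrob]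
  -- boundary term estimate: 2 nu q dd ≤ (nu rr²/(2 ep)) I²
  have hbdry : 2 * nu * (q * dd) ≤ nu * rr ^ 2 / (2 * ep) * I ^ 2 := by
    rw [hddeq]
    have h2ep : (0:ℝ) < 2 * ep := by linarith
    have e1 : 2 * nu * (q * ((-rr * I - q) / ep))
        = (2 * nu * (-(rr * I * q) - q ^ 2)) / ep := by ring
    have e2 : nu * rr ^ 2 / (2 * ep) * I ^ 2 = (nu * rr ^ 2 * I ^ 2) / (2 * ep) := by ring
    rw [e1, e2, div_le_div_iff₀ hep h2ep]
    nlinarith [sq_nonneg (rr * I + 2 * q), mul_pos hnu hep]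
  -- assemble
  rw [step1, step2, hibp]
  set X := nu * rr ^ 2 / (6 * ep) with hX
  have h1 : 2 * nu * (q * dd) ≤ X * Vt := by
    apply le_trans hbdry
    apply le_trans (mul_le_mul_of_nonneg_left hI2 (by positivity))
    rw [show nu * rr ^ 2 / (2 * ep) * (1 / 3 * Vt) = X * Vt by rw [hX]; ring]
  have h2 : -(2 * nu * P) ≤ -(4 * nu * Vt) := by nlinarith
  have h4 : 2 * ga * Vt ≤ 4 * nu * Vt - 2 * al * Vt - X * Vt := by
    nlinarith [mul_le_mul_of_nonneg_right hga hVnn]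
  have h5 : 2 * nu * (q * dd - P) = 2 * nu * (q * dd) - 2 * nu * P := by ring
  rw [h5]
  linarith [h1, h2, h4, hgint]


theorem hasDerivAt_Dt (hf : Sm f) (t x : ℝ) :
    HasDerivAt (fun s => f s x) (Dt f t x) t := by
  have h := hasDerivAt_sect1 hf t x
  rwa [← Dt_eq hf t x] at h

theorem iteratedDeriv_two (φ : ℝ → ℝ) : iteratedDeriv 2 φ = deriv (deriv φ) := by
  rw [iteratedDeriv_succ, iteratedDeriv_one]

end PW


set_option maxHeartbeats 1600000 in
theorem penalized_wxx_bound
    (ν α δ r γ ε : ℝ) (w : ℝ → ℝ → ℝ)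
    (hν : 0 < ν) (hα : 0 < α) (hδ : 0 < δ) (hr0 : 0 < r) (hε : 0 < ε)
    -- smooth classical solution (C^∞ up to the boundary)
    (hsmooth : ContDiff ℝ (⊤ : ℕ∞) (Function.uncurry w))
    -- penalized Chafee–Infante equation w_t = ν w_xx + α w − δ w³ on (0,∞) × (0,1)
    (hpde : ∀ t > (0:ℝ), ∀ x ∈ Set.Ioo (0:ℝ) 1,
      dt1 w t x = ν * dxx w t x + α * w t x - δ * (w t x)^3)
    -- boundary conditions: w(t,0) = 0 and Robin condition ε w_x(t,1) + w(t,1) = u^ε(t)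
    (hbc0 : ∀ t ≥ (0:ℝ), w t 0 = 0)
    (hrobin : ∀ t > (0:ℝ), ε * dx w t 1 + w t 1 = -r * xInner (w t))
    -- Assumption (A1)
    (hA1a : r^2 < 3*ε)
    (hA1b : α / ν ≤ 2 * (3*ε - r^2) / (3*ε))
    (hγ0 : 0 < γ) (hγ : γ ≤ 2*ν - 2*ν*r^2/(3*ε) - α) :
    ∃ C > (0:ℝ), ∀ t ≥ (0:ℝ),
      ν * L2sq (dxx w t) ≤ C * Real.exp (-2*γ*t) * HkSq 2 (w 0) := by
  classical
  have hw : PW.Sm w := hsmooth.of_le (by simp)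
  have hwt : PW.Sm (PW.Dt w) := PW.smooth_Dt hw
  have hwx : PW.Sm (PW.Dx w) := PW.smooth_Dx hw
  have hwxx : PW.Sm (PW.Dx (PW.Dx w)) := PW.smooth_Dx hwx
  -- translate statement derivatives
  have hdxx : ∀ t x, dxx w t x = PW.Dx (PW.Dx w) t x := by
    intro t x
    show iteratedDeriv 2 (w t) x = _
    rw [PW.iteratedDeriv_two]
    rfl
  have hpde' : ∀ t > (0:ℝ), ∀ x ∈ Set.Ioo (0:ℝ) 1,
      PW.Dt w t x = ν * PW.Dx (PW.Dx w) t x + α * w t x - δ * (w t x)^3 := by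
    intro t ht x hx
    have h := hpde t ht x hx
    rwa [hdxx] at h
  -- the decay-rate hypothesis in the form used by `energy_decay`
  have hga1 : 2*γ ≤ 4*ν - 2*α - ν*r^2/(6*ε) := by
    have h6 : ν*r^2/(6*ε) ≤ 2*(2*ν*r^2/(3*ε)) := by
      rw [div_le_iff₀ (by positivity : (0:ℝ) < 6*ε)]
      have he : 2*(2*ν*r^2/(3*ε))*(6*ε) = 8*(ν*r^2) := by field_simp; ring
      rw [he]
      nlinarith [mul_nonneg hν.le (sq_nonneg r)]
    linarith [hγ, h6]
  -- first energy decay: for w itself from time 0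
  have hdecay0 : ∀ t ≥ (0:ℝ), (∫ x in (0:ℝ)..1, (w t x)^2)
      ≤ Real.exp (-(2*γ)*(t-0)) * ∫ x in (0:ℝ)..1, (w 0 x)^2 := by
    apply PW.energy_decay (g := fun t x => δ * (w t x)^3) hw hν hε hr0.le hga1
    · intro t
      exact continuous_const.mul ((PW.cont_sect2 hw t).pow 3)
    · intro t x
      rw [show δ * (w t x)^3 * w t x = δ * ((w t x)^2)^2 by ring]
      positivity
    · exact fun t ht x hx => hpde' t ht x hx
    · exact fun t ht => hbc0 t ht.le
    · exact fun t ht => hrobin t ht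
  -- time-differentiated boundary condition at x = 0
  have hbcDt : ∀ t > (0:ℝ), PW.Dt w t 0 = 0 := by
    intro t ht
    have h : deriv (fun s => w s 0) t = deriv (fun _ : ℝ => (0:ℝ)) t :=
      PW.deriv_congr_Ioi ht (fun u hu => hbc0 u hu.le)
    rw [deriv_const] at h
    exact h
  -- time-differentiated PDE
  have hpdeDt : ∀ t > (0:ℝ), ∀ x ∈ Set.Ioo (0:ℝ) 1,
      PW.Dt (PW.Dt w) t x = ν * PW.Dx (PW.Dx (PW.Dt w)) t x + α * PW.Dt w t x
        - 3 * δ * (w t x)^2 * PW.Dt w t x := by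
    intro t ht x hx
    have hd1 : HasDerivAt (fun u => PW.Dx (PW.Dx w) u x) (PW.Dt (PW.Dx (PW.Dx w)) t x) t :=
      PW.hasDerivAt_Dt hwxx t x
    have hd2 : HasDerivAt (fun u => w u x) (PW.Dt w t x) t := PW.hasDerivAt_Dt hw t x
    have hd3 : HasDerivAt (fun u => (w u x)^3) (3 * (w t x)^2 * PW.Dt w t x) t := by
      have := hd2.fun_pow 3
      norm_num at this
      exact this
    have hR : HasDerivAt (fun u => ν * PW.Dx (PW.Dx w) u x + α * w u x - δ * (w u x)^3)
        (ν * PW.Dt (PW.Dx (PW.Dx w)) t x + α * PW.Dt w t x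
          - δ * (3 * (w t x)^2 * PW.Dt w t x)) t :=
      ((hd1.const_mul ν).add (hd2.const_mul α)).sub (hd3.const_mul δ)
    have hL : PW.Dt (PW.Dt w) t x
        = deriv (fun u => ν * PW.Dx (PW.Dx w) u x + α * w u x - δ * (w u x)^3) t :=
      PW.deriv_congr_Ioi ht (fun u hu => hpde' u hu x hx)
    rw [hL, hR.deriv, PW.swap_Dt_Dxx hw t x]
    ring
  -- time derivative of the weighted integral
  have hxw : PW.Sm (fun t x => x * w t x) := by
    have : ContDiff ℝ ∞ (fun p : ℝ × ℝ => p.2 * uncurry w p) :=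
      (contDiff_snd.of_le le_top).mul hw
    exact this
  -- time-differentiated Robin boundary condition
  have hrobDt : ∀ t > (0:ℝ), ε * PW.Dx (PW.Dt w) t 1 + PW.Dt w t 1
      = -r * ∫ x in (0:ℝ)..1, x * PW.Dt w t x := by
    intro t ht
    have hFd : HasDerivAt (fun s => ε * PW.Dx w s 1 + w s 1)
        (ε * PW.Dt (PW.Dx w) t 1 + PW.Dt w t 1) t :=
      ((PW.hasDerivAt_Dt hwx t 1).const_mul ε).add (PW.hasDerivAt_Dt hw t 1)
    have hGd0 : HasDerivAt (fun s => ∫ x in (0:ℝ)..1, x * w s x)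
        (∫ x in (0:ℝ)..1, x * PW.Dt w t x) t := by
      have h := PW.hasDerivAt_int hxw t
      have he : ∀ x : ℝ, PW.Dt (fun t x => x * w t x) t x = x * PW.Dt w t x := by
        intro x
        exact ((PW.hasDerivAt_Dt hw t x).const_mul x).deriv
      rw [intervalIntegral.integral_congr (fun x _ => he x)] at h
      exact h
    have hGd : HasDerivAt (fun s => -r * ∫ x in (0:ℝ)..1, x * w s x)
        (-r * ∫ x in (0:ℝ)..1, x * PW.Dt w t x) t := hGd0.const_mul (-r)
    have hL : deriv (fun s => ε * PW.Dx w s 1 + w s 1)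
        = fun t => deriv (fun s => ε * PW.Dx w s 1 + w s 1) t := rfl
    have heq : deriv (fun s => ε * PW.Dx w s 1 + w s 1) t
        = deriv (fun s => -r * ∫ x in (0:ℝ)..1, x * w s x) t :=
      PW.deriv_congr_Ioi ht (fun u hu => hrobin u hu)
    have h2 := hFd.deriv
    rw [heq, hGd.deriv] at h2
    rw [← PW.swap_Dt_Dx hw t 1]
    exact h2.symm
  -- second energy decay: for w_t from time 1/2
  have hdecay1 : ∀ t ≥ (1/2:ℝ), (∫ x in (0:ℝ)..1, (PW.Dt w t x)^2)
      ≤ Real.exp (-(2*γ)*(t-1/2)) * ∫ x in (0:ℝ)..1, (PW.Dt w (1/2) x)^2 := by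
    apply PW.energy_decay (g := fun t x => 3 * δ * (w t x)^2 * PW.Dt w t x)
      hwt hν hε hr0.le hga1
    · intro t
      exact (continuous_const.mul ((PW.cont_sect2 hw t).pow 2)).mul (PW.cont_sect2 hwt t)
    · intro t x
      rw [show 3 * δ * (w t x)^2 * PW.Dt w t x * PW.Dt w t x
        = 3 * δ * (w t x * PW.Dt w t x)^2 by ring]
      positivity
    · exact fun t ht x hx => hpdeDt t (by linarith) x hx
    · exact fun t ht => hbcDt t (by linarith)
    · exact fun t ht => hrobDt t (by linarith)
  -- notation shortcuts
  set A0 := ∫ x in (0:ℝ)..1, (w 0 x)^2 with hA0def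
  set T0 := ∫ x in (0:ℝ)..1, (PW.Dt w (1/2) x)^2 with hT0def
  have hA0nn : 0 ≤ A0 := PW.V_nonneg w 0
  have hT0nn : 0 ≤ T0 := PW.V_nonneg (PW.Dt w) (1/2)
  -- main elliptic estimate from the PDE, valid for t > 0
  have hf1 : ∀ t > (0:ℝ), ν^2 * (∫ x in (0:ℝ)..1, (PW.Dx (PW.Dx w) t x)^2)
      ≤ 3 * ((∫ x in (0:ℝ)..1, (PW.Dt w t x)^2)
        + α^2 * (∫ x in (0:ℝ)..1, (w t x)^2)
        + 4 * δ^2 * (∫ x in (0:ℝ)..1, (w t x)^2)^2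
            * (∫ x in (0:ℝ)..1, (deriv (w t) x)^2)) := by
    intro t ht
    set a2 := ∫ x in (0:ℝ)..1, (w t x)^2 with ha2def
    set Pt := ∫ x in (0:ℝ)..1, (deriv (w t) x)^2 with hPtdef
    have ha2nn : 0 ≤ a2 := PW.V_nonneg w t
    have hPtnn : 0 ≤ Pt := intervalIntegral.integral_nonneg (by norm_num) (fun x _ => sq_nonneg _)
    have cw : Continuous (w t) := PW.cont_sect2 hw t
    have cwt : Continuous (PW.Dt w t) := PW.cont_sect2 hwt t
    have cwxx : Continuous (PW.Dx (PW.Dx w) t) := PW.cont_sect2 hwxx t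
    -- pointwise estimate
    have hpt : ∀ x ∈ Set.Ioo (0:ℝ) 1, (ν * PW.Dx (PW.Dx w) t x)^2
        ≤ 3 * ((PW.Dt w t x)^2 + (α * w t x)^2 + (δ * (w t x)^3)^2) := by
      intro x hx
      have h := hpde' t ht x hx
      have he : ν * PW.Dx (PW.Dx w) t x = PW.Dt w t x - α * w t x + δ * (w t x)^3 := by
        linarith
      rw [he]
      nlinarith [sq_nonneg (PW.Dt w t x + α * w t x),
        sq_nonneg (PW.Dt w t x - δ * (w t x)^3),
        sq_nonneg (α * w t x + δ * (w t x)^3)]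
    -- integrate it
    have hint : ∫ x in (0:ℝ)..1, (ν * PW.Dx (PW.Dx w) t x)^2
        ≤ ∫ x in (0:ℝ)..1, 3 * ((PW.Dt w t x)^2 + (α * w t x)^2 + (δ * (w t x)^3)^2) := by
      apply PW.integral_mono_Ioo ((continuous_const.mul cwxx).pow 2)
        (continuous_const.mul (((cwt.pow 2).add ((continuous_const.mul cw).pow 2)).add
          ((continuous_const.mul (cw.pow 3)).pow 2))) hpt
    have hLHS : (∫ x in (0:ℝ)..1, (ν * PW.Dx (PW.Dx w) t x)^2)
        = ν^2 * ∫ x in (0:ℝ)..1, (PW.Dx (PW.Dx w) t x)^2 := by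
      rw [← intervalIntegral.integral_const_mul]
      exact intervalIntegral.integral_congr (fun x _ => by ring)
    have hRHS : (∫ x in (0:ℝ)..1, 3 * ((PW.Dt w t x)^2 + (α * w t x)^2 + (δ * (w t x)^3)^2))
        = 3 * ((∫ x in (0:ℝ)..1, (PW.Dt w t x)^2) + α^2 * a2
            + δ^2 * ∫ x in (0:ℝ)..1, (w t x)^6) := by
      rw [intervalIntegral.integral_const_mul]
      congr 1
      rw [intervalIntegral.integral_add (((PW.ii _ (cwt.fun_pow 2))).add
        (PW.ii _ ((continuous_const.fun_mul cw).fun_pow 2))) (PW.ii _ ((continuous_const.fun_mul (cw.fun_pow 3)).fun_pow 2)),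
        intervalIntegral.integral_add (PW.ii _ (cwt.fun_pow 2))
          (PW.ii _ ((continuous_const.fun_mul cw).fun_pow 2))]
      congr 1
      · congr 1
        rw [← intervalIntegral.integral_const_mul]
        exact intervalIntegral.integral_congr (fun x _ => by ring)
      · rw [← intervalIntegral.integral_const_mul]
        exact intervalIntegral.integral_congr (fun x _ => by ring)
    -- the sixth-power bound
    have hw6 : (∫ x in (0:ℝ)..1, (w t x)^6) ≤ 4 * a2^2 * Pt := by
      have hag : ∀ x ∈ Set.Icc (0:ℝ) 1, (w t x)^6 ≤ (4 * a2 * Pt) * (w t x)^2 := by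
        intro x hx
        have h4 := PW.agmon_sq (PW.smooth_sect2 hw t) (hbc0 t ht.le) hx.1 hx.2
        have h4' : (w t x)^4 ≤ 4 * a2 * Pt := by
          calc (w t x)^4 ≤ 4 * (∫ y in (0:ℝ)..1, (w t y)^2)
              * (∫ y in (0:ℝ)..1, (deriv (w t) y)^2) := h4
          _ = 4 * a2 * Pt := by rw [← ha2def, ← hPtdef]
        calc (w t x)^6 = (w t x)^4 * (w t x)^2 := by ring
        _ ≤ (4 * a2 * Pt) * (w t x)^2 := mul_le_mul_of_nonneg_right h4' (sq_nonneg _)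
      calc (∫ x in (0:ℝ)..1, (w t x)^6) ≤ ∫ x in (0:ℝ)..1, (4 * a2 * Pt) * (w t x)^2 := by
            apply intervalIntegral.integral_mono_on (by norm_num)
              (PW.ii _ (cw.pow 6)) (PW.ii _ (continuous_const.mul (cw.pow 2))) hag
      _ = (4 * a2 * Pt) * a2 := by rw [intervalIntegral.integral_const_mul, ← ha2def]
      _ = 4 * a2^2 * Pt := by ring
    rw [hLHS] at hint
    rw [hRHS] at hint
    have hd2 : δ^2 * (∫ x in (0:ℝ)..1, (w t x)^6) ≤ δ^2 * (4 * a2^2 * Pt) :=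
      mul_le_mul_of_nonneg_left hw6 (sq_nonneg δ)
    linarith [hint, hd2]
  -- uniform bound on the gradient for t ≥ 1
  set c0 : ℝ := 4*ν^2*r^2*A0 + 6*ε^2*A0*T0 + 6*ε^2*α^2*A0^2 with hc0def
  set c1 : ℝ := 16*ν^2*r^2*A0^2 + 16*ν^2*A0 + 24*ε^2*δ^2*A0^3 with hc1def
  set PM : ℝ := 1 + (c0 + c1)/(ν*ε)^2 with hPMdef
  have hc0nn : 0 ≤ c0 := by
    have h1 : 0 ≤ 4*ν^2*r^2*A0 := by positivity
    have h2 : 0 ≤ 6*ε^2*A0*T0 := by positivity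
    have h3 : 0 ≤ 6*ε^2*α^2*A0^2 := by positivity
    linarith
  have hc1nn : 0 ≤ c1 := by
    have h1 : 0 ≤ 16*ν^2*r^2*A0^2 := by positivity
    have h2 : 0 ≤ 16*ν^2*A0 := by positivity
    have h3 : 0 ≤ 24*ε^2*δ^2*A0^3 := by positivity
    linarith
  have hPMnn : 1 ≤ PM := by
    rw [hPMdef]
    have : 0 ≤ (c0 + c1)/(ν*ε)^2 := by positivity
    linarith
  have hPM : ∀ t ≥ (1:ℝ), (∫ x in (0:ℝ)..1, (deriv (w t) x)^2) ≤ PM := by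
    intro t ht
    have ht0 : (0:ℝ) < t := by linarith
    set a2 := ∫ x in (0:ℝ)..1, (w t x)^2 with ha2def
    set Pt := ∫ x in (0:ℝ)..1, (deriv (w t) x)^2 with hPtdef
    set T2 := ∫ x in (0:ℝ)..1, (PW.Dt w t x)^2 with hT2def
    set D2 := ∫ x in (0:ℝ)..1, (PW.Dx (PW.Dx w) t x)^2 with hD2def
    set q := w t 1 with hqdef
    set dd := deriv (w t) 1 with hdddef
    set I := ∫ x in (0:ℝ)..1, x * w t x with hIdef
    set J := ∫ x in (0:ℝ)..1, w t x * PW.Dx (PW.Dx w) t x with hJdef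
    have ha2nn : 0 ≤ a2 := PW.V_nonneg w t
    have hPtnn : 0 ≤ Pt := intervalIntegral.integral_nonneg (by norm_num) (fun x _ => sq_nonneg _)
    have hT2nn : 0 ≤ T2 := PW.V_nonneg (PW.Dt w) t
    have hD2nn : 0 ≤ D2 := PW.V_nonneg (PW.Dx (PW.Dx w)) t
    have cw : Continuous (w t) := PW.cont_sect2 hw t
    have cwxx : Continuous (PW.Dx (PW.Dx w) t) := PW.cont_sect2 hwxx t
    -- decayed norms are bounded by initial values
    have ha2A : a2 ≤ A0 := by
      have h := hdecay0 t ht0.le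
      rw [← ha2def] at h
      have he : Real.exp (-(2*γ)*(t-0)) ≤ 1 := by
        rw [Real.exp_le_one_iff, neg_mul]
        exact neg_nonpos.mpr (mul_nonneg (by linarith only [hγ0]) (by linarith only [ht0]))
      calc a2 ≤ Real.exp (-(2*γ)*(t-0)) * A0 := h
      _ ≤ 1 * A0 := mul_le_mul_of_nonneg_right he hA0nn
      _ = A0 := one_mul _
    have hT2T : T2 ≤ T0 := by
      have h := hdecay1 t (by linarith)
      rw [← hT2def] at h
      have he : Real.exp (-(2*γ)*(t-1/2)) ≤ 1 := by
        rw [Real.exp_le_one_iff, neg_mul]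
        exact neg_nonpos.mpr (mul_nonneg (by linarith only [hγ0]) (by linarith only [ht]))
      calc T2 ≤ Real.exp (-(2*γ)*(t-1/2)) * T0 := h
      _ ≤ 1 * T0 := mul_le_mul_of_nonneg_right he hT0nn
      _ = T0 := one_mul _
    -- integration by parts identity
    have hib : Pt = q * dd - J := by
      have h := PW.ibp (φ := w t) (ψ := deriv (w t)) (PW.smooth_sect2 hw t)
        (PW.cderiv (PW.smooth_sect2 hw t))
      have hb : w t 0 = 0 := hbc0 t ht0.le
      have heq2 : (∫ x in (0:ℝ)..1, deriv (w t) x * deriv (w t) x) = Pt := by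
        rw [hPtdef]
        exact intervalIntegral.integral_congr (fun x _ => by ring)
      rw [hb, heq2] at h
      have hJ' : J = ∫ x in (0:ℝ)..1, w t x * deriv (deriv (w t)) x := rfl
      rw [hJ'] 
      rw [h]
      ring
    -- Cauchy–Schwarz for J
    have hJ2 : J^2 ≤ a2 * D2 := by
      rw [hJdef, ha2def, hD2def]
      exact PW.CS (by norm_num) cw cwxx
    -- Agmon at x = 1
    have hq4 : q^4 ≤ 4 * a2 * Pt := by
      have h := PW.agmon_sq (PW.smooth_sect2 hw t) (hbc0 t ht0.le)
        (by norm_num : (0:ℝ) ≤ 1) (le_refl 1)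
      rw [hqdef, ha2def, hPtdef]
      calc (w t 1)^4 ≤ 4 * (∫ y in (0:ℝ)..1, (w t y)^2)
          * (∫ y in (0:ℝ)..1, (deriv (w t) y)^2) := h
      _ = _ := by ring
    -- weighted Cauchy–Schwarz for I
    have hI2 : I^2 ≤ a2 := by
      have h := PW.CS (by norm_num : (0:ℝ) ≤ 1) continuous_id cw
      have h13 : (∫ x in (0:ℝ)..1, x ^ 2) = 1/3 := by rw [integral_pow]; norm_num
      have : I^2 ≤ (1/3) * a2 := by
        calc I ^ 2 = (∫ x in (0:ℝ)..1, (id x : ℝ) * w t x) ^ 2 := rfl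
        _ ≤ (∫ x in (0:ℝ)..1, (id x : ℝ) ^ 2) * ∫ x in (0:ℝ)..1, (w t x) ^ 2 := h
        _ = (1/3) * a2 := by
            rw [show (∫ x in (0:ℝ)..1, (id x : ℝ) ^ 2) = 1/3 from h13, ha2def]
      linarith
    -- Robin condition
    have hrob : ε * dd + q = -r * I := hrobin t ht0
    -- boundary slope bound
    have hdd2 : (ε*dd)^2 ≤ 2*r^2*a2 + 2*q^2 := by
      have hsq : (ε*dd)^2 = (r*I + q)^2 := by
        rw [show ε*dd = -(r*I) - q by linarith]
        ring
      rw [hsq]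
      nlinarith only [sq_nonneg (r*I - q), hI2, sq_nonneg r]
    have hq2 : q^2 ≤ 1 + 4*a2*Pt := by nlinarith only [hq4, sq_nonneg (q^2 - 1)]
    -- the quadratic inequality for Pt
    have hPsq : Pt^2 ≤ 2*q^2*dd^2 + 2*(a2*D2) := by
      rw [hib]
      nlinarith only [sq_nonneg (q*dd + J), hJ2]
    have hf1t := hf1 t ht0
    rw [← hT2def, ← ha2def, ← hPtdef, ← hD2def] at hf1t
    have hu1 : q^2*(ε^2*dd^2) ≤ q^2*(2*r^2*a2 + 2*q^2) := by
      apply mul_le_mul_of_nonneg_left _ (sq_nonneg q)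
      calc ε^2*dd^2 = (ε*dd)^2 := by ring
      _ ≤ _ := hdd2
    have hu2 : a2*(ν^2*D2) ≤ a2*(3*(T2 + α^2*a2 + 4*δ^2*a2^2*Pt)) :=
      mul_le_mul_of_nonneg_left hf1t ha2nn
    -- combine into (νε)² Pt² ≤ c0 + c1 Pt
    have hq2A : q^2 ≤ 1 + 4*A0*Pt := by
      linarith only [hq2, mul_le_mul_of_nonneg_right ha2A hPtnn]
    have hq4A : q^4 ≤ 4*A0*Pt := by
      linarith only [hq4, mul_le_mul_of_nonneg_right ha2A hPtnn]
    have hkey : (ν*ε)^2 * Pt^2 ≤ c0 + c1 * Pt := by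
      have hs1 : (ν*ε)^2 * Pt^2 ≤ (ν*ε)^2 * (2*q^2*dd^2 + 2*(a2*D2)) :=
        mul_le_mul_of_nonneg_left hPsq (by positivity)
      have hexp : (ν*ε)^2 * (2*q^2*dd^2 + 2*(a2*D2))
          = 2*ν^2*(q^2*(ε^2*dd^2)) + 2*ε^2*(a2*(ν^2*D2)) := by ring
      rw [hexp] at hs1
      have hs2 : 2*ν^2*(q^2*(ε^2*dd^2)) ≤ 2*ν^2*(q^2*(2*r^2*a2 + 2*q^2)) := by
        apply mul_le_mul_of_nonneg_left hu1 (by positivity)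
      have hs3 : 2*ε^2*(a2*(ν^2*D2)) ≤ 2*ε^2*(a2*(3*(T2 + α^2*a2 + 4*δ^2*a2^2*Pt))) := by
        apply mul_le_mul_of_nonneg_left hu2 (by positivity)
      -- bound the right-hand sides by constants
      have hb1 : 2*ν^2*(q^2*(2*r^2*a2 + 2*q^2))
          ≤ 4*ν^2*r^2*A0 + (16*ν^2*r^2*A0^2 + 16*ν^2*A0)*Pt := by
        have e1 : q^2*(2*r^2*a2) = 2*r^2*(a2*q^2) := by ring
        have e2 : a2*q^2 ≤ A0*(1 + 4*A0*Pt) := by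
          calc a2*q^2 ≤ A0*q^2 := mul_le_mul_of_nonneg_right ha2A (sq_nonneg q)
          _ ≤ A0*(1 + 4*A0*Pt) := mul_le_mul_of_nonneg_left hq2A hA0nn
        have e3 : q^2*q^2 = q^4 := by ring
        nlinarith only [sq_nonneg ν, sq_nonneg (ν*r), hq4A, e2, hA0nn, hPtnn]
      have hb2 : 2*ε^2*(a2*(3*(T2 + α^2*a2 + 4*δ^2*a2^2*Pt)))
          ≤ 6*ε^2*A0*T0 + 6*ε^2*α^2*A0^2 + 24*ε^2*δ^2*A0^3*Pt := by
        have e1 : a2*T2 ≤ A0*T0 := mul_le_mul ha2A hT2T hT2nn hA0nn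
        have e2 : a2*a2 ≤ A0*A0 := mul_le_mul ha2A ha2A ha2nn hA0nn
        have e3 : a2^3 ≤ A0^3 := pow_le_pow_left₀ ha2nn ha2A 3
        have e4 : a2^3*Pt ≤ A0^3*Pt := mul_le_mul_of_nonneg_right e3 hPtnn
        nlinarith only [sq_nonneg ε, sq_nonneg (ε*α), sq_nonneg (ε*δ), e1, e2, e4]
      calc (ν*ε)^2 * Pt^2 ≤ 2*ν^2*(q^2*(ε^2*dd^2)) + 2*ε^2*(a2*(ν^2*D2)) := hs1
      _ ≤ 2*ν^2*(q^2*(2*r^2*a2 + 2*q^2)) + 2*ε^2*(a2*(3*(T2 + α^2*a2 + 4*δ^2*a2^2*Pt))) := by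
          linarith only [hs2, hs3]
      _ ≤ c0 + c1 * Pt := by rw [hc0def, hc1def]; linarith only [hb1, hb2]
    -- conclude Pt ≤ PM
    have hνε : (0:ℝ) < (ν*ε)^2 := by positivity
    by_cases hPt1 : Pt ≤ 1
    · linarith only [hPMnn, hPtnn, hPt1]
    · push_neg at hPt1
      have h1 : c0 ≤ c0 * Pt := by nlinarith only [hc0nn, hPt1]
      have h2 : (ν*ε)^2 * Pt^2 ≤ (c0 + c1) * Pt := by nlinarith only [hkey, h1]
      have h3 : (ν*ε)^2 * Pt ≤ c0 + c1 := by
        have hPt0 : 0 < Pt := by linarith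
        have := (mul_le_mul_iff_of_pos_right hPt0).mp (by nlinarith only [h2] : ((ν*ε)^2 * Pt) * Pt ≤ (c0 + c1) * Pt)
        exact this
      rw [hPMdef]
      have h4 : Pt ≤ (c0 + c1)/(ν*ε)^2 := by
        rw [le_div_iff₀ hνε]
        linarith only [h3]
      linarith only [h4]
  -- bound on [0,1] by compactness
  obtain ⟨K0, hK0⟩ := (isCompact_Icc (a := (0:ℝ)) (b := 1)).exists_bound_of_continuousOn
    (PW.cont_V hwxx).continuousOn
  have hK0nn : 0 ≤ K0 := by
    have := hK0 0 (by norm_num : (0:ℝ) ∈ Set.Icc 0 1)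
    exact le_trans (norm_nonneg _) this
  set K : ℝ := ν*K0*Real.exp (2*γ)
      + 3*(T0*Real.exp γ + α^2*A0 + 4*δ^2*A0^2*PM)/ν with hKdef
  have hPM0 : 0 ≤ PM := by linarith only [hPMnn]
  have hKnn : 0 ≤ K := by
    have h1 : 0 ≤ ν*K0*Real.exp (2*γ) := by positivity
    have h2 : 0 ≤ T0*Real.exp γ := by positivity
    have h3 : 0 ≤ α^2*A0 := by positivity
    have h4 : 0 ≤ 4*δ^2*A0^2*PM := by positivity
    have h5 : 0 ≤ 3*(T0*Real.exp γ + α^2*A0 + 4*δ^2*A0^2*PM)/ν := by positivity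
    rw [hKdef]
    linarith only [h1, h5]
  -- the main uniform decay bound for the second spatial derivative
  have hmain : ∀ t ≥ (0:ℝ), ν * (∫ x in (0:ℝ)..1, (PW.Dx (PW.Dx w) t x)^2)
      ≤ K * Real.exp (-(2*γ)*t) := by
    intro t ht
    set D2 := ∫ x in (0:ℝ)..1, (PW.Dx (PW.Dx w) t x)^2 with hD2def
    have hD2nn : 0 ≤ D2 := PW.V_nonneg (PW.Dx (PW.Dx w)) t
    have hE : (0:ℝ) < Real.exp (-(2*γ)*t) := Real.exp_pos _
    by_cases ht1 : t ≤ 1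
    · -- compactness bound
      have h1 := hK0 t ⟨ht, ht1⟩
      rw [Real.norm_eq_abs] at h1
      have h2 : D2 ≤ K0 := le_trans (le_abs_self _) h1
      have he1 : 1 ≤ Real.exp (2*γ) * Real.exp (-(2*γ)*t) := by
        rw [← Real.exp_add]
        apply Real.one_le_exp
        nlinarith only [hγ0, ht1]
      have hstep : ν * D2 ≤ ν*K0 := by
        apply mul_le_mul_of_nonneg_left h2 hν.le
      calc ν * D2 ≤ ν*K0 := hstep
      _ ≤ ν*K0 * (Real.exp (2*γ) * Real.exp (-(2*γ)*t)) := le_mul_of_one_le_right (by positivity) he1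
      _ = (ν*K0*Real.exp (2*γ)) * Real.exp (-(2*γ)*t) := by ring
      _ ≤ K * Real.exp (-(2*γ)*t) := by
          apply mul_le_mul_of_nonneg_right _ hE.le
          rw [hKdef]
          have : 0 ≤ 3*(T0*Real.exp γ + α^2*A0 + 4*δ^2*A0^2*PM)/ν := by
            have h2' : 0 ≤ T0*Real.exp γ := by positivity
            have h3' : 0 ≤ α^2*A0 := by positivity
            have h4' : 0 ≤ 4*δ^2*A0^2*PM := by positivity
            positivity
          linarith only [this]
    · push_neg at ht1
      have ht0 : (0:ℝ) < t := by linarith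
      set a2 := ∫ x in (0:ℝ)..1, (w t x)^2 with ha2def
      set Pt := ∫ x in (0:ℝ)..1, (deriv (w t) x)^2 with hPtdef
      set T2 := ∫ x in (0:ℝ)..1, (PW.Dt w t x)^2 with hT2def
      set E := Real.exp (-(2*γ)*t) with hEdef
      have ha2nn : 0 ≤ a2 := PW.V_nonneg w t
      have hPtnn : 0 ≤ Pt :=
        intervalIntegral.integral_nonneg (by norm_num) (fun x _ => sq_nonneg _)
      have hT2nn : 0 ≤ T2 := PW.V_nonneg (PW.Dt w) t
      -- decay bounds
      have ha2E : a2 ≤ E * A0 := by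
        have h := hdecay0 t ht
        rw [← ha2def, sub_zero, ← hEdef] at h
        exact h
      have ha2A : a2 ≤ A0 := by
        have hle : E ≤ 1 := by
          rw [hEdef, Real.exp_le_one_iff, neg_mul]
          exact neg_nonpos.mpr (mul_nonneg (by linarith only [hγ0]) ht)
        calc a2 ≤ E * A0 := ha2E
        _ ≤ 1 * A0 := mul_le_mul_of_nonneg_right hle hA0nn
        _ = A0 := one_mul _
      have hT2E : T2 ≤ Real.exp γ * E * T0 := by
        have h := hdecay1 t (by linarith)
        rw [← hT2def] at h
        have he : Real.exp (-(2*γ)*(t-1/2)) = Real.exp γ * E := by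
          rw [hEdef, ← Real.exp_add]
          congr 1
          ring
        rw [he] at h
        exact h
      have hPMt : Pt ≤ PM := by
        have := hPM t (by linarith)
        rw [← hPtdef] at this
        exact this
      have hf1t := hf1 t ht0
      rw [← hT2def, ← ha2def, ← hPtdef, ← hD2def] at hf1t
      -- product bounds
      have ha2sq : a2^2 ≤ A0 * (E*A0) := by
        calc a2^2 = a2 * a2 := sq a2 ▸ by ring
        _ ≤ A0 * (E*A0) := mul_le_mul ha2A ha2E ha2nn hA0nn
      have hprod : a2^2 * Pt ≤ (A0*(E*A0)) * PM := by
        apply mul_le_mul ha2sq hPMt hPtnn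
        positivity
      have hstep2 : ν^2 * D2 ≤ 3*(T0*Real.exp γ + α^2*A0 + 4*δ^2*A0^2*PM) * E := by
        have hb1 : T2 ≤ (T0*Real.exp γ)*E := by
          calc T2 ≤ Real.exp γ * E * T0 := hT2E
          _ = (T0*Real.exp γ)*E := by ring
        have hb2 : α^2*a2 ≤ (α^2*A0)*E := by
          calc α^2*a2 ≤ α^2*(E*A0) := mul_le_mul_of_nonneg_left ha2E (sq_nonneg α)
          _ = (α^2*A0)*E := by ring
        have hb3 : 4*δ^2*(a2^2*Pt) ≤ (4*δ^2*A0^2*PM)*E := by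
          calc 4*δ^2*(a2^2*Pt) ≤ 4*δ^2*((A0*(E*A0))*PM) := by
                apply mul_le_mul_of_nonneg_left hprod (by positivity)
          _ = (4*δ^2*A0^2*PM)*E := by ring
        have := hf1t
        nlinarith only [this, hb1, hb2, hb3]
      -- divide by ν
      have hfinal : ν * D2 ≤ (3*(T0*Real.exp γ + α^2*A0 + 4*δ^2*A0^2*PM)/ν) * E := by
        rw [show ν * D2 = (ν^2 * D2)/ν by field_simp]
        rw [div_mul_eq_mul_div]
        exact (div_le_div_iff_of_pos_right hν).mpr hstep2
      calc ν * D2 ≤ (3*(T0*Real.exp γ + α^2*A0 + 4*δ^2*A0^2*PM)/ν) * E := hfinal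
      _ ≤ K * E := by
          apply mul_le_mul_of_nonneg_right _ hE.le
          rw [hKdef]
          have : 0 ≤ ν*K0*Real.exp (2*γ) := by positivity
          linarith only [this]
  -- decompose the H² norm
  have hMdec : HkSq 2 (w 0) = A0 + ((∫ x in (0:ℝ)..1, (iteratedDeriv 1 (w 0) x)^2)
      + (∫ x in (0:ℝ)..1, (iteratedDeriv 2 (w 0) x)^2)) := by
    show (∑ i ∈ Finset.range 3, ∫ x in (0:ℝ)..1, (iteratedDeriv i (w 0) x)^2) = _
    rw [Finset.sum_range_succ, Finset.sum_range_succ, Finset.sum_range_one, iteratedDeriv_zero,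
      ← hA0def]
    ring
  have hsum1nn : 0 ≤ ∫ x in (0:ℝ)..1, (iteratedDeriv 1 (w 0) x)^2 :=
    intervalIntegral.integral_nonneg (by norm_num) (fun x _ => sq_nonneg _)
  have hsum2nn : 0 ≤ ∫ x in (0:ℝ)..1, (iteratedDeriv 2 (w 0) x)^2 :=
    intervalIntegral.integral_nonneg (by norm_num) (fun x _ => sq_nonneg _)
  have hA0M : A0 ≤ HkSq 2 (w 0) := by
    rw [hMdec]
    linarith only [hsum1nn, hsum2nn]
  have hMnn : 0 ≤ HkSq 2 (w 0) := le_trans hA0nn hA0M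
  have hL2e : ∀ t, L2sq (dxx w t) = ∫ x in (0:ℝ)..1, (PW.Dx (PW.Dx w) t x)^2 := by
    intro t
    exact intervalIntegral.integral_congr (fun x _ => by rw [hdxx])
  rcases eq_or_lt_of_le hMnn with hM0 | hMpos
  · -- degenerate case: zero initial data
    refine ⟨1, one_pos, fun t ht => ?_⟩
    have hA00 : A0 = 0 := le_antisymm (by linarith only [hA0M, hM0]) hA0nn
    have hVz : (∫ x in (0:ℝ)..1, (w t x)^2) = 0 := by
      have h := hdecay0 t ht
      rw [hA00, mul_zero] at h
      exact le_antisymm h (PW.V_nonneg w t)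
    have hw0 : ∀ x ∈ Set.Ioo (0:ℝ) 1, w t x = 0 := by
      intro x hx
      have := PW.zero_of_integral_zero ((PW.cont_sect2 hw t).pow 2)
        (fun y => sq_nonneg _) hVz x hx
      exact pow_eq_zero_iff two_ne_zero |>.mp this
    have hd1 : ∀ x ∈ Set.Ioo (0:ℝ) 1, deriv (w t) x = 0 := by
      intro x hx
      have hev : w t =ᶠ[nhds x] (fun _ => (0:ℝ)) := by
        filter_upwards [isOpen_Ioo.mem_nhds hx] with y hy
        exact hw0 y hy
      rw [hev.deriv_eq, deriv_const]
    have hd2 : ∀ x ∈ Set.Ioo (0:ℝ) 1, deriv (deriv (w t)) x = 0 := by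
      intro x hx
      have hev : deriv (w t) =ᶠ[nhds x] (fun _ => (0:ℝ)) := by
        filter_upwards [isOpen_Ioo.mem_nhds hx] with y hy
        exact hd1 y hy
      rw [hev.deriv_eq, deriv_const]
    have hL2z : L2sq (dxx w t) = 0 := by
      rw [hL2e t]
      rw [PW.integral_congr_Ioo (h := fun _ => (0:ℝ)) (fun x hx => by
        have : PW.Dx (PW.Dx w) t x = 0 := hd2 x hx
        rw [this]; norm_num)]
      simp
    rw [hL2z, mul_zero, ← hM0, mul_zero]
  · -- main case
    refine ⟨K/HkSq 2 (w 0) + 1, by positivity, fun t ht => ?_⟩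
    have h := hmain t ht
    rw [hL2e t] at *
    have hexp : Real.exp (-2*γ*t) = Real.exp (-(2*γ)*t) := by norm_num
    rw [hexp]
    set E := Real.exp (-(2*γ)*t) with hEdef
    have hEpos : 0 < E := Real.exp_pos _
    set M := HkSq 2 (w 0) with hMdef
    have hfe : (K/M + 1)*E*M = K*E + E*M := by
      field_simp
    have hEM : 0 ≤ E*M := mul_nonneg hEpos.le hMnn
    calc ν * (∫ x in (0:ℝ)..1, (PW.Dx (PW.Dx w) t x)^2) ≤ K * E := h
    _ ≤ (K/M + 1)*E*M := by rw [hfe]; linarith only [hEM]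
    _ = _ := by rw [hMdef]
end
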